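/- arXiv:math/0504357 — 6 statements merged into one kernel-verified Lean document; each statement's English description precedes it below -/
import Mathlib

section
/- Bilipschitz Extension Theorem for the Urysohn space: Let B(x,r) be an open ball in the Urysohn space 𝕌, let N ≥ 4 and let K satisfy (N − √(N² − 4N))/2 ≤ K ≤ (N + √(N² − 4N))/2. Let A ⊆ B(x,r) be a finite set with x ∈ A, and let f : A → B(x,r) be a K-bilipschitz map which is N-bigood (with respect to the center x and radius r) and satisfies f(x) = x. Then there exists a map g : B(x,r) → B(x,r) such that: (1) g is a bijection and g extends f; (2) the map equal to g on B(x,r) and to the identity on 𝕌 ∖ B(x,r) is a K-bilipschitz bijection of 𝕌; (3) g is N-bigood. -/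
open Filter
open scoped Topology


open Metric Set
open scoped Classical

/-- The Urysohn space: a complete separable metric space which is universal for
separable metric spaces and finitely ultrahomogeneous. -/
def IsUrysohn (U : Type) [MetricSpace U] : Prop :=
  CompleteSpace U ∧ TopologicalSpace.SeparableSpace U ∧
  (∀ (Y : Type) [MetricSpace Y] [TopologicalSpace.SeparableSpace Y],
      ∃ f : Y → U, Isometry f) ∧
  (∀ (A : Set U) (f : U → U), A.Finite →
      (∀ u ∈ A, ∀ v ∈ A, dist (f u) (f v) = dist u v) →
      ∃ g : U ≃ᵢ U, ∀ u ∈ A, g u = f u)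

/-- `f` is `K`-bilipschitz on the set `A`. -/
def BilipschitzOn {U : Type} [MetricSpace U] (K : ℝ) (f : U → U) (A : Set U) : Prop :=
  ∀ u ∈ A, ∀ v ∈ A,
    (1 / K) * dist u v ≤ dist (f u) (f v) ∧ dist (f u) (f v) ≤ K * dist u v

/-- `f` is `N`-good on `A` with respect to the ball `B(x,r)`. -/
def NGoodOn {U : Type} [MetricSpace U] (N : ℝ) (x : U) (r : ℝ) (f : U → U) (A : Set U) : Prop :=
  ∀ y ∈ A, dist y (f y) ≤ (1 / N) * (r - dist y x)

/-- `f` is `N`-bigood on `A` with respect to the ball `B(x,r)`: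
both `f` and its inverse are `N`-good. -/
def NBigoodOn {U : Type} [MetricSpace U] (N : ℝ) (x : U) (r : ℝ) (f : U → U) (A : Set U) : Prop :=
  NGoodOn N x r f A ∧ ∀ y ∈ A, dist (f y) y ≤ (1 / N) * (r - dist (f y) x)

lemma katetov_realize {U : Type} [MetricSpace U] (hU : IsUrysohn U)
    (S : Finset U) (ρ : U → ℝ)
    (h : ∀ u ∈ S, ∀ v ∈ S, |ρ u - ρ v| ≤ dist u v ∧ dist u v ≤ ρ u + ρ v)
    (hS : S.Nonempty) :
    ∃ w : U, ∀ u ∈ S, dist w u = ρ u := by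
  have hnn : ∀ u ∈ S, 0 ≤ ρ u := by
    intro u hu
    have h2 := (h u hu u hu).2
    rw [dist_self] at h2
    linarith
  by_cases h0 : ∃ u₀ ∈ S, ρ u₀ = 0
  · obtain ⟨u₀, hu₀, hρ0⟩ := h0
    refine ⟨u₀, fun u hu => ?_⟩
    have h1 := (h u₀ hu₀ u hu).1
    have h2 := (h u₀ hu₀ u hu).2
    rw [hρ0] at h1 h2
    have hb := abs_le.1 h1
    exact le_antisymm (by linarith [hb.1, h2]) (by linarith [hb.1])
  push_neg at h0
  have hpos : ∀ u ∈ S, 0 < ρ u := fun u hu => lt_of_le_of_ne (hnn u hu) (Ne.symm (h0 u hu))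
  let Y := Option {u // u ∈ S}
  let D : Y → Y → ℝ := fun a b =>
    match a, b with
    | none, none => 0
    | none, some v => ρ v.1
    | some u, none => ρ u.1
    | some u, some v => dist u.1 v.1
  have Dcomm : ∀ a b, D a b = D b a := by
    rintro (_|u) (_|v) <;> simp [D, dist_comm]
  have Dself : ∀ a, D a a = 0 := by rintro (_|u) <;> simp [D]
  have Dtri : ∀ a b c, D a c ≤ D a b + D b c := by
    rintro (_|u) (_|v) (_|w)
    · show (0:ℝ) ≤ 0 + 0; norm_num
    · show ρ w.1 ≤ 0 + ρ w.1; norm_num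
    · show (0:ℝ) ≤ ρ v.1 + ρ v.1; linarith [hnn _ v.2]
    · show ρ w.1 ≤ ρ v.1 + dist v.1 w.1
      linarith [(abs_le.1 (h v.1 v.2 w.1 w.2).1).1]
    · show ρ u.1 ≤ ρ u.1 + 0; norm_num
    · show dist u.1 w.1 ≤ ρ u.1 + ρ w.1; exact (h u.1 u.2 w.1 w.2).2
    · show ρ u.1 ≤ dist u.1 v.1 + ρ v.1
      linarith [(abs_le.1 (h u.1 u.2 v.1 v.2).1).2]
    · exact dist_triangle u.1 v.1 w.1
  have Deq : ∀ a b : Y, D a b = 0 → a = b := by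
    rintro (_|u) (_|v)
    · intro _; rfl
    · intro hh; exact absurd hh (ne_of_gt (hpos _ v.2))
    · intro hh; exact absurd hh (ne_of_gt (hpos _ u.2))
    · intro hh
      exact congrArg some (Subtype.ext (dist_eq_zero.1 hh))
  letI : MetricSpace Y :=
    { dist := D
      dist_self := Dself
      dist_comm := Dcomm
      dist_triangle := Dtri
      eq_of_dist_eq_zero := fun {a b} => Deq a b }
  haveI : TopologicalSpace.SeparableSpace Y := by
    haveI : Countable Y := by infer_instance
    infer_instance
  obtain ⟨j, hj⟩ := hU.2.2.1 Y
  set A' : Set U := Set.range (fun u : {u // u ∈ S} => j (some u)) with hA'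
  have hA'fin : A'.Finite := Set.finite_range _
  have hjinj : Function.Injective j := hj.injective
  let F : U → U := fun v => if hv : ∃ u : {u // u ∈ S}, j (some u) = v then (Classical.choose hv).1 else v
  have hF : ∀ u : {u // u ∈ S}, F (j (some u)) = u.1 := by
    intro u
    have hv : ∃ u' : {u // u ∈ S}, j (some u') = j (some u) := ⟨u, rfl⟩
    have hcs := Classical.choose_spec hv
    simp only [F, dif_pos hv]
    exact congrArg Subtype.val (Option.some_injective _ (hjinj hcs))
  have hpres : ∀ u ∈ A', ∀ v ∈ A', dist (F u) (F v) = dist u v := by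
    rintro _ ⟨u, rfl⟩ _ ⟨v, rfl⟩
    rw [hF, hF, hj.dist_eq]
    rfl
  obtain ⟨G, hG⟩ := hU.2.2.2 A' F hA'fin hpres
  refine ⟨G (j none), fun u hu => ?_⟩
  have h1 : G (j (some ⟨u, hu⟩)) = u := by
    have := hG (j (some ⟨u, hu⟩)) ⟨⟨u, hu⟩, rfl⟩
    rw [hF] at this
    exact this
  calc dist (G (j none)) u = dist (G (j none)) (G (j (some ⟨u, hu⟩))) := by rw [h1]
    _ = dist (j none) (j (some ⟨u, hu⟩)) := (G.isometry.dist_eq _ _)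
    _ = ρ u := by rw [hj.dist_eq]; rfl

def GoodSet {U : Type} [MetricSpace U] (x : U) (r N K : ℝ) (p : Finset (U × U)) : Prop :=
  (x, x) ∈ p ∧
  (∀ e ∈ p, e.1 ∈ ball x r ∧ e.2 ∈ ball x r) ∧
  (∀ e ∈ p, ∀ e' ∈ p,
      (1 / K) * dist e.1 e'.1 ≤ dist e.2 e'.2 ∧ dist e.2 e'.2 ≤ K * dist e.1 e'.1) ∧
  (∀ e ∈ p, dist e.1 e.2 ≤ (1 / N) * (r - dist e.1 x) ∧
      dist e.1 e.2 ≤ (1 / N) * (r - dist e.2 x))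

lemma GoodSet.swap {U : Type} [MetricSpace U] {x : U} {r N K : ℝ} (hK : 0 < K)
    {p : Finset (U × U)} (hp : GoodSet x r N K p) :
    GoodSet x r N K (p.image Prod.swap) := by
  obtain ⟨hx, hball, hbil, hgood⟩ := hp
  refine ⟨Finset.mem_image.2 ⟨(x,x), hx, rfl⟩, ?_, ?_, ?_⟩
  · rintro e he
    obtain ⟨e', he', rfl⟩ := Finset.mem_image.1 he
    exact ⟨(hball e' he').2, (hball e' he').1⟩
  · rintro e he e2 he2
    obtain ⟨f, hf, rfl⟩ := Finset.mem_image.1 he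
    obtain ⟨f2, hf2, rfl⟩ := Finset.mem_image.1 he2
    obtain ⟨h1, h2⟩ := hbil f hf f2 hf2
    simp only [Prod.fst_swap, Prod.snd_swap]
    constructor
    · rw [div_mul_eq_mul_div, div_le_iff₀ hK] at h1 ⊢
      linarith
    · rw [div_mul_eq_mul_div, div_le_iff₀ hK] at h1
      linarith
  · rintro e he
    obtain ⟨f, hf, rfl⟩ := Finset.mem_image.1 he
    obtain ⟨h1, h2⟩ := hgood f hf
    simp only [Prod.fst_swap, Prod.snd_swap]
    rw [dist_comm]
    exact ⟨h2, h1⟩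

set_option maxHeartbeats 2000000 in
lemma extend_one {U : Type} [MetricSpace U] (hU : IsUrysohn U) {x : U} {r N K : ℝ}
    (hN : 4 ≤ N) (hquad : K ^ 2 + N ≤ N * K)
    {p : Finset (U × U)} (hp : GoodSet x r N K p) {z : U} (hz : z ∈ ball x r) :
    ∃ w : U, GoodSet x r N K (insert (z, w) p) := by
  have hN0 : (0:ℝ) < N := by linarith
  have hK1 : (1:ℝ) < K := by nlinarith [sq_nonneg K, sq_nonneg (K - 1)]
  have hK0 : (0:ℝ) < K := by linarith
  have hiK : (0:ℝ) < 1 / K := by positivity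
  have hiN : (0:ℝ) < 1 / N := by positivity
  have hKK : 1 / K ≤ K := by
    rw [div_le_iff₀ hK0]; nlinarith
  have hKN : N ≤ K * (N - 1) := by nlinarith [sq_nonneg (K - 1)]
  have hNK : N + K ≤ N * K := by nlinarith
  have hzx : dist z x < r := mem_ball.1 hz
  have hs0 : 0 < r - dist z x := by linarith
  by_cases hzdom : ∃ b, (z, b) ∈ p
  · obtain ⟨b, hb⟩ := hzdom
    exact ⟨b, by rwa [Finset.insert_eq_self.2 hb]⟩
  push_neg at hzdom
  obtain ⟨hx, hball, hbil, hgood⟩ := hp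
  have hne : p.Nonempty := ⟨_, hx⟩
  -- the defect bound c
  set c : ℝ := max 0 (p.sup' hne (fun e =>
      max (dist z e.2 - K * dist z e.1) ((1 / K) * dist z e.1 - dist z e.2))) with hc
  have hc0 : 0 ≤ c := le_max_left _ _
  have hcB : ∀ e ∈ p, dist z e.2 - K * dist z e.1 ≤ c := fun e he =>
    le_trans (le_trans (le_max_left _ _)
      (Finset.le_sup' (f := fun e => max (dist z e.2 - K * dist z e.1)
        ((1 / K) * dist z e.1 - dist z e.2)) he)) (le_max_right _ _)
  have hcA : ∀ e ∈ p, (1 / K) * dist z e.1 - dist z e.2 ≤ c := fun e he =>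
    le_trans (le_trans (le_max_right _ _)
      (Finset.le_sup' (f := fun e => max (dist z e.2 - K * dist z e.1)
        ((1 / K) * dist z e.1 - dist z e.2)) he)) (le_max_right _ _)
  -- basic per-pair facts
  have hgB : ∀ e ∈ p, dist z e.2 - K * dist z e.1 ≤ (1 / N) * (r - dist z x) := by
    intro e he
    have hg := (hgood e he).1
    have htri : dist z e.2 ≤ dist z e.1 + dist e.1 e.2 := dist_triangle _ _ _
    have habs : dist z x - dist z e.1 ≤ dist e.1 x := by
      linarith [dist_triangle z e.1 x]
    have hd0 : (0:ℝ) ≤ dist z e.1 := dist_nonneg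
    have hfac : dist z e.1 * (1 - K + 1 / N) ≤ 0 := by
      apply mul_nonpos_of_nonneg_of_nonpos hd0
      have : 1 / N ≤ K - 1 := by rw [div_le_iff₀ hN0]; nlinarith
      linarith
    nlinarith [mul_le_mul_of_nonneg_left habs (le_of_lt hiN)]
  have hNle : ∀ a b : ℝ, N * a ≤ b → a ≤ 1 / N * b := by
    intro a b hab; rw [div_mul_eq_mul_div, le_div_iff₀ hN0]; linarith
  have hgA : ∀ e ∈ p, (1 / K) * dist z e.1 - dist z e.2 ≤ (1 / N) * (r - dist z x) := by
    intro e he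
    have hg := (hgood e he).1
    set P := dist z e.1 with hP
    set g := dist e.1 e.2 with hg1
    set db := dist z e.2 with hdb
    have h1 : P - g ≤ db := by
      have t := dist_triangle z e.2 e.1
      rw [dist_comm e.2 e.1] at t
      simp only [← hP, ← hg1, ← hdb] at t
      linarith
    have h2 : g - P ≤ db := by
      have t := dist_triangle e.1 z e.2
      rw [dist_comm e.1 z] at t
      simp only [← hP, ← hg1, ← hdb] at t
      linarith
    have hNg : N * g ≤ (r - dist z x) + P := by
      have habs : dist z x - P ≤ dist e.1 x := by
        have t := dist_triangle z e.1 x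
        simp only [← hP] at t; linarith
      have hNg1 : N * g ≤ r - dist e.1 x := by
        rw [div_mul_eq_mul_div, le_div_iff₀ hN0, mul_comm] at hg; linarith
      linarith
    set Q := (1 / K) * P with hQdef
    have hQ : Q * K = P := by rw [hQdef]; field_simp
    have hQ0 : 0 ≤ Q := by positivity
    apply hNle
    have hd0 : (0:ℝ) ≤ P := dist_nonneg
    have hg0 : (0:ℝ) ≤ g := dist_nonneg
    have hNQ : N * Q ≤ K * (N - 1) * Q := mul_le_mul_of_nonneg_right hKN hQ0
    rcases le_total g P with hcase | hcase
    · have hNdb : N * (P - g) ≤ N * db := mul_le_mul_of_nonneg_left h1 hN0.le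
      nlinarith [hQ, hNg, hNdb, hNQ]
    · have hNPg : N * P ≤ N * g := mul_le_mul_of_nonneg_left hcase hN0.le
      have hdb0 : (0:ℝ) ≤ db := dist_nonneg
      nlinarith [hQ, hNg, hNQ, hNPg, mul_le_mul_of_nonneg_left hdb0 hN0.le]
  have hc1 : c ≤ (1 / N) * (r - dist z x) := by
    apply max_le
    · positivity
    · apply Finset.sup'_le
      intro e he
      exact max_le (hgB e he) (hgA e he)
  -- the Katetov function
  set F : U → ℝ := fun v =>
    min (dist z v + c) (p.inf' hne (fun e => K * dist z e.1 + dist e.2 v)) with hF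
  have hFle_z : ∀ v, F v ≤ dist z v + c := fun v => min_le_left _ _
  have hFle_e : ∀ e ∈ p, ∀ v, F v ≤ K * dist z e.1 + dist e.2 v := fun e he v =>
    le_trans (min_le_right _ _) (Finset.inf'_le _ he)
  have hFmin : ∀ v, F v = dist z v + c ∨
      ∃ e ∈ p, F v = K * dist z e.1 + dist e.2 v := by
    intro v
    rcases le_total (dist z v + c) (p.inf' hne (fun e => K * dist z e.1 + dist e.2 v)) with h | h
    · left; simp only [hF]; exact min_eq_left h
    · right
      obtain ⟨e, he, hee⟩ := Finset.exists_mem_eq_inf' hne (fun e => K * dist z e.1 + dist e.2 v)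
      exact ⟨e, he, by simp only [hF]; rw [min_eq_right h, hee]⟩
  -- link conditions
  have hlinkz : ∀ e ∈ p, dist z e.2 ≤ c + K * dist z e.1 := by
    intro e he; have := hcB e he; linarith
  have hlinkee : ∀ e ∈ p, ∀ e' ∈ p, dist e.2 e'.2 ≤ K * dist z e.1 + K * dist z e'.1 := by
    intro e he e' he'
    have hb := (hbil e he e' he').2
    have htri : dist e.1 e'.1 ≤ dist e.1 z + dist z e'.1 := dist_triangle _ _ _
    rw [dist_comm e.1 z] at htri
    nlinarith
  -- F is Katetov
  have hFdiff : ∀ u v : U, F u ≤ F v + dist v u := by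
    intro u v
    rcases hFmin v with h | ⟨e, he, h⟩
    · calc F u ≤ dist z u + c := hFle_z u
        _ ≤ dist z v + dist v u + c := by linarith [dist_triangle z v u]
        _ = F v + dist v u := by rw [h]; ring
    · calc F u ≤ K * dist z e.1 + dist e.2 u := hFle_e e he u
        _ ≤ K * dist z e.1 + (dist e.2 v + dist v u) := by linarith [dist_triangle e.2 v u]
        _ = F v + dist v u := by rw [h]; ring
  have hFsum : ∀ u v : U, dist u v ≤ F u + F v := by
    intro u v
    rcases hFmin u with h1 | ⟨e, he, h1⟩ <;> rcases hFmin v with h2 | ⟨e', he', h2⟩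
    · rw [h1, h2]
      have := dist_triangle u z v
      rw [dist_comm u z] at this
      linarith
    · rw [h1, h2]
      have t1 : dist u v ≤ dist u z + dist z e'.2 + dist e'.2 v := dist_triangle4 _ _ _ _
      have := hlinkz e' he'
      rw [dist_comm u z] at t1
      linarith
    · rw [h1, h2]
      have t1 : dist u v ≤ dist u e.2 + dist e.2 z + dist z v := dist_triangle4 _ _ _ _
      have := hlinkz e he
      rw [dist_comm u e.2] at t1
      rw [dist_comm e.2 z] at t1
      linarith
    · rw [h1, h2]
      have t1 : dist u v ≤ dist u e.2 + dist e.2 e'.2 + dist e'.2 v := dist_triangle4 _ _ _ _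
      have := hlinkee e he e' he'
      rw [dist_comm u e.2] at t1
      linarith
  have hFnn : ∀ v, 0 ≤ F v := by
    intro v
    have := hFsum v v
    rw [dist_self] at this
    linarith
  -- bilipschitz bounds for F at image points
  have hFub : ∀ e ∈ p, F e.2 ≤ K * dist z e.1 := by
    intro e he
    have := hFle_e e he e.2
    rwa [dist_self, add_zero] at this
  have hFlb : ∀ e ∈ p, (1 / K) * dist z e.1 ≤ F e.2 := by
    intro e he
    rcases hFmin e.2 with h | ⟨e', he', h⟩
    · rw [h]; have := hcA e he; linarith
    · rw [h]
      have h1 := (hbil e' he' e he).1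
      have htri : dist z e.1 ≤ dist z e'.1 + dist e'.1 e.1 := dist_triangle _ _ _
      have h2 : (1 / K) * dist z e'.1 ≤ K * dist z e'.1 :=
        mul_le_mul_of_nonneg_right hKK dist_nonneg
      nlinarith [dist_nonneg (x := z) (y := e'.1),
        mul_le_mul_of_nonneg_left htri (le_of_lt hiK)]
  -- goodness of the new point: N * c + F x ≤ r
  have hG2 : N * c + F x ≤ r := by
    rw [← le_sub_iff_add_le, hc, mul_max_of_nonneg _ _ hN0.le]
    apply max_le
    · rw [mul_zero]
      have h1 : F x ≤ dist z x + c := hFle_z x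
      have hN1 : 1/N ≤ 1 := by rw [div_le_one hN0]; linarith
      have h2 : (1/N) * (r - dist z x) ≤ r - dist z x := by nlinarith [mul_le_mul_of_nonneg_right hN1 hs0.le]
      linarith [hc1]
    · rw [Finset.mul₀_sup' hN0.le]
      apply Finset.sup'_le
      intro e he
      have hFxe : F x ≤ K * dist z e.1 + dist e.2 x := hFle_e e he x
      have hg2 := (hgood e he).2
      have hNg : N * dist e.1 e.2 ≤ r - dist e.2 x := by
        rw [div_mul_eq_mul_div, le_div_iff₀ hN0, mul_comm] at hg2; linarith
      rw [mul_max_of_nonneg _ _ hN0.le]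
      apply max_le
      · -- B-term
        have htri : dist z e.2 ≤ dist z e.1 + dist e.1 e.2 := dist_triangle _ _ _
        have hd0 : (0:ℝ) ≤ dist z e.1 := dist_nonneg
        have hfac : 0 ≤ dist z e.1 * (N * K - N - K) :=
          mul_nonneg hd0 (by linarith)
        nlinarith [mul_le_mul_of_nonneg_left htri hN0.le]
      · -- A-term
        set P := dist z e.1 with hP
        set g := dist e.1 e.2 with hg1
        set db := dist z e.2 with hdb
        have h1 : P - g ≤ db := by
          have t := dist_triangle z e.2 e.1
          rw [dist_comm e.2 e.1] at t
          simp only [← hP, ← hg1, ← hdb] at t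
          linarith
        set Q := (1 / K) * P with hQdef
        have hQ : Q * K = P := by rw [hQdef]; field_simp
        have hQ0 : 0 ≤ Q := by positivity
        have hd0 : (0:ℝ) ≤ P := dist_nonneg
        have hquadP : 0 ≤ P * (N * K - N - K ^ 2) := mul_nonneg hd0 (by linarith)
        have hNdb : N * (P - g) ≤ N * db := mul_le_mul_of_nonneg_left h1 hN0.le
        nlinarith [hQ, hNg, hNdb, hquadP, mul_pos hK0 hK0]
  -- realize the new point
  set S : Finset U := insert z (p.image Prod.snd) with hS
  have hSne : S.Nonempty := ⟨z, Finset.mem_insert_self _ _⟩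
  have hkat : ∀ u ∈ S, ∀ v ∈ S, |F u - F v| ≤ dist u v ∧ dist u v ≤ F u + F v := by
    intro u _ v _
    constructor
    · rw [abs_sub_le_iff]
      constructor
      · have := hFdiff u v; rw [dist_comm v u] at this; linarith
      · have := hFdiff v u; linarith
    · exact hFsum u v
  obtain ⟨w, hw⟩ := katetov_realize hU S F hkat hSne
  have hwz : dist w z = F z := hw z (Finset.mem_insert_self _ _)
  have hwb : ∀ e ∈ p, dist w e.2 = F e.2 := fun e he =>
    hw e.2 (Finset.mem_insert_of_mem (Finset.mem_image_of_mem Prod.snd he))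
  have hFzc : F z ≤ c := by
    have := hFle_z z; rw [dist_self] at this; linarith
  have hwxball : w ∈ ball x r := by
    rw [mem_ball]
    have h1 : dist w x = F x := hwb (x, x) hx
    have h2 : F x ≤ dist z x + c := hFle_z x
    have hN1 : 1/N < 1 := by rw [div_lt_one hN0]; linarith
    have h3 : (1/N) * (r - dist z x) < r - dist z x := by nlinarith [mul_lt_mul_of_pos_right hN1 hs0]
    rw [h1]; linarith [hc1]
  refine ⟨w, ?_, ?_, ?_, ?_⟩
  · exact Finset.mem_insert_of_mem hx
  · intro e he
    rcases Finset.mem_insert.1 he with rfl | he'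
    · exact ⟨hz, hwxball⟩
    · exact hball e he'
  · intro e he e' he'
    rcases Finset.mem_insert.1 he with rfl | he2 <;>
      rcases Finset.mem_insert.1 he' with h' | he2'
    · rw [h']
      simp only [dist_self, mul_zero]
      exact ⟨le_refl 0, le_refl 0⟩
    · -- new vs old
      show (1/K) * dist z e'.1 ≤ dist w e'.2 ∧ dist w e'.2 ≤ K * dist z e'.1
      rw [hwb e' he2']
      exact ⟨hFlb e' he2', hFub e' he2'⟩
    · -- old vs new
      rw [h']
      show (1/K) * dist e.1 z ≤ dist e.2 w ∧ dist e.2 w ≤ K * dist e.1 z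
      rw [dist_comm e.2 w, hwb e he2, dist_comm e.1 z]
      exact ⟨hFlb e he2, hFub e he2⟩
    · exact hbil e he2 e' he2'
  · intro e he
    rcases Finset.mem_insert.1 he with rfl | he2
    · constructor
      · show dist z w ≤ (1/N) * (r - dist z x)
        rw [dist_comm z w, hwz]
        linarith [hFzc, hc1]
      · show dist z w ≤ (1/N) * (r - dist w x)
        rw [dist_comm z w, hwz]
        apply hNle
        have h1 : dist w x = F x := hwb (x, x) hx
        rw [h1]
        have := hG2
        have hcz : N * F z ≤ N * c := mul_le_mul_of_nonneg_left hFzc hN0.le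
        linarith
    · exact hgood e he2

set_option maxHeartbeats 1000000 in
lemma limit_map {U : Type} [MetricSpace U] (hcomp : CompleteSpace U)
    {x : U} {r N K : ℝ} (hr : 0 < r) (hN : 4 ≤ N) (hK1 : 1 < K)
    (R : Set (U × U))
    (hball : ∀ e ∈ R, e.1 ∈ ball x r ∧ e.2 ∈ ball x r)
    (hbil : ∀ e ∈ R, ∀ e' ∈ R,
      (1 / K) * dist e.1 e'.1 ≤ dist e.2 e'.2 ∧ dist e.2 e'.2 ≤ K * dist e.1 e'.1)
    (hgood : ∀ e ∈ R, dist e.1 e.2 ≤ (1 / N) * (r - dist e.1 x) ∧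
      dist e.1 e.2 ≤ (1 / N) * (r - dist e.2 x))
    (hdense : ∀ y ∈ ball x r, ∀ ε > 0, ∃ e ∈ R, dist y e.1 < ε) :
    ∃ G : U → U,
      (∀ y, y ∉ ball x r → G y = y) ∧
      (∀ y ∈ ball x r, ∀ e ∈ R,
        (1 / K) * dist y e.1 ≤ dist (G y) e.2 ∧ dist (G y) e.2 ≤ K * dist y e.1) ∧
      (∀ y ∈ ball x r, dist y (G y) ≤ (1 / N) * (r - dist y x) ∧
        dist (G y) y ≤ (1 / N) * (r - dist (G y) x)) := by
  haveI := hcomp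
  have hK0 : (0:ℝ) < K := by linarith
  have hN0 : (0:ℝ) < N := by linarith
  have key : ∀ y : U, ∃ v : U,
      (y ∈ ball x r →
        ((∀ e ∈ R, (1 / K) * dist y e.1 ≤ dist v e.2 ∧ dist v e.2 ≤ K * dist y e.1) ∧
          dist y v ≤ (1 / N) * (r - dist y x) ∧ dist v y ≤ (1 / N) * (r - dist v x))) ∧
      (y ∉ ball x r → v = y) := by
    intro y
    by_cases hy : y ∈ ball x r
    swap
    · exact ⟨y, fun h => absurd h hy, fun _ => rfl⟩
    have hc : ∀ k : ℕ, ∃ e, e ∈ R ∧ dist y e.1 < (1/2:ℝ) ^ k := by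
      intro k
      obtain ⟨e, he, hee⟩ := hdense y hy ((1/2:ℝ)^k) (by positivity)
      exact ⟨e, he, hee⟩
    choose e heR hek using hc
    have h1tend : Tendsto (fun k => dist (e k).1 y) atTop (𝓝 0) := by
      exact squeeze_zero (fun k => dist_nonneg)
        (fun k => by rw [dist_comm]; exact (hek k).le)
        (tendsto_pow_atTop_nhds_zero_of_lt_one (by norm_num) (by norm_num))
    have h1tend' : Tendsto (fun k => (e k).1) atTop (𝓝 y) :=
      tendsto_iff_dist_tendsto_zero.2 h1tend
    have hcauchy : CauchySeq (fun k => (e k).2) := by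
      rw [Metric.cauchySeq_iff]
      intro ε hε
      obtain ⟨B, hB⟩ := exists_pow_lt_of_lt_one (show (0:ℝ) < ε / (2 * K) by positivity)
        (by norm_num : (1/2:ℝ) < 1)
      refine ⟨B, fun m hm n hn => ?_⟩
      have h1 : dist (e m).2 (e n).2 ≤ K * dist (e m).1 (e n).1 :=
        (hbil (e m) (heR m) (e n) (heR n)).2
      have h2 : dist (e m).1 (e n).1 ≤ dist (e m).1 y + dist y (e n).1 := dist_triangle _ _ _
      have h3 : dist (e m).1 y < (1/2:ℝ)^B := by
        rw [dist_comm]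
        exact lt_of_lt_of_le (hek m) (pow_le_pow_of_le_one (by norm_num) (by norm_num) hm)
      have h4 : dist y (e n).1 < (1/2:ℝ)^B :=
        lt_of_lt_of_le (hek n) (pow_le_pow_of_le_one (by norm_num) (by norm_num) hn)
      have h5 : K * dist (e m).1 (e n).1 < K * (2 * (1/2:ℝ)^B) := by
        apply mul_lt_mul_of_pos_left _ hK0
        linarith
      have h6 : K * (2 * (1/2:ℝ)^B) < ε := by
        have := mul_lt_mul_of_pos_left hB (show (0:ℝ) < 2 * K by positivity)
        calc K * (2 * (1/2:ℝ)^B) = 2 * K * (1/2:ℝ)^B := by ring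
          _ < 2 * K * (ε / (2*K)) := mul_lt_mul_of_pos_left hB (by positivity)
          _ = ε := by field_simp
      linarith
    obtain ⟨v, hv⟩ := cauchySeq_tendsto_of_complete hcauchy
    have h2tend : Tendsto (fun k => dist (e k).2 v) atTop (𝓝 0) := by
      rw [← tendsto_iff_dist_tendsto_zero]; exact hv
    refine ⟨v, fun _ => ⟨?_, ?_, ?_⟩, fun h => absurd hy h⟩
    · intro e' he'
      constructor
      · -- lower bound via limit
        have hle : ∀ k, (1 / K) * dist y e'.1 - (1/K) * dist (e k).1 y - dist (e k).2 v
            ≤ dist v e'.2 := by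
          intro k
          have hb := (hbil (e k) (heR k) e' he').1
          have t1 : dist y e'.1 ≤ dist y (e k).1 + dist (e k).1 e'.1 := dist_triangle _ _ _
          have t2 : dist (e k).2 e'.2 ≤ dist (e k).2 v + dist v e'.2 := dist_triangle _ _ _
          have hiK : (0:ℝ) < 1/K := by positivity
          have := mul_le_mul_of_nonneg_left t1 hiK.le
          rw [dist_comm y (e k).1] at this
          nlinarith
        have htt : Tendsto (fun k => (1 / K) * dist y e'.1 - (1/K) * dist (e k).1 y
            - dist (e k).2 v) atTop (𝓝 ((1 / K) * dist y e'.1)) := by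
          have : Tendsto (fun k => (1/K) * dist (e k).1 y) atTop (𝓝 0) := by
            simpa using h1tend.const_mul (1/K)
          simpa using (tendsto_const_nhds.sub this).sub h2tend
        exact le_of_tendsto_of_tendsto' htt tendsto_const_nhds hle
      · have hle : ∀ k, dist v e'.2 ≤ dist (e k).2 v + K * dist (e k).1 y + K * dist y e'.1 := by
          intro k
          have hb := (hbil (e k) (heR k) e' he').2
          have t1 : dist v e'.2 ≤ dist v (e k).2 + dist (e k).2 e'.2 := dist_triangle _ _ _
          have t2 : dist (e k).1 e'.1 ≤ dist (e k).1 y + dist y e'.1 := dist_triangle _ _ _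
          have := mul_le_mul_of_nonneg_left t2 hK0.le
          rw [dist_comm v (e k).2] at t1
          nlinarith
        have htt : Tendsto (fun k => dist (e k).2 v + K * dist (e k).1 y + K * dist y e'.1)
            atTop (𝓝 (K * dist y e'.1)) := by
          have h1 : Tendsto (fun k => K * dist (e k).1 y) atTop (𝓝 0) := by
            simpa using h1tend.const_mul K
          simpa using (h2tend.add h1).add (tendsto_const_nhds (x := K * dist y e'.1))
        exact le_of_tendsto_of_tendsto' tendsto_const_nhds htt hle
    · -- goodness
      have hle : ∀ k, dist y v ≤ dist (e k).1 y + (1/N) * (r - dist (e k).1 x)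
          + dist (e k).2 v := by
        intro k
        have hg := (hgood (e k) (heR k)).1
        have t1 : dist y v ≤ dist y (e k).1 + dist (e k).1 (e k).2 + dist (e k).2 v :=
          dist_triangle4 _ _ _ _
        rw [dist_comm y (e k).1] at t1
        linarith
      have htt : Tendsto (fun k => dist (e k).1 y + (1/N) * (r - dist (e k).1 x)
          + dist (e k).2 v) atTop (𝓝 ((1/N) * (r - dist y x))) := by
        have hdx : Tendsto (fun k => dist (e k).1 x) atTop (𝓝 (dist y x)) :=
          h1tend'.dist tendsto_const_nhds
        have h2 : Tendsto (fun k => (1/N) * (r - dist (e k).1 x)) atTop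
            (𝓝 ((1/N) * (r - dist y x))) :=
          (tendsto_const_nhds.sub hdx).const_mul (1/N)
        simpa using (h1tend.add h2).add h2tend
      exact le_of_tendsto_of_tendsto' tendsto_const_nhds htt hle
    · have h2tend' : Tendsto (fun k => (e k).2) atTop (𝓝 v) := hv
      have hle : ∀ k, dist v y ≤ dist (e k).2 v + (1/N) * (r - dist (e k).2 x)
          + dist (e k).1 y := by
        intro k
        have hg := (hgood (e k) (heR k)).2
        have t1 : dist v y ≤ dist v (e k).2 + dist (e k).2 (e k).1 + dist (e k).1 y :=
          dist_triangle4 _ _ _ _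
        rw [dist_comm v (e k).2, dist_comm (e k).2 (e k).1] at t1
        linarith
      have htt : Tendsto (fun k => dist (e k).2 v + (1/N) * (r - dist (e k).2 x)
          + dist (e k).1 y) atTop (𝓝 ((1/N) * (r - dist v x))) := by
        have hdx : Tendsto (fun k => dist (e k).2 x) atTop (𝓝 (dist v x)) :=
          h2tend'.dist tendsto_const_nhds
        have h2 : Tendsto (fun k => (1/N) * (r - dist (e k).2 x)) atTop
            (𝓝 ((1/N) * (r - dist v x))) :=
          (tendsto_const_nhds.sub hdx).const_mul (1/N)
        simpa using (h2tend.add h2).add h1tend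
      exact le_of_tendsto_of_tendsto' tendsto_const_nhds htt hle
  choose G hG using key
  exact ⟨G, fun y hy => (hG y).2 hy, fun y hy e he => ((hG y).1 hy).1 e he,
    fun y hy => ((hG y).1 hy).2⟩

lemma extend_pair {U : Type} [MetricSpace U] (hU : IsUrysohn U) {x : U} {r N K : ℝ}
    (hN : 4 ≤ N) (hquad : K ^ 2 + N ≤ N * K)
    {p : Finset (U × U)} (hp : GoodSet x r N K p) {z : U} (hz : z ∈ ball x r) :
    ∃ q, p ⊆ q ∧ GoodSet x r N K q ∧ (∃ w, (z, w) ∈ q) ∧ (∃ w, (w, z) ∈ q) := by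
  have hN0 : (0:ℝ) < N := by linarith
  have hK1 : (1:ℝ) < K := by nlinarith [sq_nonneg K, sq_nonneg (K - 1)]
  have hK0 : (0:ℝ) < K := by linarith
  obtain ⟨w, h1⟩ := extend_one hU hN hquad hp hz
  obtain ⟨w', h2⟩ := extend_one hU hN hquad (GoodSet.swap hK0 h1) hz
  refine ⟨insert (w', z) (insert (z, w) p), ?_, ?_, ⟨w, ?_⟩, ⟨w', Finset.mem_insert_self _ _⟩⟩
  · exact (Finset.subset_insert _ _).trans (Finset.subset_insert _ _)
  · have himg : (insert (w', z) (insert (z, w) p)).image Prod.swap =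
        insert (z, w') ((insert (z, w) p).image Prod.swap) := by
      rw [Finset.image_insert]; rfl
    have h3 := GoodSet.swap hK0 h2
    rw [← himg, Finset.image_image] at h3
    have hid : (Prod.swap ∘ Prod.swap : U × U → U × U) = id := funext fun e => Prod.swap_swap e
    rwa [hid, Finset.image_id] at h3
  · exact Finset.mem_insert_of_mem (Finset.mem_insert_self _ _)

set_option maxHeartbeats 2000000

/-- Bilipschitz Extension Theorem for the Urysohn space. -/
theorem bilipschitz_extension_theorem (U : Type) [MetricSpace U] (hU : IsUrysohn U)
    (x : U) (r : ℝ) (hr : 0 < r) (N K : ℝ) (hN : 4 ≤ N)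
    (hK₁ : (N - Real.sqrt (N ^ 2 - 4 * N)) / 2 ≤ K)
    (hK₂ : K ≤ (N + Real.sqrt (N ^ 2 - 4 * N)) / 2)
    (A : Set U) (hAfin : A.Finite) (hxA : x ∈ A) (hAsub : A ⊆ ball x r)
    (f : U → U) (hmap : MapsTo f A (ball x r))
    (hbil : BilipschitzOn K f A) (hgood : NBigoodOn N x r f A) (hfx : f x = x) :
    ∃ g : U → U,
      BijOn g (ball x r) (ball x r) ∧
      (∀ a ∈ A, g a = f a) ∧
      Function.Bijective (fun z => if z ∈ ball x r then g z else z) ∧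
      BilipschitzOn K (fun z => if z ∈ ball x r then g z else z) Set.univ ∧
      NBigoodOn N x r g (ball x r) := by
  classical
  haveI hcomp : CompleteSpace U := hU.1
  haveI hsep : TopologicalSpace.SeparableSpace U := hU.2.1
  haveI : Nonempty U := ⟨x⟩
  have hN0 : (0:ℝ) < N := by linarith
  -- arithmetic consequences
  have hquad : K ^ 2 + N ≤ N * K := by
    set t := Real.sqrt (N ^ 2 - 4 * N) with ht
    have ht0 : 0 ≤ t := Real.sqrt_nonneg _
    have ht2 : t ^ 2 = N ^ 2 - 4 * N := Real.sq_sqrt (by nlinarith)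
    have h1 : N - t ≤ 2 * K := by linarith
    have h2 : 2 * K ≤ N + t := by linarith
    nlinarith [mul_nonneg (show (0:ℝ) ≤ t - (2*K - N) by linarith)
      (show (0:ℝ) ≤ t + (2*K - N) by linarith)]
  have hK1 : (1:ℝ) < K := by nlinarith [sq_nonneg K, sq_nonneg (K - 1)]
  have hK0 : (0:ℝ) < K := by linarith
  have hiK : (0:ℝ) < 1 / K := by positivity
  have hiN : (0:ℝ) < 1 / N := by positivity
  have hKN : N ≤ K * (N - 1) := by nlinarith [sq_nonneg (K - 1)]
  have hNN : (1/N) * N = 1 := by field_simp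
  have hK1N : 1 + 1/N ≤ K := by
    have h : 1 / N ≤ K - 1 := by rw [div_le_iff₀ hN0]; nlinarith
    linarith
  have hiKN : 1/K ≤ 1 - 1/N := by
    rw [div_le_iff₀ hK0]
    nlinarith [hNN, hKN]
  -- initial finite partial map
  set p0 : Finset (U × U) := hAfin.toFinset.image (fun a => (a, f a)) with hp0def
  have hp0mem : ∀ e, e ∈ p0 ↔ ∃ a ∈ A, (a, f a) = e := by
    intro e
    simp only [hp0def, Finset.mem_image, Set.Finite.mem_toFinset]
  have hp0 : GoodSet x r N K p0 := by
    refine ⟨?_, ?_, ?_, ?_⟩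
    · exact (hp0mem (x, x)).2 ⟨x, hxA, by rw [hfx]⟩
    · intro e he
      obtain ⟨a, ha, rfl⟩ := (hp0mem e).1 he
      exact ⟨hAsub ha, hmap ha⟩
    · intro e he e' he'
      obtain ⟨a, ha, rfl⟩ := (hp0mem e).1 he
      obtain ⟨a', ha', rfl⟩ := (hp0mem e').1 he'
      exact hbil a ha a' ha'
    · intro e he
      obtain ⟨a, ha, rfl⟩ := (hp0mem e).1 he
      refine ⟨hgood.1 a ha, ?_⟩
      have := hgood.2 a ha
      rwa [dist_comm (f a) a] at this
  -- countable dense sequence in the ball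
  obtain ⟨s, hsc, hsd⟩ := TopologicalSpace.exists_countable_dense U
  have hsne : s.Nonempty := hsd.nonempty
  obtain ⟨useq0, hus⟩ := Set.Countable.exists_eq_range hsc hsne
  set useq : ℕ → U := fun n => if useq0 n ∈ ball x r then useq0 n else x with huseq
  have huball : ∀ n, useq n ∈ ball x r := by
    intro n
    show (if useq0 n ∈ ball x r then useq0 n else x) ∈ ball x r
    split_ifs with h
    · exact h
    · exact mem_ball_self hr
  -- the chain of finite partial maps
  have hstep : ∀ (n : ℕ) (q : Finset (U × U)), GoodSet x r N K q →
      ∃ q', q ⊆ q' ∧ GoodSet x r N K q' ∧ (∃ w, (useq n, w) ∈ q') ∧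
        (∃ w, (w, useq n) ∈ q') :=
    fun n q hq => extend_pair hU hN hquad hq (huball n)
  let chain : ℕ → {q : Finset (U × U) // GoodSet x r N K q} :=
    fun n => Nat.rec ⟨p0, hp0⟩
      (fun n ih => ⟨(hstep n ih.1 ih.2).choose, (hstep n ih.1 ih.2).choose_spec.2.1⟩) n
  have hchain : ∀ n, (chain n).1 ⊆ (chain (n+1)).1 ∧
      (∃ w, (useq n, w) ∈ (chain (n+1)).1) ∧ (∃ w, (w, useq n) ∈ (chain (n+1)).1) := by
    intro n
    have hspec := (hstep n (chain n).1 (chain n).2).choose_spec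
    exact ⟨hspec.1, hspec.2.2.1, hspec.2.2.2⟩
  have hmono : ∀ m n : ℕ, m ≤ n → (chain m).1 ⊆ (chain n).1 := by
    intro m n h
    induction h with
    | refl => exact Finset.Subset.refl _
    | step h ih => exact ih.trans (hchain _).1
  set R : Set (U × U) := ⋃ n, ((chain n).1 : Set (U × U)) with hR
  have hmemR : ∀ e, e ∈ R ↔ ∃ n, e ∈ (chain n).1 := by
    intro e; simp [hR]
  have hpairR : ∀ e ∈ R, ∀ e' ∈ R, ∃ n, e ∈ (chain n).1 ∧ e' ∈ (chain n).1 := by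
    intro e he e' he'
    obtain ⟨i, hi⟩ := (hmemR e).1 he
    obtain ⟨j, hj⟩ := (hmemR e').1 he'
    exact ⟨max i j, hmono i _ (le_max_left _ _) hi, hmono j _ (le_max_right _ _) hj⟩
  have hballR : ∀ e ∈ R, e.1 ∈ ball x r ∧ e.2 ∈ ball x r := by
    intro e he
    obtain ⟨n, hn⟩ := (hmemR e).1 he
    exact (chain n).2.2.1 e hn
  have hbilR : ∀ e ∈ R, ∀ e' ∈ R,
      (1 / K) * dist e.1 e'.1 ≤ dist e.2 e'.2 ∧ dist e.2 e'.2 ≤ K * dist e.1 e'.1 := by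
    intro e he e' he'
    obtain ⟨n, hn, hn'⟩ := hpairR e he e' he'
    exact (chain n).2.2.2.1 e hn e' hn'
  have hgoodR : ∀ e ∈ R, dist e.1 e.2 ≤ (1 / N) * (r - dist e.1 x) ∧
      dist e.1 e.2 ≤ (1 / N) * (r - dist e.2 x) := by
    intro e he
    obtain ⟨n, hn⟩ := (hmemR e).1 he
    exact (chain n).2.2.2.2 e hn
  -- density of domain and range
  have hnear : ∀ y ∈ ball x r, ∀ ε > 0, ∃ n, dist y (useq n) < ε := by
    intro y hy ε hε
    have hδ : 0 < min ε (r - dist y x) := by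
      apply lt_min hε
      rw [mem_ball] at hy
      linarith
    obtain ⟨v, hv1, hv2⟩ := (Metric.dense_iff.1 hsd) y _ hδ
    rw [hus] at hv2
    obtain ⟨n, rfl⟩ := hv2
    rw [mem_ball] at hv1
    have hvb : useq0 n ∈ ball x r := by
      rw [mem_ball]
      have := dist_triangle (useq0 n) y x
      rw [dist_comm (useq0 n) y] at this
      have h2 := lt_of_lt_of_le hv1 (min_le_right _ _)
      rw [dist_comm (useq0 n) y] at h2
      linarith
    refine ⟨n, ?_⟩
    have huv : useq n = useq0 n := if_pos hvb
    rw [huv, dist_comm]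
    exact lt_of_lt_of_le hv1 (min_le_left _ _)
  have hdomdense : ∀ y ∈ ball x r, ∀ ε > 0, ∃ e ∈ R, dist y e.1 < ε := by
    intro y hy ε hε
    obtain ⟨n, hn⟩ := hnear y hy ε hε
    obtain ⟨w, hw⟩ := (hchain n).2.1
    exact ⟨(useq n, w), (hmemR _).2 ⟨n+1, hw⟩, hn⟩
  have hrandense : ∀ y ∈ ball x r, ∀ ε > 0, ∃ e ∈ R, dist y e.2 < ε := by
    intro y hy ε hε
    obtain ⟨n, hn⟩ := hnear y hy ε hε
    obtain ⟨w, hw⟩ := (hchain n).2.2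
    exact ⟨(w, useq n), (hmemR _).2 ⟨n+1, hw⟩, hn⟩
  -- the swapped relation
  set R' : Set (U × U) := Prod.swap '' R with hR'
  have hballR' : ∀ e ∈ R', e.1 ∈ ball x r ∧ e.2 ∈ ball x r := by
    rintro e ⟨e', he', rfl⟩
    exact ⟨(hballR e' he').2, (hballR e' he').1⟩
  have hbilR' : ∀ e ∈ R', ∀ e2 ∈ R',
      (1 / K) * dist e.1 e2.1 ≤ dist e.2 e2.2 ∧ dist e.2 e2.2 ≤ K * dist e.1 e2.1 := by
    rintro e ⟨f1, hf1, rfl⟩ e2 ⟨f2, hf2, rfl⟩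
    obtain ⟨h1, h2⟩ := hbilR f1 hf1 f2 hf2
    simp only [Prod.fst_swap, Prod.snd_swap]
    rw [div_mul_eq_mul_div, div_le_iff₀ hK0] at h1 ⊢
    constructor
    · linarith
    · linarith
  have hgoodR' : ∀ e ∈ R', dist e.1 e.2 ≤ (1 / N) * (r - dist e.1 x) ∧
      dist e.1 e.2 ≤ (1 / N) * (r - dist e.2 x) := by
    rintro e ⟨f1, hf1, rfl⟩
    obtain ⟨h1, h2⟩ := hgoodR f1 hf1
    simp only [Prod.fst_swap, Prod.snd_swap]
    rw [dist_comm f1.2 f1.1]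
    exact ⟨h2, h1⟩
  have hdomdense' : ∀ y ∈ ball x r, ∀ ε > 0, ∃ e ∈ R', dist y e.1 < ε := by
    intro y hy ε hε
    obtain ⟨e, he, hee⟩ := hrandense y hy ε hε
    exact ⟨e.swap, ⟨e, he, rfl⟩, hee⟩
  -- the limit maps
  obtain ⟨G, hGout, hGkey, hGgood⟩ :=
    limit_map hcomp hr hN hK1 R hballR hbilR hgoodR hdomdense
  obtain ⟨H, hHout, hHkey, hHgood⟩ :=
    limit_map hcomp hr hN hK1 R' hballR' hbilR' hgoodR' hdomdense'
  -- basic consequences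
  have hballmap : ∀ (G' : U → U),
      (∀ y ∈ ball x r, dist y (G' y) ≤ (1 / N) * (r - dist y x) ∧
        dist (G' y) y ≤ (1 / N) * (r - dist (G' y) x)) →
      ∀ y ∈ ball x r, G' y ∈ ball x r := by
    intro G' hgd y hy
    have h2 := (hgd y hy).2
    rw [div_mul_eq_mul_div, le_div_iff₀ hN0] at h2
    have t := dist_triangle (G' y) y x
    rw [mem_ball] at hy ⊢
    nlinarith [dist_nonneg (x := G' y) (y := y)]
  have hGball : ∀ y ∈ ball x r, G y ∈ ball x r := hballmap G hGgood
  have hHball : ∀ y ∈ ball x r, H y ∈ ball x r := hballmap H hHgood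
  have hswapmem : ∀ e ∈ R, e.swap ∈ R' := fun e he => ⟨e, he, rfl⟩
  -- H ∘ G = id on ball
  have hHG : ∀ y ∈ ball x r, H (G y) = y := by
    intro y hy
    have hGy := hGball y hy
    rw [← dist_eq_zero]
    by_contra hne
    have hpos : 0 < dist (H (G y)) y := lt_of_le_of_ne dist_nonneg (Ne.symm hne)
    obtain ⟨e, heR, hey⟩ := hdomdense y hy (dist (H (G y)) y / (K^2 + 1)) (by positivity)
    have h1 : dist (H (G y)) e.1 ≤ K * dist (G y) e.2 := by
      have := (hHkey (G y) hGy e.swap (hswapmem e heR)).2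
      simpa using this
    have h2 : dist (G y) e.2 ≤ K * dist y e.1 := (hGkey y hy e heR).2
    have h3 : dist (H (G y)) y ≤ dist (H (G y)) e.1 + dist y e.1 := by
      have := dist_triangle (H (G y)) e.1 y
      rw [dist_comm e.1 y] at this
      linarith
    have hK2 : (0:ℝ) < K^2 + 1 := by positivity
    have h4 : (K^2 + 1) * (dist (H (G y)) y / (K^2 + 1)) = dist (H (G y)) y := by
      field_simp
    nlinarith [mul_le_mul_of_nonneg_left h2 hK0.le,
      mul_lt_mul_of_pos_left hey hK2, dist_nonneg (x := y) (y := e.1)]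
  have hGH : ∀ y ∈ ball x r, G (H y) = y := by
    intro y hy
    have hHy := hHball y hy
    rw [← dist_eq_zero]
    by_contra hne
    have hpos : 0 < dist (G (H y)) y := lt_of_le_of_ne dist_nonneg (Ne.symm hne)
    obtain ⟨e', heR', hey⟩ := hdomdense' y hy (dist (G (H y)) y / (K^2 + 1)) (by positivity)
    obtain ⟨e, heR, rfl⟩ := heR'
    have h1 : dist (G (H y)) e.2 ≤ K * dist (H y) e.1 := (hGkey (H y) hHy e heR).2
    have h2 : dist (H y) e.1 ≤ K * dist y e.2 := by
      have := (hHkey y hy e.swap (hswapmem e heR)).2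
      simpa using this
    have h3 : dist (G (H y)) y ≤ dist (G (H y)) e.2 + dist y e.2 := by
      have := dist_triangle (G (H y)) e.2 y
      rw [dist_comm e.2 y] at this
      linarith
    have hK2 : (0:ℝ) < K^2 + 1 := by positivity
    simp only [Prod.fst_swap] at hey
    have h4 : (K^2 + 1) * (dist (G (H y)) y / (K^2 + 1)) = dist (G (H y)) y := by
      field_simp
    nlinarith [mul_le_mul_of_nonneg_left h2 hK0.le,
      mul_lt_mul_of_pos_left hey hK2, dist_nonneg (x := y) (y := e.2)]
  -- bilipschitz on the ball
  have hGbilball : ∀ u ∈ ball x r, ∀ v ∈ ball x r,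
      (1/K) * dist u v ≤ dist (G u) (G v) ∧ dist (G u) (G v) ≤ K * dist u v := by
    intro u hu v hv
    constructor
    · apply le_of_forall_pos_le_add
      intro ε hε
      obtain ⟨e, heR, hev⟩ := hdomdense v hv (ε / (2*K)) (by positivity)
      have h1 : (1/K) * dist u e.1 ≤ dist (G u) e.2 := (hGkey u hu e heR).1
      have h2 : dist (G v) e.2 ≤ K * dist v e.1 := (hGkey v hv e heR).2
      have t1 : dist u v ≤ dist u e.1 + dist v e.1 := by
        have := dist_triangle u e.1 v
        rw [dist_comm e.1 v] at this
        linarith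
      have t2 : dist (G u) e.2 ≤ dist (G u) (G v) + dist (G v) e.2 := by
        have := dist_triangle (G u) (G v) e.2
        linarith
      have hKK : 1/K ≤ K := by rw [div_le_iff₀ hK0]; nlinarith
      have hKe : K * (ε / (2*K)) = ε/2 := by field_simp
      nlinarith [mul_le_mul_of_nonneg_left t1 hiK.le,
        mul_le_mul_of_nonneg_left hev.le hiK.le,
        mul_le_mul_of_nonneg_left hev.le hK0.le,
        mul_le_mul_of_nonneg_right hKK (dist_nonneg (x := v) (y := e.1))]
    · apply le_of_forall_pos_le_add
      intro ε hε
      obtain ⟨e, heR, hev⟩ := hdomdense v hv (ε / (2*K)) (by positivity)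
      have h1 : dist (G u) e.2 ≤ K * dist u e.1 := (hGkey u hu e heR).2
      have h2 : dist (G v) e.2 ≤ K * dist v e.1 := (hGkey v hv e heR).2
      have t1 : dist u e.1 ≤ dist u v + dist v e.1 := dist_triangle _ _ _
      have t2 : dist (G u) (G v) ≤ dist (G u) e.2 + dist (G v) e.2 := by
        have := dist_triangle (G u) e.2 (G v)
        rw [dist_comm e.2 (G v)] at this
        linarith
      have hKe : K * (ε / (2*K)) = ε/2 := by field_simp
      nlinarith [mul_le_mul_of_nonneg_left t1 hK0.le,
        mul_le_mul_of_nonneg_left hev.le hK0.le]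
  -- cross estimates
  have hcross : ∀ u ∈ ball x r, ∀ v, v ∉ ball x r →
      (1/K) * dist u v ≤ dist (G u) v ∧ dist (G u) v ≤ K * dist u v := by
    intro u hu v hv
    have hg := (hGgood u hu).1
    have hvx : r ≤ dist v x := by
      rw [mem_ball] at hv
      linarith [not_lt.1 hv]
    have hlow : r - dist u x ≤ dist u v := by
      have := dist_triangle v u x
      rw [dist_comm v u] at this
      linarith
    have hd0 : (0:ℝ) ≤ dist u v := dist_nonneg
    have hux : 0 < r - dist u x := by
      rw [mem_ball] at hu
      linarith
    have hbound : dist u (G u) ≤ (1/N) * dist u v := by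
      have := mul_le_mul_of_nonneg_left hlow hiN.le
      linarith
    constructor
    · have t : dist u v ≤ dist u (G u) + dist (G u) v := dist_triangle _ _ _
      have : (1 - 1/N) * dist u v ≤ dist (G u) v := by nlinarith
      have h2 : (1/K) * dist u v ≤ (1 - 1/N) * dist u v :=
        mul_le_mul_of_nonneg_right hiKN hd0
      linarith
    · have t : dist (G u) v ≤ dist (G u) u + dist u v := dist_triangle _ _ _
      rw [dist_comm (G u) u] at t
      have h2 : (1 + 1/N) * dist u v ≤ K * dist u v :=
        mul_le_mul_of_nonneg_right hK1N hd0
      nlinarith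
  -- assembling the answer
  refine ⟨G, ⟨fun y hy => hGball y hy, ?_, ?_⟩, ?_, ?_, ?_, ?_⟩
  · -- InjOn
    intro u hu v hv huv
    have := hHG u hu
    rw [huv, hHG v hv] at this
    exact this.symm
  · -- SurjOn
    intro v hv
    exact ⟨H v, hHball v hv, hGH v hv⟩
  · -- extends f
    intro a ha
    have haR : (a, f a) ∈ R := (hmemR _).2 ⟨0, (hp0mem (a, f a)).2 ⟨a, ha, rfl⟩⟩
    have := (hGkey a (hAsub ha) (a, f a) haR).2
    simp only [dist_self, mul_zero] at this
    rw [← dist_eq_zero]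
    exact le_antisymm this dist_nonneg
  · -- bijectivity of the glued map
    rw [Function.bijective_iff_has_inverse]
    refine ⟨fun z => if z ∈ ball x r then H z else z, ?_, ?_⟩
    · intro z
      by_cases h : z ∈ ball x r
      · simp only [if_pos h, if_pos (hGball z h)]
        exact hHG z h
      · simp only [if_neg h, if_neg h]
    · intro z
      by_cases h : z ∈ ball x r
      · simp only [if_pos h, if_pos (hHball z h)]
        exact hGH z h
      · simp only [if_neg h, if_neg h]
  · -- bilipschitz of the glued map
    intro u _ v _
    by_cases hu : u ∈ ball x r <;> by_cases hv : v ∈ ball x r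
    · simp only [if_pos hu, if_pos hv]
      exact hGbilball u hu v hv
    · simp only [if_pos hu, if_neg hv]
      exact hcross u hu v hv
    · simp only [if_neg hu, if_pos hv]
      have := hcross v hv u hu
      rw [dist_comm v u, dist_comm (G v) u] at this
      exact this
    · simp only [if_neg hu, if_neg hv]
      have hd0 : (0:ℝ) ≤ dist u v := dist_nonneg
      constructor
      · have : (1/K) * dist u v ≤ 1 * dist u v :=
          mul_le_mul_of_nonneg_right (by rw [div_le_one hK0]; linarith) hd0
        linarith
      · nlinarith
  · -- N-bigood
    exact ⟨fun y hy => (hGgood y hy).1, fun y hy => (hGgood y hy).2⟩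
end

section
/- One-point amalgamation of finite metric spaces: Let (X₀,d₀) and (X₁,d₁) be finite metric spaces such that Z = X₀ ∩ X₁ is nonempty, d₀ and d₁ agree on Z × Z, and Xᵢ = Z ∪ {pᵢ} for i = 0,1 with p₀ ≠ p₁, p₀ ∉ X₁, p₁ ∉ X₀. Then ℓ := max_{z∈Z} |d₀(p₀,z) − d₁(z,p₁)| ≤ min_{z∈Z} (d₀(p₀,z) + d₁(z,p₁)) =: r, and for every value s with ℓ ≤ s ≤ r and 0 < s, the symmetric extension d of d₀ ∪ d₁ to X₀ ∪ X₁ defined by d(p₀,p₁) = d(p₁,p₀) = s is a metric on X₀ ∪ X₁. -/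
open Set
open scoped Classical

/-- `d` is a metric on the set `S`. -/
def IsMetricOn {T : Type} (d : T → T → ℝ) (S : Set T) : Prop :=
  (∀ a ∈ S, d a a = 0) ∧
  (∀ a ∈ S, ∀ b ∈ S, a ≠ b → 0 < d a b) ∧
  (∀ a ∈ S, ∀ b ∈ S, d a b = d b a) ∧
  (∀ a ∈ S, ∀ b ∈ S, ∀ c ∈ S, d a c ≤ d a b + d b c)

/-!
Apart from degenerate ones, the only triangles of `X₀ ∪ X₁` lying neither in `X₀` nor in `X₁`
are the triangles `p₀ z p₁` with `z ∈ Z`, and their triangle inequalities say precisely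
`|d₀(p₀,z) − d₁(z,p₁)| ≤ s ≤ d₀(p₀,z) + d₁(z,p₁)`. The inequality `ℓ ≤ r` is the triangle
inequality in `X₀` and in `X₁`, routed through a second point `w ∈ Z`.
-/

variable {T : Type}

section

variable {d : T → T → ℝ}

theorem IsMetricOn.congr {d' : T → T → ℝ} {S : Set T} (h : IsMetricOn d S)
    (heq : ∀ a ∈ S, ∀ b ∈ S, d a b = d' a b) : IsMetricOn d' S := by
  obtain ⟨hrefl, hpos, hsymm, htri⟩ := h
  refine ⟨fun a ha => ?_, fun a ha b hb hab => ?_, fun a ha b hb => ?_,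
    fun a ha b hb c hc => ?_⟩
  · rw [← heq a ha a ha]; exact hrefl a ha
  · rw [← heq a ha b hb]; exact hpos a ha b hb hab
  · rw [← heq a ha b hb, ← heq b hb a ha]; exact hsymm a ha b hb
  · rw [← heq a ha c hc, ← heq a ha b hb, ← heq b hb c hc]; exact htri a ha b hb c hc

/-- The triangles `x p x` give `0 ≤ d p x`, and the triangles with `p` last are those with `p`
first read backwards. -/
theorem isMetricOn_insert {S : Set T} {p : T} (h : IsMetricOn d S) (hpp : d p p = 0)
    (hpos : ∀ x ∈ S, x ≠ p → 0 < d p x) (hsymm : ∀ x ∈ S, d x p = d p x)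
    (htri : ∀ x ∈ S, ∀ y ∈ S, d p y ≤ d p x + d x y ∧ d x y ≤ d x p + d p y) :
    IsMetricOn d (insert p S) := by
  obtain ⟨hrefl, hpos', hsymm', htri'⟩ := h
  have hnonneg : ∀ x ∈ S, 0 ≤ d p x := fun x hx => by
    linarith [(htri x hx x hx).2, hrefl x hx, hsymm x hx]
  refine ⟨?_, ?_, ?_, ?_⟩
  · rintro a (rfl | ha)
    exacts [hpp, hrefl a ha]
  · rintro a (rfl | ha) b (rfl | hb) hab
    · exact absurd rfl hab
    · exact hpos b hb (Ne.symm hab)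
    · rw [hsymm a ha]; exact hpos a ha hab
    · exact hpos' a ha b hb hab
  · rintro a (rfl | ha) b (rfl | hb)
    · rfl
    · exact (hsymm b hb).symm
    · exact hsymm a ha
    · exact hsymm' a ha b hb
  · rintro a (rfl | ha) b (rfl | hb) c (rfl | hc)
    · linarith
    · linarith
    · linarith [hnonneg b hb, hsymm b hb]
    · exact (htri b hb c hc).1
    · linarith
    · exact (htri a ha c hc).2
    · linarith [(htri b hb a ha).1, hsymm a ha, hsymm b hb, hsymm' a ha b hb]
    · exact htri' a ha b hb c hc

theorem IsMetricOn.amalgamate {Z : Set T} {p₀ p₁ : T}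
    (h₀ : IsMetricOn d (insert p₀ Z)) (h₁ : IsMetricOn d (insert p₁ Z))
    (hpos : 0 < d p₀ p₁) (hsymm : d p₁ p₀ = d p₀ p₁)
    (hZ : ∀ z ∈ Z, |d p₀ z - d z p₁| ≤ d p₀ p₁ ∧ d p₀ p₁ ≤ d p₀ z + d z p₁) :
    IsMetricOn d (insert p₀ (insert p₁ Z)) := by
  have hp₀ : p₀ ∈ insert p₀ Z := mem_insert _ _
  have hp₁ : p₁ ∈ insert p₁ Z := mem_insert _ _
  obtain ⟨hrefl₀, hpos₀, hsymm₀, htri₀⟩ := h₀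
  have hpp₁ : d p₁ p₁ = 0 := h₁.1 p₁ hp₁
  refine isMetricOn_insert h₁ (hrefl₀ p₀ hp₀) ?_ ?_ ?_
  · rintro x (rfl | hx) hxp₀
    exacts [hpos, hpos₀ p₀ hp₀ x (mem_insert_of_mem _ hx) (Ne.symm hxp₀)]
  · rintro x (rfl | hx)
    exacts [hsymm, hsymm₀ x (mem_insert_of_mem _ hx) p₀ hp₀]
  · rintro x (rfl | hx) y (rfl | hy)
    · constructor <;> linarith
    · have hdiff := abs_le.mp (hZ y hy).1
      have hsymm₁ : d x y = d y x := h₁.2.2.1 x hp₁ y (mem_insert_of_mem _ hy)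
      constructor <;> linarith
    · have hdiff := abs_le.mp (hZ x hx).1
      have hsymm₀' : d x p₀ = d p₀ x := hsymm₀ x (mem_insert_of_mem _ hx) p₀ hp₀
      exact ⟨(hZ x hx).2, by linarith⟩
    · have hx₀ := mem_insert_of_mem p₀ hx
      have hy₀ := mem_insert_of_mem p₀ hy
      exact ⟨htri₀ p₀ hp₀ x hx₀ y hy₀, htri₀ x hx₀ p₀ hp₀ y hy₀⟩

end

theorem abs_sub_le_add_of_agree {Z : Set T} {p₀ p₁ : T} {d₀ d₁ : T → T → ℝ}
    (hd₀ : IsMetricOn d₀ (insert p₀ Z)) (hd₁ : IsMetricOn d₁ (insert p₁ Z))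
    (hagree : ∀ a ∈ Z, ∀ b ∈ Z, d₀ a b = d₁ a b) {z w : T} (hz : z ∈ Z) (hw : w ∈ Z) :
    |d₀ p₀ z - d₁ z p₁| ≤ d₀ p₀ w + d₁ w p₁ := by
  obtain ⟨-, -, hsymm₀, htri₀⟩ := hd₀
  obtain ⟨-, -, hsymm₁, htri₁⟩ := hd₁
  have hp₀ : p₀ ∈ insert p₀ Z := mem_insert _ _
  have hp₁ : p₁ ∈ insert p₁ Z := mem_insert _ _
  have hz₀ := mem_insert_of_mem p₀ hz
  have hw₀ := mem_insert_of_mem p₀ hw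
  have hz₁ := mem_insert_of_mem p₁ hz
  have hw₁ := mem_insert_of_mem p₁ hw
  rw [abs_sub_le_iff]
  constructor
  · calc d₀ p₀ z - d₁ z p₁ ≤ d₀ p₀ w + d₁ w z - d₁ z p₁ := by
          linarith [htri₀ p₀ hp₀ w hw₀ z hz₀, hagree w hw z hz]
      _ ≤ d₀ p₀ w + d₁ w p₁ := by
          linarith [htri₁ w hw₁ p₁ hp₁ z hz₁, hsymm₁ p₁ hp₁ z hz₁]
  · calc d₁ z p₁ - d₀ p₀ z ≤ d₀ z w + d₁ w p₁ - d₀ p₀ z := by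
          linarith [htri₁ z hz₁ w hw₁ p₁ hp₁, hagree z hz w hw]
      _ ≤ d₀ p₀ w + d₁ w p₁ := by
          linarith [htri₀ z hz₀ p₀ hp₀ w hw₀, hsymm₀ z hz₀ p₀ hp₀]

noncomputable def amalgam (Z : Set T) (p₀ p₁ : T) (d₀ d₁ : T → T → ℝ) (s : ℝ) : T → T → ℝ :=
  fun a b =>
    if (a = p₀ ∧ b = p₁) ∨ (a = p₁ ∧ b = p₀) then s
    else if a ∈ insert p₀ Z ∧ b ∈ insert p₀ Z then d₀ a b
    else d₁ a b

section amalgam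

variable {Z : Set T} {p₀ p₁ : T} {d₀ d₁ : T → T → ℝ} {s : ℝ}

@[simp]
theorem amalgam_left_right : amalgam Z p₀ p₁ d₀ d₁ s p₀ p₁ = s := by
  simp [amalgam]

@[simp]
theorem amalgam_right_left : amalgam Z p₀ p₁ d₀ d₁ s p₁ p₀ = s := by
  simp [amalgam]

theorem amalgam_of_mem_left (hp₁ : p₁ ∉ Z) (hne : p₀ ≠ p₁) {a b : T}
    (ha : a ∈ insert p₀ Z) (hb : b ∈ insert p₀ Z) : amalgam Z p₀ p₁ d₀ d₁ s a b = d₀ a b := by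
  have hp₁' : p₁ ∉ insert p₀ Z := by simp [hp₁, hne.symm]
  have ha₁ : a ≠ p₁ := ne_of_mem_of_not_mem ha hp₁'
  have hb₁ : b ≠ p₁ := ne_of_mem_of_not_mem hb hp₁'
  simp [amalgam, ha₁, hb₁, ha, hb]

theorem amalgam_of_mem_right (hp₀ : p₀ ∉ Z) (hne : p₀ ≠ p₁)
    (hagree : ∀ a ∈ Z, ∀ b ∈ Z, d₀ a b = d₁ a b) {a b : T}
    (ha : a ∈ insert p₁ Z) (hb : b ∈ insert p₁ Z) : amalgam Z p₀ p₁ d₀ d₁ s a b = d₁ a b := by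
  have hp₀' : p₀ ∉ insert p₁ Z := by simp [hp₀, hne]
  have ha₀ : a ≠ p₀ := ne_of_mem_of_not_mem ha hp₀'
  have hb₀ : b ≠ p₀ := ne_of_mem_of_not_mem hb hp₀'
  unfold amalgam
  rw [if_neg (by tauto)]
  split_ifs with hab
  · exact hagree a ((mem_insert_iff.mp hab.1).resolve_left ha₀)
      b ((mem_insert_iff.mp hab.2).resolve_left hb₀)
  · rfl

end amalgam

theorem one_point_amalgamation_general (T : Type) (Z : Set T) (p₀ p₁ : T)
    (hp₀ : p₀ ∉ Z) (hp₁ : p₁ ∉ Z) (hne : p₀ ≠ p₁)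
    (d₀ d₁ : T → T → ℝ)
    (hd₀ : IsMetricOn d₀ (insert p₀ Z)) (hd₁ : IsMetricOn d₁ (insert p₁ Z))
    (hagree : ∀ a ∈ Z, ∀ b ∈ Z, d₀ a b = d₁ a b) :
    (∀ z ∈ Z, ∀ w ∈ Z, |d₀ p₀ z - d₁ z p₁| ≤ d₀ p₀ w + d₁ w p₁) ∧
    ∀ s : ℝ, 0 < s →
      (∀ z ∈ Z, |d₀ p₀ z - d₁ z p₁| ≤ s) →
      (∀ z ∈ Z, s ≤ d₀ p₀ z + d₁ z p₁) →
      IsMetricOn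
        (fun a b =>
          if (a = p₀ ∧ b = p₁) ∨ (a = p₁ ∧ b = p₀) then s
          else if a ∈ insert p₀ Z ∧ b ∈ insert p₀ Z then d₀ a b
          else d₁ a b)
        (insert p₀ (insert p₁ Z)) := by
  refine ⟨fun z hz w hw => abs_sub_le_add_of_agree hd₀ hd₁ hagree hz hw, fun s hs hℓ hr => ?_⟩
  have h₀ : IsMetricOn (amalgam Z p₀ p₁ d₀ d₁ s) (insert p₀ Z) :=
    hd₀.congr fun a ha b hb => (amalgam_of_mem_left hp₁ hne ha hb).symm
  have h₁ : IsMetricOn (amalgam Z p₀ p₁ d₀ d₁ s) (insert p₁ Z) :=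
    hd₁.congr fun a ha b hb => (amalgam_of_mem_right hp₀ hne hagree ha hb).symm
  refine h₀.amalgamate h₁ (by rwa [amalgam_left_right])
    (by rw [amalgam_left_right, amalgam_right_left]) fun z hz => ?_
  rw [amalgam_left_right, amalgam_of_mem_left hp₁ hne (mem_insert _ _) (mem_insert_of_mem _ hz),
    amalgam_of_mem_right hp₀ hne hagree (mem_insert_of_mem _ hz) (mem_insert _ _)]
  exact ⟨hℓ z hz, hr z hz⟩

/-- One-point amalgamation of finite metric spaces: `ℓ ≤ r`
(stated pointwise: `|d₀(p₀,z) − d₁(z,p₁)| ≤ d₀(p₀,w) + d₁(w,p₁)` for all `z, w ∈ Z`),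
and for every `s` with `ℓ ≤ s ≤ r` and `0 < s`, the symmetric extension of
`d₀ ∪ d₁` with `d(p₀,p₁) = d(p₁,p₀) = s` is a metric on `X₀ ∪ X₁`. -/
theorem one_point_amalgamation (T : Type) (Z : Set T) (p₀ p₁ : T)
    (hZfin : Z.Finite) (hZne : Z.Nonempty)
    (hp₀ : p₀ ∉ Z) (hp₁ : p₁ ∉ Z) (hne : p₀ ≠ p₁)
    (d₀ d₁ : T → T → ℝ)
    (hd₀ : IsMetricOn d₀ (insert p₀ Z)) (hd₁ : IsMetricOn d₁ (insert p₁ Z))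
    (hagree : ∀ a ∈ Z, ∀ b ∈ Z, d₀ a b = d₁ a b) :
    (∀ z ∈ Z, ∀ w ∈ Z, |d₀ p₀ z - d₁ z p₁| ≤ d₀ p₀ w + d₁ w p₁) ∧
    ∀ s : ℝ, 0 < s →
      (∀ z ∈ Z, |d₀ p₀ z - d₁ z p₁| ≤ s) →
      (∀ z ∈ Z, s ≤ d₀ p₀ z + d₁ z p₁) →
      IsMetricOn
        (fun a b =>
          if (a = p₀ ∧ b = p₁) ∨ (a = p₁ ∧ b = p₀) then s
          else if a ∈ insert p₀ Z ∧ b ∈ insert p₀ Z then d₀ a b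
          else d₁ a b)
        (insert p₀ (insert p₁ Z)) :=
  one_point_amalgamation_general T Z p₀ p₁ hp₀ hp₁ hne d₀ d₁ hd₀ hd₁ hagree
end

section
/- Let B(x₁,r) be an open ball in the Urysohn space 𝕌, let N ≥ 4 and let K satisfy (N − √(N² − 4N))/2 ≤ K ≤ (N + √(N² − 4N))/2. Suppose f is an injective partial function whose domain and range are finite subsets of B(x₁,r), with x₁ in the domain, f(x₁) = x₁, and f is K-bilipschitz and N-bigood (with respect to the center x₁ and radius r). Then for every x ∈ B(x₁,r) there exists y ∈ B(x₁,r) such that the extended function f ∪ {(x,y)} is K-bilipschitz and N-bigood. -/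
open Metric Set
open scoped Classical

/-!
The image `y` of the new point `x` is specified by its distances. Let `c` be the least value of
`dist x y` that the triangle inequality allows once `dist x a / K ≤ dist y (f a) ≤ K * dist x a`
is required for all `a ∈ A`, and let the distances from `y` to `x` and to the points `f a` be the
largest `1`-Lipschitz function bounded by `c` at `x` and by `K * dist x a` at `f a`. This is a
Katětov function, so the Urysohn space realizes it, and the bilipschitz bounds hold by
construction. The bounds on `K` say `K ^ 2 + N ≤ N * K`, and this is exactly what is needed to
derive `N * c ≤ r - dist x x₁` and `N * dist y x + dist y x₁ ≤ r` from the goodness of `f` and of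
its inverse at a point of `A` where `c` is attained.
-/

section Katetov

variable {U : Type} [MetricSpace U]

abbrev katetovExtension (F : Set U) (s : U → ℝ)
    (hlip : ∀ u ∈ F, ∀ v ∈ F, s u ≤ s v + dist u v)
    (hsum : ∀ u ∈ F, ∀ v ∈ F, dist u v ≤ s u + s v)
    (hpos : ∀ u ∈ F, 0 < s u) : MetricSpace (F ⊕ Unit) where
  dist
    | .inl u, .inl v => dist (u : U) v
    | .inl u, .inr _ => s u
    | .inr _, .inl v => s v
    | .inr _, .inr _ => 0
  dist_self := by rintro (u | u) <;> simp
  dist_comm := by rintro (u | u) (v | v) <;> simp [dist_comm]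
  dist_triangle := by
    rintro (u | u) (v | v) (w | w) <;> dsimp only
    · exact dist_triangle (u : U) v w
    · linarith [hlip u u.2 v v.2, dist_comm (u : U) v]
    · exact hsum u u.2 w w.2
    · linarith [hpos u u.2]
    · linarith [hlip w w.2 v v.2, dist_comm (v : U) w]
    · linarith [hpos v v.2]
    · linarith [hpos w w.2]
    · exact (add_zero 0).ge
  eq_of_dist_eq_zero := by
    rintro (u | u) (v | v) h <;> dsimp only at h
    · exact congrArg Sum.inl (Subtype.ext (dist_eq_zero.1 h))
    · exact absurd h (hpos u u.2).ne'
    · exact absurd h (hpos v v.2).ne'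
    · rfl

theorem IsUrysohn.exists_dist_eq {F : Set U} (hU : IsUrysohn U) (hF : F.Finite) {s : U → ℝ}
    (hlip : ∀ u ∈ F, ∀ v ∈ F, s u ≤ s v + dist u v)
    (hsum : ∀ u ∈ F, ∀ v ∈ F, dist u v ≤ s u + s v) :
    ∃ y : U, ∀ u ∈ F, dist y u = s u := by
  by_cases hzero : ∃ u₀ ∈ F, s u₀ = 0
  · obtain ⟨u₀, hu₀, hs⟩ := hzero
    refine ⟨u₀, fun u hu => le_antisymm ?_ ?_⟩
    · linarith [hsum u₀ hu₀ u hu]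
    · linarith [hlip u hu u₀ hu₀, dist_comm u u₀]
  have hpos : ∀ u ∈ F, 0 < s u := fun u hu =>
    (by linarith [hsum u hu u hu, dist_self u] : 0 ≤ s u).lt_of_ne' fun h => hzero ⟨u, hu, h⟩
  have : Finite F := hF.to_subtype
  let := katetovExtension F s hlip hsum hpos
  obtain ⟨φ, hφ⟩ := hU.2.2.1 (F ⊕ Unit)
  have hinj : Function.Injective (φ ∘ Sum.inl) := hφ.injective.comp Sum.inl_injective
  -- `ψ` undoes `φ` on the copy of `F`; ultrahomogeneity extends it to a global isometry.
  set ψ := Function.extend (φ ∘ Sum.inl) Subtype.val id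
  have hψ (u : F) : ψ (φ (.inl u)) = u := hinj.extend_apply _ _ u
  obtain ⟨g, hg⟩ := hU.2.2.2 (range (φ ∘ Sum.inl)) ψ (finite_range _) <| by
    rintro _ ⟨u, rfl⟩ _ ⟨v, rfl⟩
    simp only [Function.comp_apply, hψ, hφ.dist_eq]
    rfl
  refine ⟨g (φ (.inr ())), fun u hu => ?_⟩
  have hgu : g (φ (.inl ⟨u, hu⟩)) = u := (hg _ ⟨⟨u, hu⟩, rfl⟩).trans (hψ ⟨u, hu⟩)
  calc dist (g (φ (.inr ()))) u = dist (g (φ (.inr ()))) (g (φ (.inl ⟨u, hu⟩))) := by rw [hgu]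
    _ = s u := by rw [g.dist_eq, hφ.dist_eq]; rfl

end Katetov

section ConeInf

variable {U : Type} [MetricSpace U] {P : Finset (U × ℝ)} (hP : P.Nonempty)

/-- The largest `1`-Lipschitz function that is at most `q.2` at `q.1` for every `q ∈ P`. -/
def coneInf (u : U) : ℝ := P.inf' hP fun q => q.2 + dist u q.1

theorem coneInf_le {q : U × ℝ} (hq : q ∈ P) (u : U) : coneInf hP u ≤ q.2 + dist u q.1 :=
  Finset.inf'_le _ hq

theorem coneInf_le_add_dist (u v : U) : coneInf hP u ≤ coneInf hP v + dist u v := by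
  rw [← sub_le_iff_le_add]
  refine Finset.le_inf' _ _ fun q hq => ?_
  linarith [coneInf_le hP hq u, dist_triangle u v q.1]

theorem dist_le_coneInf_add_coneInf (hP' : ∀ p ∈ P, ∀ q ∈ P, dist p.1 q.1 ≤ p.2 + q.2)
    (u v : U) : dist u v ≤ coneInf hP u + coneInf hP v := by
  obtain ⟨p, hp, hpu⟩ := Finset.exists_mem_eq_inf' hP fun q => q.2 + dist u q.1
  obtain ⟨q, hq, hqv⟩ := Finset.exists_mem_eq_inf' hP fun q => q.2 + dist v q.1
  rw [coneInf, coneInf, hpu, hqv]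
  linarith [dist_triangle4 u p.1 q.1 v, hP' p hp q hq, dist_comm v q.1]

theorem IsUrysohn.exists_dist_eq_coneInf (hU : IsUrysohn U)
    (hP' : ∀ p ∈ P, ∀ q ∈ P, dist p.1 q.1 ≤ p.2 + q.2) :
    ∃ y : U, ∀ q ∈ P, dist y q.1 = coneInf hP q.1 := by
  obtain ⟨y, hy⟩ := hU.exists_dist_eq (P.image Prod.fst).finite_toSet
    (fun u _ v _ => coneInf_le_add_dist hP u v)
    (fun u _ v _ => dist_le_coneInf_add_coneInf hP hP' u v)
  exact ⟨y, fun q hq => hy q.1 (Finset.mem_image_of_mem _ hq)⟩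

end ConeInf

section Constants

variable {N K : ℝ}

theorem sq_add_le_mul_of_mem_Icc_roots (hN : 4 ≤ N)
    (hK₁ : (N - Real.sqrt (N ^ 2 - 4 * N)) / 2 ≤ K)
    (hK₂ : K ≤ (N + Real.sqrt (N ^ 2 - 4 * N)) / 2) :
    K ^ 2 + N ≤ N * K := by
  have hsq : Real.sqrt (N ^ 2 - 4 * N) ^ 2 = N ^ 2 - 4 * N := Real.sq_sqrt (by nlinarith)
  nlinarith [mul_nonneg (sub_nonneg.2 hK₁) (sub_nonneg.2 hK₂)]

theorem one_lt_of_sq_add_le_mul (hN : 0 < N) (hKN : K ^ 2 + N ≤ N * K) : 1 < K := by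
  have hK : 0 < K := by nlinarith [sq_nonneg K]
  nlinarith [mul_pos hK hK]

theorem mul_one_div_le_sub_of_sq_add_le_mul (hN : 0 < N) (hKN : K ^ 2 + N ≤ N * K) :
    N * (1 / K) ≤ N - K := by
  rw [mul_one_div, div_le_iff₀ (zero_lt_one.trans (one_lt_of_sq_add_le_mul hN hKN))]
  linarith

theorem le_one_div_mul_iff {N a b : ℝ} (hN : 0 < N) : a ≤ 1 / N * b ↔ N * a ≤ b := by
  rw [one_div, le_inv_mul_iff₀ hN]

end Constants

section Extension

variable {U : Type} [MetricSpace U] {N K r : ℝ} {x₁ x y : U} {f : U → U} {A : Finset U}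

-- If `dist y (f a) ∈ [dist x a / K, K * dist x a]`, the triangle inequality forces
-- `bilipDefect K f x a ≤ dist x y`.
noncomputable def bilipDefect (K : ℝ) (f : U → U) (x a : U) : ℝ :=
  max (dist x (f a) - K * dist x a) (1 / K * dist x a - dist x (f a))

theorem mul_bilipDefect_le (hN : 0 < N) (hKN : K ^ 2 + N ≤ N * K) {a : U}
    (ha : N * dist a (f a) ≤ r - dist a x₁) :
    N * bilipDefect K f x a ≤ r - dist x x₁ := by
  have hK := one_lt_of_sq_add_le_mul hN hKN
  have hNK := mul_one_div_le_sub_of_sq_add_le_mul hN hKN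
  have hNK₁ : 1 ≤ N * (K - 1) := by nlinarith
  rw [bilipDefect, mul_max_of_nonneg _ _ hN.le]
  have hxa := dist_nonneg (x := x) (y := a)
  refine max_le ?_ ?_
  · nlinarith [mul_le_mul_of_nonneg_left (dist_triangle x a (f a)) hN.le, dist_triangle x a x₁,
      mul_nonneg (sub_nonneg.2 hNK₁) hxa]
  · nlinarith [mul_le_mul_of_nonneg_left (dist_triangle x (f a) a) hN.le, dist_triangle x a x₁,
      dist_comm a (f a), mul_le_mul_of_nonneg_right hNK hxa]

theorem mul_bilipDefect_add_le (hN : 0 < N) (hKN : K ^ 2 + N ≤ N * K) {a : U}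
    (ha : N * dist (f a) a ≤ r - dist (f a) x₁) :
    N * bilipDefect K f x a + (K * dist x a + dist (f a) x₁) ≤ r := by
  have hK := one_lt_of_sq_add_le_mul hN hKN
  have hNK := mul_one_div_le_sub_of_sq_add_le_mul hN hKN
  have hNK₂ : N ≤ K * (N - 1) := by nlinarith
  rw [bilipDefect, mul_max_of_nonneg _ _ hN.le, ← max_add_add_right]
  have hxa := dist_nonneg (x := x) (y := a)
  refine max_le ?_ ?_
  · nlinarith [mul_le_mul_of_nonneg_left (dist_triangle x a (f a)) hN.le, dist_comm a (f a),
      mul_nonneg (sub_nonneg.2 hNK₂) hxa]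
  · nlinarith [mul_le_mul_of_nonneg_left (dist_triangle x (f a) a) hN.le,
      mul_le_mul_of_nonneg_right hNK hxa]

noncomputable def extensionRadius (K : ℝ) (f : U → U) (A : Finset U) (x : U) : ℝ :=
  (insert 0 (A.image (bilipDefect K f x))).max' (Finset.insert_nonempty _ _)

theorem extensionRadius_nonneg : 0 ≤ extensionRadius K f A x :=
  Finset.le_max' _ _ (Finset.mem_insert_self _ _)

theorem bilipDefect_le_extensionRadius {a : U} (ha : a ∈ A) :
    bilipDefect K f x a ≤ extensionRadius K f A x :=
  Finset.le_max' _ _ (Finset.mem_insert_of_mem (Finset.mem_image_of_mem _ ha))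

theorem dist_le_extensionRadius_add {a : U} (ha : a ∈ A) :
    dist x (f a) ≤ extensionRadius K f A x + K * dist x a := by
  linarith [(le_max_left _ _).trans (bilipDefect_le_extensionRadius (K := K) (f := f) (x := x) ha)]

theorem one_div_mul_le_extensionRadius_add {a : U} (ha : a ∈ A) :
    1 / K * dist x a ≤ extensionRadius K f A x + dist x (f a) := by
  linarith [(le_max_right _ _).trans (bilipDefect_le_extensionRadius (K := K) (f := f) (x := x) ha)]

theorem extensionRadius_eq_zero_or_bilipDefect :
    extensionRadius K f A x = 0 ∨ ∃ a ∈ A, extensionRadius K f A x = bilipDefect K f x a := by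
  have := Finset.max'_mem (insert 0 (A.image (bilipDefect K f x))) (Finset.insert_nonempty _ _)
  simp only [Finset.mem_insert, Finset.mem_image] at this
  rcases this with h | ⟨a, ha, h⟩
  exacts [Or.inl h, Or.inr ⟨a, ha, h.symm⟩]

theorem extensionRadius_le (hN : 0 < N) (hKN : K ^ 2 + N ≤ N * K) (hf : NGoodOn N x₁ r f A)
    (hx : dist x x₁ ≤ r) : extensionRadius K f A x ≤ 1 / N * (r - dist x x₁) := by
  refine Finset.max'_le _ _ _ fun c hc => ?_
  rw [le_one_div_mul_iff hN]
  simp only [Finset.mem_insert, Finset.mem_image] at hc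
  rcases hc with rfl | ⟨a, ha, rfl⟩
  · linarith
  · exact mul_bilipDefect_le hN hKN ((le_one_div_mul_iff hN).1 (hf a ha))

theorem dist_le_of_dist_le_extensionRadius (hN : 0 < N) (hKN : K ^ 2 + N ≤ N * K)
    (hf : NBigoodOn N x₁ r f A) (hx : dist x x₁ ≤ r) (hyx : dist y x ≤ extensionRadius K f A x)
    (hyf : ∀ a ∈ A, dist y (f a) ≤ K * dist x a) :
    dist y x ≤ 1 / N * (r - dist y x₁) := by
  rw [le_one_div_mul_iff hN]
  have hNyx := mul_le_mul_of_nonneg_left hyx hN.le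
  rcases extensionRadius_eq_zero_or_bilipDefect (K := K) (f := f) (A := A) (x := x)
    with hc | ⟨a, ha, hc⟩
  · have hyx₀ : dist y x = 0 := le_antisymm (hc ▸ hyx) dist_nonneg
    rw [hyx₀, mul_zero]
    linarith [dist_triangle y x x₁]
  · rw [hc] at hNyx
    have := mul_bilipDefect_add_le (x := x) hN hKN ((le_one_div_mul_iff hN).1 (hf.2 a ha))
    linarith [dist_triangle y (f a) x₁, hyf a ha]

theorem IsUrysohn.exists_extension_point (hU : IsUrysohn U) (hK : 1 ≤ K)
    (hf : BilipschitzOn K f A) (x : U) :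
    ∃ y : U, dist y x ≤ extensionRadius K f A x ∧
      ∀ a ∈ A, 1 / K * dist x a ≤ dist y (f a) ∧ dist y (f a) ≤ K * dist x a := by
  set c := extensionRadius K f A x
  set P : Finset (U × ℝ) := insert (x, c) (A.image fun a => (f a, K * dist x a))
  have hP : P.Nonempty := Finset.insert_nonempty _ _
  have hc : 0 ≤ c := extensionRadius_nonneg
  have hxfa (a) (ha : a ∈ A) : dist x (f a) ≤ c + K * dist x a := dist_le_extensionRadius_add ha
  have hfab (a) (ha : a ∈ A) (b) (hb : b ∈ A) : dist (f a) (f b) ≤ K * dist x a + K * dist x b := by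
    nlinarith [(hf a ha b hb).2, dist_triangle_left a b x]
  obtain ⟨y, hy⟩ := hU.exists_dist_eq_coneInf hP <| by
    simp only [P, Finset.forall_mem_insert, Finset.forall_mem_image, dist_self]
    refine ⟨⟨by linarith, fun b hb => hxfa b hb⟩, fun a ha =>
      ⟨?_, fun b hb => hfab a ha b hb⟩⟩
    linarith [hxfa a ha, dist_comm x (f a)]
  have hyP (q) (hq : q ∈ P) : dist y q.1 ≤ q.2 := by
    simpa only [hy q hq, dist_self, add_zero] using coneInf_le hP hq q.1
  have hfaP (a) (ha : a ∈ A) : (f a, K * dist x a) ∈ P :=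
    Finset.mem_insert_of_mem (Finset.mem_image_of_mem _ ha)
  refine ⟨y, hyP _ (Finset.mem_insert_self _ _), fun a ha => ⟨?_, hyP _ (hfaP a ha)⟩⟩
  rw [hy _ (hfaP a ha)]
  refine Finset.le_inf' _ _ ?_
  simp only [P, Finset.forall_mem_insert, Finset.forall_mem_image]
  refine ⟨?_, fun b hb => ?_⟩
  · have : 1 / K * dist x a ≤ c + dist x (f a) := one_div_mul_le_extensionRadius_add ha
    linarith [dist_comm x (f a)]
  · have hK₀ : 0 ≤ 1 / K := by positivity
    have hK' : 1 / K ≤ K := by rw [div_le_iff₀ (by linarith)]; nlinarith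
    linarith [(hf b hb a ha).1, mul_le_mul_of_nonneg_left (dist_triangle x b a) hK₀,
      mul_le_mul_of_nonneg_right hK' (dist_nonneg (x := x) (y := b)), dist_comm (f a) (f b)]

theorem BilipschitzOn.update_insert (hf : BilipschitzOn K f A)
    (hy : ∀ a ∈ A, 1 / K * dist x a ≤ dist y (f a) ∧ dist y (f a) ≤ K * dist x a) :
    BilipschitzOn K (Function.update f x y) (insert x A) := by
  intro u hu v hv
  simp only [Function.update_apply]
  split_ifs with hux hvx hvx
  · simp [hux, hvx]
  · subst hux
    exact hy v (hv.resolve_left hvx)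
  · subst hvx
    rw [dist_comm u, dist_comm _ y]
    exact hy u (hu.resolve_left hux)
  · exact hf u (hu.resolve_left hux) v (hv.resolve_left hvx)

theorem NBigoodOn.update_insert (hf : NBigoodOn N x₁ r f A)
    (hxy : dist x y ≤ 1 / N * (r - dist x x₁)) (hyx : dist y x ≤ 1 / N * (r - dist y x₁)) :
    NBigoodOn N x₁ r (Function.update f x y) (insert x A) := by
  refine ⟨fun z hz => ?_, fun z hz => ?_⟩ <;> rcases eq_or_ne z x with rfl | hzx
  · simpa using hxy
  · simpa [hzx] using hf.1 z (hz.resolve_left hzx)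
  · simpa using hyx
  · simpa [hzx] using hf.2 z (hz.resolve_left hzx)

theorem mem_ball_of_dist_le_one_div_mul (hN : 1 < N) (hx : x ∈ ball x₁ r)
    (hy : dist y x ≤ 1 / N * (r - dist x x₁)) : y ∈ ball x₁ r := by
  rw [mem_ball] at hx ⊢
  have : 1 / N * (r - dist x x₁) < r - dist x x₁ := by
    rw [one_div_mul_eq_div, div_lt_iff₀ (by linarith)]
    nlinarith
  linarith [dist_triangle y x x₁]

end Extension

theorem one_point_bilipschitz_extension_general (U : Type) [MetricSpace U] (hU : IsUrysohn U)
    (x₁ : U) (r : ℝ) (N K : ℝ) (hN : 4 ≤ N)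
    (hK₁ : (N - Real.sqrt (N ^ 2 - 4 * N)) / 2 ≤ K)
    (hK₂ : K ≤ (N + Real.sqrt (N ^ 2 - 4 * N)) / 2)
    (A : Set U) (hAfin : A.Finite)
    (f : U → U)
    (hbil : BilipschitzOn K f A) (hgood : NBigoodOn N x₁ r f A) :
    ∀ x ∈ ball x₁ r, ∃ y ∈ ball x₁ r,
      BilipschitzOn K (Function.update f x y) (insert x A) ∧
      NBigoodOn N x₁ r (Function.update f x y) (insert x A) := by
  intro x hx
  lift A to Finset U using hAfin
  have hN₀ : 0 < N := by linarith
  have hKN := sq_add_le_mul_of_mem_Icc_roots hN hK₁ hK₂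
  have hK := one_lt_of_sq_add_le_mul hN₀ hKN
  have hxx₁ : dist x x₁ ≤ r := (mem_ball.1 hx).le
  obtain ⟨y, hyx, hyf⟩ := hU.exists_extension_point hK.le hbil x
  have hyx' := hyx.trans (extensionRadius_le hN₀ hKN hgood.1 hxx₁)
  refine ⟨y, mem_ball_of_dist_le_one_div_mul (by linarith) hx hyx', hbil.update_insert hyf,
    hgood.update_insert (dist_comm x y ▸ hyx') ?_⟩
  exact dist_le_of_dist_le_extensionRadius hN₀ hKN hgood hxx₁ hyx fun a ha => (hyf a ha).2

/-- One-point extension of a finite `(K,N)`-compliant function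
(Lemma 2.4 of the paper). -/
theorem one_point_bilipschitz_extension (U : Type) [MetricSpace U] (hU : IsUrysohn U)
    (x₁ : U) (r : ℝ) (hr : 0 < r) (N K : ℝ) (hN : 4 ≤ N)
    (hK₁ : (N - Real.sqrt (N ^ 2 - 4 * N)) / 2 ≤ K)
    (hK₂ : K ≤ (N + Real.sqrt (N ^ 2 - 4 * N)) / 2)
    (A : Set U) (hAfin : A.Finite) (hx₁A : x₁ ∈ A) (hAsub : A ⊆ ball x₁ r)
    (f : U → U) (hmap : MapsTo f A (ball x₁ r)) (hinj : InjOn f A)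
    (hfx : f x₁ = x₁)
    (hbil : BilipschitzOn K f A) (hgood : NBigoodOn N x₁ r f A) :
    ∀ x ∈ ball x₁ r, ∃ y ∈ ball x₁ r,
      BilipschitzOn K (Function.update f x y) (insert x A) ∧
      NBigoodOn N x₁ r (Function.update f x y) (insert x A) :=
  one_point_bilipschitz_extension_general U hU x₁ r N K hN hK₁ hK₂ A hAfin f hbil hgood
end

section
/- One-point extension lemma for bicontinuous maps: Let α, β be moduli of continuity satisfying α⁻¹(s) + β(t) ≥ α⁻¹(s+t) for all s,t ≥ 0. Let X ∪ {p} (with p ∉ X) and Y be finite metric spaces and let f : X → Y be a (β,α)-bicontinuous bijection. Let q ∉ Y. Then the formula d(q,y) = min{ d(f(z),y) + β(d(z,p)) : z ∈ X } defines a metric on Y ∪ {q} extending the metric of Y, and with this metric the map f ∪ {(p,q)} : X ∪ {p} → Y ∪ {q} is (β,α)-bicontinuous. -/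
open Set
open scoped Classical

/-- A modulus of continuity: a concave homeomorphism of `[0,∞)` onto itself. -/
def IsModulus (α : ℝ → ℝ) : Prop :=
  α 0 = 0 ∧ StrictMonoOn α (Set.Ici (0 : ℝ)) ∧
  MapsTo α (Set.Ici (0 : ℝ)) (Set.Ici (0 : ℝ)) ∧
  SurjOn α (Set.Ici (0 : ℝ)) (Set.Ici (0 : ℝ)) ∧
  ConcaveOn ℝ (Set.Ici (0 : ℝ)) α

/-- `αi` is the inverse of the modulus of continuity `α` on `[0,∞)`. -/
def IsMCInverse (α αi : ℝ → ℝ) : Prop :=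
  (∀ t ∈ Set.Ici (0 : ℝ), αi (α t) = t) ∧
  (∀ t ∈ Set.Ici (0 : ℝ), α (αi t) = t) ∧
  MapsTo αi (Set.Ici (0 : ℝ)) (Set.Ici (0 : ℝ))

/-- `f` is `(β,α)`-bicontinuous on `A` with respect to the distance functions
`dX`, `dY`, where `αi` denotes the inverse of `α`:
`α⁻¹(dX(u,v)) ≤ dY(f u, f v) ≤ β(dX(u,v))`. -/
def BicontOnD {T S : Type} (β αi : ℝ → ℝ) (dX : T → T → ℝ) (dY : S → S → ℝ)
    (f : T → S) (A : Set T) : Prop :=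
  ∀ u ∈ A, ∀ v ∈ A, αi (dX u v) ≤ dY (f u) (f v) ∧ dY (f u) (f v) ≤ β (dX u v)

/-- One-point extension lemma for `(β,α)`-bicontinuous maps between finite
metric spaces (Lemma 3.1 of the paper). -/
theorem one_point_extension_bicontinuous (T S : Type) (α β αi : ℝ → ℝ)
    (hα : IsModulus α) (hβ : IsModulus β) (hαi : IsMCInverse α αi)
    (hstar : ∀ s t : ℝ, 0 ≤ s → 0 ≤ t → αi (s + t) ≤ αi s + β t)
    (X : Set T) (p : T) (hp : p ∉ X) (hXfin : X.Finite) (hXne : X.Nonempty)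
    (dX : T → T → ℝ) (hdX : IsMetricOn dX (insert p X))
    (Y : Set S) (q : S) (hq : q ∉ Y) (hYfin : Y.Finite)
    (dY : S → S → ℝ) (hdY : IsMetricOn dY Y)
    (f : T → S) (hf : BijOn f X Y)
    (hbc : BicontOnD β αi dX dY f X)
    (D : S → S → ℝ)
    (hD : ∀ a b : S,
      D a b =
        if a ∈ Y ∧ b ∈ Y then dY a b
        else if a = q ∧ b = q then 0
        else if a = q then sInf ((fun z => dY (f z) b + β (dX z p)) '' X)
        else sInf ((fun z => dY (f z) a + β (dX z p)) '' X)) :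
    IsMetricOn D (insert q Y) ∧
    (∀ a ∈ Y, ∀ b ∈ Y, D a b = dY a b) ∧
    BicontOnD β αi dX D (Function.update f p q) (insert p X) := by
  obtain ⟨hα0, hαmono, hαmaps, hαsurj, hαconc⟩ := hα
  obtain ⟨hβ0, hβmono, hβmaps, hβsurj, hβconc⟩ := hβ
  obtain ⟨hαi1, hαi2, hαimaps⟩ := hαi
  obtain ⟨hdX0, hdXpos, hdXsymm, hdXtri⟩ := hdX
  obtain ⟨hdY0, hdYpos, hdYsymm, hdYtri⟩ := hdY
  -- basic facts about β
  have hβnn : ∀ t, 0 ≤ t → 0 ≤ β t := fun t ht => hβmaps ht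
  have hβm : ∀ s t, 0 ≤ s → s ≤ t → β s ≤ β t := fun s t hs hst =>
    hβmono.monotoneOn hs (le_trans hs hst) hst
  have hβpos : ∀ t, 0 < t → 0 < β t := by
    intro t ht
    have := hβmono (le_refl (0:ℝ)) (le_of_lt ht) ht
    rwa [hβ0] at this
  have hβsub : ∀ s t, 0 ≤ s → 0 ≤ t → β (s + t) ≤ β s + β t := by
    intro s t hs ht
    by_cases h : s + t = 0
    · have hs0 : s = 0 := by linarith
      have ht0 : t = 0 := by linarith
      simp [hs0, ht0, hβ0]
    · have hpos : 0 < s + t := lt_of_le_of_ne (add_nonneg hs ht) (Ne.symm h)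
      have h1 := hβconc.2 (add_nonneg hs ht) (le_refl (0:ℝ))
        (div_nonneg hs hpos.le) (div_nonneg ht hpos.le)
        (by field_simp)
      have h2 := hβconc.2 (add_nonneg hs ht) (le_refl (0:ℝ))
        (div_nonneg ht hpos.le) (div_nonneg hs hpos.le)
        (by field_simp; ring)
      rw [smul_eq_mul, smul_eq_mul, smul_eq_mul, smul_eq_mul] at h1 h2
      have e1 : s / (s + t) * (s + t) + t / (s + t) * 0 = s := by field_simp; ring
      have e2 : t / (s + t) * (s + t) + s / (s + t) * 0 = t := by field_simp; ring
      rw [e1, hβ0] at h1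
      rw [e2, hβ0] at h2
      have : (s / (s+t) + t / (s+t)) * β (s+t) ≤ β s + β t := by nlinarith
      have e3 : s / (s+t) + t / (s+t) = 1 := by field_simp
      rw [e3, one_mul] at this
      exact this
  -- basic facts about αi
  have hαinn : ∀ t, 0 ≤ t → 0 ≤ αi t := fun t ht => hαimaps ht
  have hαi0 : αi 0 = 0 := by
    have := hαi1 0 (le_refl (0:ℝ))
    rwa [hα0] at this
  have hαim : ∀ s t, 0 ≤ s → s ≤ t → αi s ≤ αi t := by
    intro s t hs hst
    by_contra hlt
    push_neg at hlt
    have := hαmono (hαimaps (le_trans hs hst)) (hαimaps hs) hlt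
    rw [hαi2 s hs, hαi2 t (le_trans hs hst)] at this
    linarith
  -- nonnegativity of the metrics
  have hdXnn : ∀ a ∈ insert p X, ∀ b ∈ insert p X, 0 ≤ dX a b := by
    intro a ha b hb
    by_cases hab : a = b
    · subst hab; rw [hdX0 a ha]
    · exact (hdXpos a ha b hb hab).le
  have hdYnn : ∀ a ∈ Y, ∀ b ∈ Y, 0 ≤ dY a b := by
    intro a ha b hb
    by_cases hab : a = b
    · subst hab; rw [hdY0 a ha]
    · exact (hdYpos a ha b hb hab).le
  have hpX : p ∈ insert p X := mem_insert p X
  have hmemX : ∀ z ∈ X, z ∈ insert p X := fun z hz => mem_insert_of_mem p hz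
  have hfY : ∀ z ∈ X, f z ∈ Y := fun z hz => hf.1 hz
  -- the extension function e
  set e : S → ℝ := fun y => sInf ((fun z => dY (f z) y + β (dX z p)) '' X) with he
  have himfin : ∀ y : S, ((fun z => dY (f z) y + β (dX z p)) '' X).Finite :=
    fun y => hXfin.image _
  have himne : ∀ y : S, ((fun z => dY (f z) y + β (dX z p)) '' X).Nonempty :=
    fun y => hXne.image _
  have hemem : ∀ y : S, ∃ z ∈ X, e y = dY (f z) y + β (dX z p) := by
    intro y
    have := (himne y).csInf_mem (himfin y)
    obtain ⟨z, hz, hzeq⟩ := this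
    exact ⟨z, hz, hzeq.symm⟩
  have hele : ∀ y : S, ∀ z ∈ X, e y ≤ dY (f z) y + β (dX z p) := by
    intro y z hz
    exact csInf_le (himfin y).bddBelow ⟨z, hz, rfl⟩
  have heub : ∀ (y : S) (c : ℝ), (∀ z ∈ X, c ≤ dY (f z) y + β (dX z p)) → c ≤ e y := by
    intro y c hc
    apply le_csInf (himne y)
    rintro b ⟨z, hz, rfl⟩
    exact hc z hz
  -- e is positive on Y
  have hepos : ∀ y ∈ Y, 0 < e y := by
    intro y hy
    obtain ⟨z, hz, hzeq⟩ := hemem y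
    rw [hzeq]
    have h1 : 0 ≤ dY (f z) y := hdYnn _ (hfY z hz) y hy
    have h2 : 0 < β (dX z p) := by
      apply hβpos
      apply hdXpos z (hmemX z hz) p hpX
      intro hzp; exact hp (hzp ▸ hz)
    linarith
  have henn : ∀ y ∈ Y, 0 ≤ e y := fun y hy => (hepos y hy).le
  -- values of D
  have hne_q : ∀ y ∈ Y, y ≠ q := fun y hy hyq => hq (hyq ▸ hy)
  have hDY : ∀ a ∈ Y, ∀ b ∈ Y, D a b = dY a b := by
    intro a ha b hb; rw [hD]; simp [ha, hb]
  have hDqq : D q q = 0 := by rw [hD]; simp [hq]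
  have hDqy : ∀ y ∈ Y, D q y = e y := by
    intro y hy; rw [hD]; simp [hq, hne_q y hy, he]
  have hDyq : ∀ y ∈ Y, D y q = e y := by
    intro y hy; rw [hD]; simp [hq, hne_q y hy, he]
  -- key triangle facts for e
  have heY : ∀ y ∈ Y, ∀ y' ∈ Y, e y ≤ e y' + dY y' y := by
    intro y hy y' hy'
    obtain ⟨z, hz, hzeq⟩ := hemem y'
    have h1 := hele y z hz
    have h2 := hdYtri (f z) (hfY z hz) y' hy' y hy
    linarith
  have heYY : ∀ y ∈ Y, ∀ y' ∈ Y, dY y y' ≤ e y + e y' := by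
    intro y hy y' hy'
    obtain ⟨z, hz, hzeq⟩ := hemem y
    obtain ⟨w, hw, hweq⟩ := hemem y'
    have h1 : dY y y' ≤ dY y (f z) + dY (f z) y' :=
      hdYtri y hy (f z) (hfY z hz) y' hy'
    have h2 : dY (f z) y' ≤ dY (f z) (f w) + dY (f w) y' :=
      hdYtri (f z) (hfY z hz) (f w) (hfY w hw) y' hy'
    have h3 : dY (f z) (f w) ≤ β (dX z w) := (hbc z hz w hw).2
    have h4 : dX z w ≤ dX z p + dX p w :=
      hdXtri z (hmemX z hz) p hpX w (hmemX w hw)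
    have h5 : β (dX z w) ≤ β (dX z p + dX p w) :=
      hβm _ _ (hdXnn z (hmemX z hz) w (hmemX w hw)) h4
    have h6 : β (dX z p + dX p w) ≤ β (dX z p) + β (dX p w) :=
      hβsub _ _ (hdXnn z (hmemX z hz) p hpX) (hdXnn p hpX w (hmemX w hw))
    have h7 : dX p w = dX w p := hdXsymm p hpX w (hmemX w hw)
    have h8 : dY y (f z) = dY (f z) y := hdYsymm y hy (f z) (hfY z hz)
    rw [h7] at h5 h6
    linarith
  refine ⟨⟨?_, ?_, ?_, ?_⟩, hDY, ?_⟩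
  · -- D a a = 0
    intro a ha
    rcases ha with rfl | ha
    · exact hDqq
    · rw [hDY a ha a ha]; exact hdY0 a ha
  · -- positivity
    intro a ha b hb hab
    rcases ha with rfl | ha
    · rcases hb with rfl | hb
      · exact absurd rfl hab
      · rw [hDqy b hb]; exact hepos b hb
    · rcases hb with rfl | hb
      · rw [hDyq a ha]; exact hepos a ha
      · rw [hDY a ha b hb]; exact hdYpos a ha b hb hab
  · -- symmetry
    intro a ha b hb
    rcases ha with rfl | ha
    · rcases hb with rfl | hb
      · rfl
      · rw [hDqy b hb, hDyq b hb]
    · rcases hb with rfl | hb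
      · rw [hDqy a ha, hDyq a ha]
      · rw [hDY a ha b hb, hDY b hb a ha]; exact hdYsymm a ha b hb
  · -- triangle
    intro a ha b hb c hc
    rcases ha with rfl | ha
    · rcases hb with rfl | hb
      · rcases hc with rfl | hc
        · simp [hDqq]
        · rw [hDqq, hDqy c hc]; linarith
      · rcases hc with rfl | hc
        · rw [hDqq, hDqy b hb, hDyq b hb]
          have := henn b hb; linarith
        · rw [hDqy c hc, hDqy b hb, hDY b hb c hc]
          exact heY c hc b hb
    · rcases hb with rfl | hb
      · rcases hc with rfl | hc
        · rw [hDyq a ha, hDqq]; linarith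
        · rw [hDyq a ha, hDqy c hc, hDY a ha c hc]
          exact heYY a ha c hc
      · rcases hc with rfl | hc
        · rw [hDyq a ha, hDyq b hb, hDY a ha b hb]
          obtain ⟨z, hz, hzeq⟩ := hemem b
          have h1 := hele a z hz
          have h2 := hdYtri (f z) (hfY z hz) b hb a ha
          have h3 : dY a b = dY b a := hdYsymm a ha b hb
          linarith
        · rw [hDY a ha b hb, hDY b hb c hc, hDY a ha c hc]
          exact hdYtri a ha b hb c hc
  · -- bicontinuity
    intro u hu v hv
    have key : ∀ v ∈ X, αi (dX p v) ≤ e (f v) ∧ e (f v) ≤ β (dX p v) := by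
      intro v hv
      constructor
      · apply heub
        intro z hz
        have h1 : dX p v ≤ dX p z + dX z v :=
          hdXtri p hpX z (hmemX z hz) v (hmemX v hv)
        have h1' : dX p z = dX z p := hdXsymm p hpX z (hmemX z hz)
        have h2 : αi (dX p v) ≤ αi (dX z v + dX z p) := by
          apply hαim _ _ (hdXnn p hpX v (hmemX v hv))
          rw [h1'] at h1; linarith
        have h3 : αi (dX z v + dX z p) ≤ αi (dX z v) + β (dX z p) :=
          hstar _ _ (hdXnn z (hmemX z hz) v (hmemX v hv))
            (hdXnn z (hmemX z hz) p hpX)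
        have h4 : αi (dX z v) ≤ dY (f z) (f v) := (hbc z hz v hv).1
        linarith
      · have h1 := hele (f v) v hv
        rw [hdY0 (f v) (hfY v hv)] at h1
        have h2 : dX v p = dX p v := hdXsymm v (hmemX v hv) p hpX
        rw [h2] at h1; linarith
    by_cases hup : u = p
    · by_cases hvp : v = p
      · rw [hup, hvp, Function.update_self, hDqq, hdX0 p hpX, hαi0, hβ0]
        exact ⟨le_refl 0, le_refl 0⟩
      · have hv' : v ∈ X := hv.resolve_left hvp
        rw [hup, Function.update_self, Function.update_of_ne hvp,
          hDqy (f v) (hfY v hv')]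
        exact key v hv'
    · have hu' : u ∈ X := hu.resolve_left hup
      by_cases hvp : v = p
      · rw [hvp, Function.update_self, Function.update_of_ne hup,
          hDyq (f u) (hfY u hu')]
        have h2 : dX u p = dX p u := hdXsymm u (hmemX u hu') p hpX
        rw [h2]
        exact key u hu'
      · have hv' : v ∈ X := hv.resolve_left hvp
        rw [Function.update_of_ne hup, Function.update_of_ne hvp,
          hDY (f u) (hfY u hu') (f v) (hfY v hv')]
        exact hbc u hu' v hv'
end

section
/- Let α, β be compatible moduli of continuity. Then every (β,α)-bicontinuous bijection between finite subsets of the Urysohn space 𝕌 can be extended to a (β,α)-bicontinuous homeomorphism of 𝕌 onto itself. -/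
open Metric Set
open scoped Classical

variable {U : Type} [MetricSpace U]


/-- distance on the one-point extension `Option ↥S`. -/
def optDist (S : Set U) (r : U → ℝ) : Option ↥S → Option ↥S → ℝ
  | some a, some b => dist (a : U) (b : U)
  | some a, none => r a
  | none, some b => r b
  | none, none => 0

def optMetric (S : Set U) (r : U → ℝ)
    (hpos : ∀ b ∈ S, 0 < r b)
    (htri1 : ∀ b ∈ S, ∀ b' ∈ S, r b ≤ dist b b' + r b')
    (htri2 : ∀ b ∈ S, ∀ b' ∈ S, dist b b' ≤ r b + r b') :
    MetricSpace (Option ↥S) where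
  dist := optDist S r
  dist_self o := by cases o <;> simp [optDist]
  dist_comm o o' := by cases o <;> cases o' <;> simp [optDist, dist_comm]
  dist_triangle o o' o'' := by
    cases o with
    | none =>
      cases o' with
      | none =>
        cases o'' with
        | none => simp [optDist]
        | some c => simp [optDist]
      | some b =>
        cases o'' with
        | none =>
          show (0:ℝ) ≤ r b + r b
          have := (hpos b b.2).le; linarith
        | some c =>
          show r (c:U) ≤ r b + dist (b:U) c
          have := htri1 (c:U) c.2 b b.2
          rw [dist_comm] at this; linarith
    | some a =>
      cases o' with
      | none =>
        cases o'' with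
        | none => show r (a:U) ≤ r a + 0; linarith
        | some c => exact htri2 a a.2 c c.2
      | some b =>
        cases o'' with
        | none => exact htri1 a a.2 b b.2
        | some c => exact dist_triangle (a:U) b c
  eq_of_dist_eq_zero {o o'} h := by
    cases o with
    | none =>
      cases o' with
      | none => rfl
      | some b =>
        have h' : r (b:U) = 0 := h
        exact absurd h' (ne_of_gt (hpos b b.2))
    | some a =>
      cases o' with
      | none =>
        have h' : r (a:U) = 0 := h
        exact absurd h' (ne_of_gt (hpos a a.2))
      | some b =>
        have : (a:U) = b := by
          have : dist (a:U) (b:U) = 0 := h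
          exact dist_eq_zero.mp this
        exact congrArg some (Subtype.ext this)

/-- Finite injectivity of the Urysohn space. -/
lemma urysohn_one_point (hU : IsUrysohn U) (S : Set U) (hS : S.Finite)
    (r : U → ℝ) (hpos : ∀ b ∈ S, 0 < r b)
    (htri1 : ∀ b ∈ S, ∀ b' ∈ S, r b ≤ dist b b' + r b')
    (htri2 : ∀ b ∈ S, ∀ b' ∈ S, dist b b' ≤ r b + r b') :
    ∃ y : U, y ∉ S ∧ ∀ b ∈ S, dist y b = r b := by
  letI : MetricSpace (Option ↥S) := optMetric S r hpos htri1 htri2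
  haveI : Finite ↥S := hS.to_subtype
  haveI : Countable (Option ↥S) := inferInstance
  haveI : TopologicalSpace.SeparableSpace (Option ↥S) :=
    ⟨⟨Set.univ, Set.countable_univ, dense_univ⟩⟩
  obtain ⟨e, he⟩ := hU.2.2.1 (Option ↥S)
  have heinj : Function.Injective e := he.injective
  -- the partial isometric correction map
  classical
  by_cases hne : Nonempty U
  swap
  · exact absurd (Nonempty.intro (e none)) hne
  set φ : U → U := fun u =>
    if h : ∃ b : ↥S, e (some b) = u then (h.choose : U) else u with hφ
  have hA'fin : (Set.range (fun b : ↥S => e (some b))).Finite := Set.finite_range _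
  have hφiso : ∀ u ∈ Set.range (fun b : ↥S => e (some b)),
      ∀ v ∈ Set.range (fun b : ↥S => e (some b)), dist (φ u) (φ v) = dist u v := by
    rintro u ⟨b, rfl⟩ v ⟨b', rfl⟩
    have hu : ∃ c : ↥S, e (some c) = e (some b) := ⟨b, rfl⟩
    have hv : ∃ c : ↥S, e (some c) = e (some b') := ⟨b', rfl⟩
    simp only [hφ, dif_pos hu, dif_pos hv]
    have h1 : e (some hu.choose) = e (some b) := hu.choose_spec
    have h2 : e (some hv.choose) = e (some b') := hv.choose_spec
    calc dist (hu.choose : U) (hv.choose : U)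
        = dist (some hu.choose : Option ↥S) (some hv.choose) := rfl
      _ = dist (e (some hu.choose)) (e (some hv.choose)) := (he.dist_eq _ _).symm
      _ = dist (e (some b)) (e (some b')) := by rw [h1, h2]
  obtain ⟨g, hg⟩ := hU.2.2.2 _ φ hA'fin hφiso
  have hgb : ∀ b : ↥S, g (e (some b)) = (b : U) := by
    intro b
    have hb : ∃ c : ↥S, e (some c) = e (some b) := ⟨b, rfl⟩
    have := hg (e (some b)) ⟨b, rfl⟩
    rw [this, hφ]
    simp only [dif_pos hb]
    have h1 : e (some hb.choose) = e (some b) := hb.choose_spec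
    have : some hb.choose = some b := heinj h1
    have : hb.choose = b := Option.some_injective _ this
    rw [this]
  refine ⟨g (e none), ?_, ?_⟩
  · intro hyS
    have h := hgb ⟨_, hyS⟩
    have : e none = e (some ⟨_, hyS⟩) := g.injective (by rw [h])
    exact Option.some_ne_none _ (heinj this).symm
  · intro b hb
    have : dist (g (e none)) (g (e (some ⟨b, hb⟩))) = dist (e none) (e (some ⟨b, hb⟩)) :=
      g.isometry.dist_eq _ _
    rw [hgb ⟨b, hb⟩] at this
    rw [this, he.dist_eq]
    rfl


/-- Subadditivity of a concave modulus. -/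
lemma modulus_subadd {β : ℝ → ℝ} (hβ0 : β 0 = 0)
    (hconc : ConcaveOn ℝ (Set.Ici (0:ℝ)) β)
    (hnn : ∀ t, 0 ≤ t → 0 ≤ β t) :
    ∀ s t : ℝ, 0 ≤ s → 0 ≤ t → β (s + t) ≤ β s + β t := by
  intro s t hs ht
  rcases eq_or_lt_of_le (add_nonneg hs ht) with h | h
  · have hs0 : s = 0 := by linarith
    have ht0 : t = 0 := by linarith
    simp [hs0, ht0, hβ0]
  · set c := s + t with hc
    have h1 : (s / c) • β c + (t / c) • β 0 ≤ β ((s / c) • c + (t / c) • 0) :=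
      hconc.2 (by exact le_of_lt h) (le_refl (0:ℝ) |>.trans_eq rfl)
        (div_nonneg hs h.le) (div_nonneg ht h.le) (by field_simp; try linarith)
    have h2 : (t / c) • β c + (s / c) • β 0 ≤ β ((t / c) • c + (s / c) • 0) :=
      hconc.2 (le_of_lt h) (Set.mem_Ici.mpr le_rfl) (div_nonneg ht h.le) (div_nonneg hs h.le) (by field_simp; try linarith)
    have e1 : (s / c) • c + (t / c) • (0:ℝ) = s := by
      rw [smul_eq_mul, smul_eq_mul, mul_zero, add_zero, div_mul_cancel₀ s h.ne']
    have e2 : (t / c) • c + (s / c) • (0:ℝ) = t := by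
      rw [smul_eq_mul, smul_eq_mul, mul_zero, add_zero, div_mul_cancel₀ t h.ne']
    rw [e1] at h1; rw [e2] at h2
    simp only [hβ0, smul_eq_mul, mul_zero, add_zero] at h1 h2
    have : (s / c) * β c + (t / c) * β c ≤ β s + β t := by linarith
    have e3 : (s / c) * β c + (t / c) * β c = β c := by field_simp; ring
    linarith [e3 ▸ this]

/-- One-point extension of a finite bicontinuous map in the Urysohn space. -/
lemma one_point_ext (hU : IsUrysohn U)
    (α' β' αi' : ℝ → ℝ)
    (hαimono : MonotoneOn αi' (Set.Ici 0)) (hαipos : ∀ t : ℝ, 0 < t → 0 < αi' t)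
    (hβnn : ∀ t : ℝ, 0 ≤ t → 0 ≤ β' t) (hβmono : MonotoneOn β' (Set.Ici 0))
    (hβsub : ∀ s t : ℝ, 0 ≤ s → 0 ≤ t → β' (s + t) ≤ β' s + β' t)
    (hαiβ : ∀ s t : ℝ, 0 ≤ s → 0 ≤ t → αi' (s + t) ≤ αi' s + β' t)
    (A : Set U) (hA : A.Finite) (f : U → U)
    (hbc : ∀ u ∈ A, ∀ v ∈ A, αi' (dist u v) ≤ dist (f u) (f v) ∧ dist (f u) (f v) ≤ β' (dist u v))
    (x : U) (hx : x ∉ A) :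
    ∃ y : U, y ∉ f '' A ∧
      ∀ a ∈ A, αi' (dist x a) ≤ dist y (f a) ∧ dist y (f a) ≤ β' (dist x a) := by
  classical
  rcases A.eq_empty_or_nonempty with rfl | hAne
  · exact ⟨x, by simp, by simp⟩
  have hT : hA.toFinset.Nonempty := by
    rwa [Set.Finite.toFinset_nonempty]
  set r : U → ℝ := fun b => hA.toFinset.inf' hT (fun a' => β' (dist x a') + dist (f a') b)
    with hr
  -- lower bound : αi' (dist x a) ≤ r (f a) for a ∈ A
  have hlow : ∀ a ∈ A, αi' (dist x a) ≤ r (f a) := by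
    intro a ha
    apply Finset.le_inf'
    intro a' ha'
    rw [Set.Finite.mem_toFinset] at ha'
    have h1 : dist x a ≤ dist a' a + dist x a' := by
      have := dist_triangle x a' a
      linarith [this]
    have h2 : αi' (dist x a) ≤ αi' (dist a' a + dist x a') :=
      hαimono (Set.mem_Ici.mpr dist_nonneg)
        (Set.mem_Ici.mpr (by positivity)) h1
    have h3 : αi' (dist a' a + dist x a') ≤ αi' (dist a' a) + β' (dist x a') :=
      hαiβ _ _ dist_nonneg dist_nonneg
    have h4 : αi' (dist a' a) ≤ dist (f a') (f a) := (hbc a' ha' a ha).1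
    linarith
  have hupp : ∀ a ∈ A, r (f a) ≤ β' (dist x a) := by
    intro a ha
    have hmem : a ∈ hA.toFinset := (Set.Finite.mem_toFinset hA).mpr ha
    calc r (f a) ≤ β' (dist x a) + dist (f a) (f a) := Finset.inf'_le _ hmem
      _ = β' (dist x a) := by simp
  -- Katetov conditions on S := f '' A
  have hpos : ∀ b ∈ f '' A, 0 < r b := by
    rintro b ⟨a, ha, rfl⟩
    refine lt_of_lt_of_le (hαipos _ ?_) (hlow a ha)
    rw [dist_pos]; exact fun h => hx (h ▸ ha)
  have hlip : ∀ b b' : U, r b ≤ dist b b' + r b' := by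
    intro b b'
    obtain ⟨a₂, ha₂, hmin⟩ := Finset.exists_mem_eq_inf' hT (fun a' => β' (dist x a') + dist (f a') b')
    rw [hr]
    calc hA.toFinset.inf' hT (fun a' => β' (dist x a') + dist (f a') b)
        ≤ β' (dist x a₂) + dist (f a₂) b := Finset.inf'_le _ ha₂
      _ ≤ β' (dist x a₂) + (dist (f a₂) b' + dist b' b) := by
          linarith [dist_triangle (f a₂) b' b]
      _ = (β' (dist x a₂) + dist (f a₂) b') + dist b b' := by rw [dist_comm b' b]; ring
      _ = dist b b' + r b' := by rw [← hmin]; ring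
  have htri1 : ∀ b ∈ f '' A, ∀ b' ∈ f '' A, r b ≤ dist b b' + r b' := fun b _ b' _ => hlip b b'
  have htri2 : ∀ b ∈ f '' A, ∀ b' ∈ f '' A, dist b b' ≤ r b + r b' := by
    intro b hb b' hb'
    obtain ⟨a₁, ha₁, hmin₁⟩ := Finset.exists_mem_eq_inf' hT (fun a' => β' (dist x a') + dist (f a') b)
    obtain ⟨a₂, ha₂, hmin₂⟩ := Finset.exists_mem_eq_inf' hT (fun a' => β' (dist x a') + dist (f a') b')
    rw [Set.Finite.mem_toFinset] at ha₁ ha₂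
    have h1 : dist b b' ≤ dist b (f a₁) + dist (f a₁) (f a₂) + dist (f a₂) b' :=
      dist_triangle4 b (f a₁) (f a₂) b'
    have h2 : dist (f a₁) (f a₂) ≤ β' (dist a₁ a₂) := (hbc a₁ ha₁ a₂ ha₂).2
    have h3 : dist a₁ a₂ ≤ dist x a₁ + dist x a₂ := by
      have := dist_triangle a₁ x a₂
      rw [dist_comm a₁ x] at this
      linarith
    have h4 : β' (dist a₁ a₂) ≤ β' (dist x a₁ + dist x a₂) :=
      hβmono (Set.mem_Ici.mpr dist_nonneg)
        (Set.mem_Ici.mpr (by positivity)) h3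
    have h5 : β' (dist x a₁ + dist x a₂) ≤ β' (dist x a₁) + β' (dist x a₂) :=
      hβsub _ _ dist_nonneg dist_nonneg
    have e1 : r b = β' (dist x a₁) + dist (f a₁) b := hmin₁
    have e2 : r b' = β' (dist x a₂) + dist (f a₂) b' := hmin₂
    rw [e1, e2, dist_comm b (f a₁)] at *
    linarith
  obtain ⟨y, hyS, hyd⟩ := urysohn_one_point hU (f '' A) (hA.image f) r hpos htri1 htri2
  refine ⟨y, hyS, fun a ha => ?_⟩
  rw [hyd (f a) ⟨a, ha, rfl⟩]
  exact ⟨hlow a ha, hupp a ha⟩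

/-- A finite partial bicontinuous map. -/
structure GoodExt (U : Type) [MetricSpace U] (αi' β' : ℝ → ℝ) where
  A : Set U
  g : U → U
  fin : A.Finite
  inj : Set.InjOn g A
  bc : ∀ u ∈ A, ∀ v ∈ A,
    αi' (dist u v) ≤ dist (g u) (g v) ∧ dist (g u) (g v) ≤ β' (dist u v)

/-- Updating a good partial map with a new point. -/
lemma update_good {αi' β' : ℝ → ℝ}
    (hαi0 : αi' 0 = 0) (hβ0 : β' 0 = 0)
    (A : Set U) (g : U → U) (hinj : Set.InjOn g A)
    (hbc : ∀ u ∈ A, ∀ v ∈ A,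
      αi' (dist u v) ≤ dist (g u) (g v) ∧ dist (g u) (g v) ≤ β' (dist u v))
    (x y : U) (hx : x ∉ A) (hy : y ∉ g '' A)
    (hxy : ∀ a ∈ A, αi' (dist x a) ≤ dist y (g a) ∧ dist y (g a) ≤ β' (dist x a)) :
    Set.InjOn (Function.update g x y) (insert x A) ∧
    (∀ u ∈ insert x A, ∀ v ∈ insert x A,
      αi' (dist u v) ≤ dist (Function.update g x y u) (Function.update g x y v) ∧
      dist (Function.update g x y u) (Function.update g x y v) ≤ β' (dist u v)) ∧
    Set.EqOn g (Function.update g x y) A := by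
  classical
  have hupdA : ∀ a ∈ A, Function.update g x y a = g a := by
    intro a ha
    exact Function.update_of_ne (fun h => hx (by rw [← h]; exact ha)) _ _
  refine ⟨?_, ?_, fun a ha => (hupdA a ha).symm⟩
  · intro u hu v hv huv
    rcases Set.mem_insert_iff.mp hu with hu' | hu' <;>
      rcases Set.mem_insert_iff.mp hv with hv' | hv'
    · rw [hu', hv']
    · rw [hu', Function.update_self, hupdA v hv'] at huv
      exact absurd ⟨v, hv', huv.symm⟩ hy
    · rw [hv', Function.update_self, hupdA u hu'] at huv
      exact absurd ⟨u, hu', huv⟩ hy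
    · rw [hupdA u hu', hupdA v hv'] at huv
      exact hinj hu' hv' huv
  · intro u hu v hv
    rcases Set.mem_insert_iff.mp hu with hu' | hu' <;>
      rcases Set.mem_insert_iff.mp hv with hv' | hv'
    · rw [hu', hv']
      simp [Function.update_self, hαi0, hβ0]
    · rw [hu', Function.update_self, hupdA v hv']
      exact hxy v hv'
    · rw [hv', Function.update_self, hupdA u hu', dist_comm u x, dist_comm (g u) y]
      exact hxy u hu'
    · rw [hupdA u hu', hupdA v hv']
      exact hbc u hu' v hv'

/-- Composing a vanishing sequence with a modulus still vanishes. -/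
lemma tendsto_mod_zero {β' βi' : ℝ → ℝ}
    (hmono : MonotoneOn β' (Set.Ici 0))
    (hinv : ∀ t ∈ Set.Ici (0:ℝ), β' (βi' t) = t)
    (hipos : ∀ t : ℝ, 0 < t → 0 < βi' t)
    (hinn : ∀ t : ℝ, 0 ≤ t → 0 ≤ βi' t)
    (hβnn : ∀ t : ℝ, 0 ≤ t → 0 ≤ β' t)
    {t : ℕ → ℝ} (htnn : ∀ k, 0 ≤ t k)
    (ht : Filter.Tendsto t Filter.atTop (nhds 0)) :
    Filter.Tendsto (fun k => β' (t k)) Filter.atTop (nhds 0) := by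
  rw [Metric.tendsto_atTop] at ht ⊢
  intro ε hε
  obtain ⟨N, hN⟩ := ht (βi' (ε/2)) (hipos _ (by linarith))
  refine ⟨N, fun n hn => ?_⟩
  have h1 : t n ≤ βi' (ε/2) := by
    have := hN n hn
    rw [Real.dist_eq, sub_zero, abs_of_nonneg (htnn n)] at this
    exact this.le
  have h2 : β' (t n) ≤ β' (βi' (ε/2)) :=
    hmono (Set.mem_Ici.mpr (htnn n)) (Set.mem_Ici.mpr (hinn _ (by linarith))) h1
  rw [hinv (ε/2) (Set.mem_Ici.mpr (by linarith))] at h2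
  rw [Real.dist_eq, sub_zero]
  rw [abs_of_nonneg (hβnn _ (htnn n))]
  linarith

/-- Every `(β,α)`-bicontinuous bijection between finite subsets of the Urysohn
space extends to a `(β,α)`-bicontinuous homeomorphism of the whole space,
provided `α` and `β` are compatible moduli of continuity. -/
theorem finite_bicontinuous_extension (U : Type) [MetricSpace U] (hU : IsUrysohn U)
    (α β αi βi : ℝ → ℝ)
    (hα : IsModulus α) (hβ : IsModulus β)
    (hαi : IsMCInverse α αi) (hβi : IsMCInverse β βi)
    (hcompat₁ : ∀ s t : ℝ, 0 ≤ s → 0 ≤ t → αi (s + t) ≤ αi s + β t)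
    (hcompat₂ : ∀ s t : ℝ, 0 ≤ s → 0 ≤ t → βi (s + t) ≤ βi s + α t)
    (A B : Set U) (hA : A.Finite) (hB : B.Finite)
    (f : U → U) (hf : BijOn f A B)
    (hbc : ∀ u ∈ A, ∀ v ∈ A,
      αi (dist u v) ≤ dist (f u) (f v) ∧ dist (f u) (f v) ≤ β (dist u v)) :
    ∃ F : U → U, Function.Bijective F ∧ (∀ a ∈ A, F a = f a) ∧
      ∀ u v : U, αi (dist u v) ≤ dist (F u) (F v) ∧ dist (F u) (F v) ≤ β (dist u v) := by
  classical
  obtain ⟨hcomp, hsep, huniv, hhomog⟩ := id hU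
  haveI := hcomp
  haveI := hsep
  haveI hne : Nonempty U := ⟨(huniv PUnit).choose PUnit.unit⟩
  obtain ⟨hα0, hαsm, hαmap, hαsur, hαcc⟩ := hα
  obtain ⟨hβ0, hβsm, hβmap, hβsur, hβcc⟩ := hβ
  obtain ⟨hαi1, hαi2, hαimap⟩ := hαi
  obtain ⟨hβi1, hβi2, hβimap⟩ := hβi
  have hαnn : ∀ t : ℝ, 0 ≤ t → 0 ≤ α t := fun t ht => Set.mem_Ici.mp (hαmap ht)
  have hβnn : ∀ t : ℝ, 0 ≤ t → 0 ≤ β t := fun t ht => Set.mem_Ici.mp (hβmap ht)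
  have hαinn : ∀ t : ℝ, 0 ≤ t → 0 ≤ αi t := fun t ht => Set.mem_Ici.mp (hαimap ht)
  have hβinn : ∀ t : ℝ, 0 ≤ t → 0 ≤ βi t := fun t ht => Set.mem_Ici.mp (hβimap ht)
  have hαmono : MonotoneOn α (Set.Ici 0) := hαsm.monotoneOn
  have hβmono : MonotoneOn β (Set.Ici 0) := hβsm.monotoneOn
  have hαi0 : αi 0 = 0 := by
    have := hαi1 0 (Set.mem_Ici.mpr le_rfl); rwa [hα0] at this
  have hβi0 : βi 0 = 0 := by
    have := hβi1 0 (Set.mem_Ici.mpr le_rfl); rwa [hβ0] at this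
  have hαimono : MonotoneOn αi (Set.Ici 0) := by
    intro a ha b hb hab
    apply (hαsm.le_iff_le (hαimap ha) (hαimap hb)).mp
    rw [hαi2 a ha, hαi2 b hb]; exact hab
  have hβimono : MonotoneOn βi (Set.Ici 0) := by
    intro a ha b hb hab
    apply (hβsm.le_iff_le (hβimap ha) (hβimap hb)).mp
    rw [hβi2 a ha, hβi2 b hb]; exact hab
  have hαipos : ∀ t : ℝ, 0 < t → 0 < αi t := by
    intro t ht
    rcases (hαinn t ht.le).lt_or_eq with h | h
    · exact h
    · exfalso
      have h2 := hαi2 t ht.le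
      rw [← h, hα0] at h2
      linarith
  have hβipos : ∀ t : ℝ, 0 < t → 0 < βi t := by
    intro t ht
    rcases (hβinn t ht.le).lt_or_eq with h | h
    · exact h
    · exfalso
      have h2 := hβi2 t ht.le
      rw [← h, hβ0] at h2
      linarith
  have hαsub := modulus_subadd hα0 hαcc hαnn
  have hβsub := modulus_subadd hβ0 hβcc hβnn
  -- forward one-point step
  have hforward : ∀ (E : GoodExt U αi β) (x : U), ∃ E' : GoodExt U αi β,
      E.A ⊆ E'.A ∧ Set.EqOn E.g E'.g E.A ∧ x ∈ E'.A := by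
    intro E x
    by_cases hx : x ∈ E.A
    · exact ⟨E, subset_rfl, Set.eqOn_refl _ _, hx⟩
    obtain ⟨y, hy, hxy⟩ := one_point_ext hU α β αi hαimono hαipos hβnn hβmono hβsub
      hcompat₁ E.A E.fin E.g E.bc x hx
    obtain ⟨hinj', hbc', heq⟩ := update_good hαi0 hβ0 E.A E.g E.inj E.bc x y hx hy hxy
    exact ⟨⟨insert x E.A, Function.update E.g x y, E.fin.insert x, hinj', hbc'⟩,
      Set.subset_insert x E.A, heq, Set.mem_insert x E.A⟩
  -- backward one-point step
  have hbackward : ∀ (E : GoodExt U αi β) (y : U), ∃ E' : GoodExt U αi β,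
      E.A ⊆ E'.A ∧ Set.EqOn E.g E'.g E.A ∧ y ∈ E'.g '' E'.A := by
    intro E y
    by_cases hy : y ∈ E.g '' E.A
    · exact ⟨E, subset_rfl, Set.eqOn_refl _ _, hy⟩
    set h := Function.invFunOn E.g E.A with hh
    have hmem : ∀ b ∈ E.g '' E.A, h b ∈ E.A ∧ E.g (h b) = b := by
      rintro b ⟨a, ha, rfl⟩
      exact ⟨Function.invFunOn_mem ⟨a, ha, rfl⟩, Function.invFunOn_eq ⟨a, ha, rfl⟩⟩
    have hbc' : ∀ b ∈ E.g '' E.A, ∀ b' ∈ E.g '' E.A,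
        βi (dist b b') ≤ dist (h b) (h b') ∧ dist (h b) (h b') ≤ α (dist b b') := by
      intro b hb b' hb'
      obtain ⟨hbA, hbe⟩ := hmem b hb
      obtain ⟨hb'A, hb'e⟩ := hmem b' hb'
      obtain ⟨h1, h2⟩ := E.bc (h b) hbA (h b') hb'A
      rw [hbe, hb'e] at h1 h2
      constructor
      · calc βi (dist b b') ≤ βi (β (dist (h b) (h b'))) :=
            hβimono (Set.mem_Ici.mpr dist_nonneg)
              (Set.mem_Ici.mpr (hβnn _ dist_nonneg)) h2
          _ = dist (h b) (h b') := hβi1 _ (Set.mem_Ici.mpr dist_nonneg)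
      · calc dist (h b) (h b')
            = α (αi (dist (h b) (h b'))) := (hαi2 _ (Set.mem_Ici.mpr dist_nonneg)).symm
          _ ≤ α (dist b b') := hαmono (Set.mem_Ici.mpr (hαinn _ dist_nonneg))
              (Set.mem_Ici.mpr dist_nonneg) h1
    obtain ⟨x', hx'img, hx'bd⟩ := one_point_ext hU β α βi hβimono hβipos hαnn hαmono hαsub
      hcompat₂ (E.g '' E.A) (E.fin.image _) h hbc' y hy
    have himg : h '' (E.g '' E.A) = E.A := E.inj.invFunOn_image subset_rfl
    have hx'A : x' ∉ E.A := by rw [← himg]; exact hx'img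
    have hxy : ∀ a ∈ E.A, αi (dist x' a) ≤ dist y (E.g a) ∧ dist y (E.g a) ≤ β (dist x' a) := by
      intro a ha
      have hbB : E.g a ∈ E.g '' E.A := ⟨a, ha, rfl⟩
      obtain ⟨hmA, hme⟩ := hmem _ hbB
      have hha : h (E.g a) = a := E.inj hmA ha hme
      obtain ⟨h1, h2⟩ := hx'bd (E.g a) hbB
      rw [hha] at h1 h2
      constructor
      · calc αi (dist x' a) ≤ αi (α (dist y (E.g a))) :=
            hαimono (Set.mem_Ici.mpr dist_nonneg)
              (Set.mem_Ici.mpr (hαnn _ dist_nonneg)) h2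
          _ = dist y (E.g a) := hαi1 _ (Set.mem_Ici.mpr dist_nonneg)
      · calc dist y (E.g a)
            = β (βi (dist y (E.g a))) := (hβi2 _ (Set.mem_Ici.mpr dist_nonneg)).symm
          _ ≤ β (dist x' a) := hβmono (Set.mem_Ici.mpr (hβinn _ dist_nonneg))
              (Set.mem_Ici.mpr dist_nonneg) h1
    obtain ⟨hinj', hbc'', heq⟩ := update_good hαi0 hβ0 E.A E.g E.inj E.bc x' y hx'A hy hxy
    exact ⟨⟨insert x' E.A, Function.update E.g x' y, E.fin.insert x', hinj', hbc''⟩,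
      Set.subset_insert _ _, heq, ⟨x', Set.mem_insert _ _, by simp⟩⟩
  have hstep : ∀ (E : GoodExt U αi β) (x : U), ∃ E' : GoodExt U αi β,
      E.A ⊆ E'.A ∧ Set.EqOn E.g E'.g E.A ∧ x ∈ E'.A ∧ x ∈ E'.g '' E'.A := by
    intro E x
    obtain ⟨E1, h1, h2, h3⟩ := hforward E x
    obtain ⟨E2, h4, h5, h6⟩ := hbackward E1 x
    exact ⟨E2, h1.trans h4, fun a ha => (h2 ha).trans (h5 (h1 ha)), h4 h3, h6⟩
  choose step hsub hEq hmemA hmemB using hstep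
  set u : ℕ → U := TopologicalSpace.denseSeq U with hu
  set E0 : GoodExt U αi β := ⟨A, f, hA, hf.2.1, hbc⟩ with hE0
  set E : ℕ → GoodExt U αi β := fun n => Nat.rec E0 (fun n En => step En (u n)) n with hE
  have hEs : ∀ n, E (n + 1) = step (E n) (u n) := fun n => rfl
  have hmono : ∀ m n, m ≤ n →
      (E m).A ⊆ (E n).A ∧ Set.EqOn (E m).g (E n).g (E m).A := by
    intro m n hmn
    induction n, hmn using Nat.le_induction with
    | base => exact ⟨subset_rfl, Set.eqOn_refl _ _⟩
    | succ n hmn ih =>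
      constructor
      · refine ih.1.trans ?_
        rw [hEs n]; exact hsub (E n) (u n)
      · intro a ha
        refine (ih.2 ha).trans ?_
        rw [hEs n]; exact hEq (E n) (u n) (ih.1 ha)
  set D : Set U := ⋃ n, (E n).A with hD
  set limG : U → U :=
    fun v => if h : ∃ n, v ∈ (E n).A then (E h.choose).g v else v with hlimGdef
  have hlimG : ∀ n, ∀ v ∈ (E n).A, limG v = (E n).g v := by
    intro n v hv
    have hex : ∃ m, v ∈ (E m).A := ⟨n, hv⟩
    rw [hlimGdef]
    simp only [dif_pos hex]
    rcases le_total hex.choose n with h | h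
    · exact (hmono _ _ h).2 hex.choose_spec
    · exact ((hmono _ _ h).2 hv).symm
  have hDbc : ∀ v ∈ D, ∀ w ∈ D,
      αi (dist v w) ≤ dist (limG v) (limG w) ∧ dist (limG v) (limG w) ≤ β (dist v w) := by
    intro v hv w hw
    obtain ⟨m, hm⟩ := Set.mem_iUnion.mp hv
    obtain ⟨n, hn⟩ := Set.mem_iUnion.mp hw
    have hm' : v ∈ (E (max m n)).A := (hmono m _ (le_max_left m n)).1 hm
    have hn' : w ∈ (E (max m n)).A := (hmono n _ (le_max_right m n)).1 hn
    rw [hlimG _ v hm', hlimG _ w hn']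
    exact (E (max m n)).bc v hm' w hn'
  have hDdense : Dense D := by
    have hsubD : Set.range u ⊆ D := by
      rintro _ ⟨n, rfl⟩
      exact Set.mem_iUnion.mpr ⟨n + 1, by rw [hEs n]; exact hmemA (E n) (u n)⟩
    exact Dense.mono hsubD (TopologicalSpace.denseRange_denseSeq U)
  have happrox : ∀ (x : U) (k : ℕ), ∃ v, v ∈ D ∧ dist x v < 1 / ((k : ℝ) + 1) := by
    intro x k
    have h1 : (0:ℝ) < 1 / ((k : ℝ) + 1) := by positivity
    obtain ⟨v, hvD, hvd⟩ := Metric.mem_closure_iff.mp (hDdense x) _ h1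
    exact ⟨v, hvD, hvd⟩
  choose s hsD hsd using happrox
  have htinv : Filter.Tendsto (fun k : ℕ => 2 / ((k : ℝ) + 1)) Filter.atTop (nhds 0) := by
    have h2 := tendsto_one_div_add_atTop_nhds_zero_nat.const_mul (2:ℝ)
    simpa [mul_one_div, div_eq_mul_inv] using h2
  have hβ2 : Filter.Tendsto (fun k : ℕ => β (2 / ((k : ℝ) + 1))) Filter.atTop (nhds 0) :=
    tendsto_mod_zero hβmono hβi2 hβipos hβinn hβnn (fun k => by positivity) htinv
  have honediv : ∀ k N : ℕ, N ≤ k → 1 / ((k:ℝ) + 1) ≤ 1 / ((N:ℝ) + 1) := by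
    intro k N hk
    apply one_div_le_one_div_of_le (by positivity)
    have : (N:ℝ) ≤ (k:ℝ) := Nat.cast_le.mpr hk
    linarith
  have hcauchy : ∀ x, CauchySeq fun k => limG (s x k) := by
    intro x
    apply cauchySeq_of_le_tendsto_0 (fun N : ℕ => β (2 / ((N : ℝ) + 1))) _ hβ2
    intro k l N hk hl
    have t1 := hsd x k
    have t2 := hsd x l
    have i1 := honediv k N hk
    have i2 := honediv l N hl
    have h1 : dist (s x k) (s x l) ≤ 2 / ((N:ℝ) + 1) := by
      have htri := dist_triangle (s x k) x (s x l)
      have e : dist (s x k) x = dist x (s x k) := dist_comm _ _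
      have e2 : 1 / ((N:ℝ)+1) + 1 / ((N:ℝ)+1) = 2 / ((N:ℝ)+1) := by ring
      linarith
    calc dist (limG (s x k)) (limG (s x l)) ≤ β (dist (s x k) (s x l)) :=
          (hDbc _ (hsD x k) _ (hsD x l)).2
      _ ≤ β (2 / ((N:ℝ)+1)) := hβmono (Set.mem_Ici.mpr dist_nonneg)
          (Set.mem_Ici.mpr (by positivity)) h1
  have hFex : ∀ x, ∃ L, Filter.Tendsto (fun k => limG (s x k)) Filter.atTop (nhds L) :=
    fun x => cauchySeq_tendsto_of_complete (hcauchy x)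
  choose F hF using hFex
  have hFD : ∀ v ∈ D, F v = limG v := by
    intro v hv
    have hdist0 : Filter.Tendsto (fun k => dist (s v k) v) Filter.atTop (nhds 0) := by
      apply squeeze_zero (f := fun k : ℕ => dist (s v k) v) (fun k => dist_nonneg) (g := fun k : ℕ => 1 / ((k:ℝ)+1))
      · intro k
        rw [dist_comm]
        exact (hsd v k).le
      · exact tendsto_one_div_add_atTop_nhds_zero_nat
    have htend : Filter.Tendsto (fun k => limG (s v k)) Filter.atTop (nhds (limG v)) := by
      rw [tendsto_iff_dist_tendsto_zero]
      apply squeeze_zero (fun k => dist_nonneg)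
        (fun k => (hDbc _ (hsD v k) _ hv).2)
      exact tendsto_mod_zero hβmono hβi2 hβipos hβinn hβnn (fun k => dist_nonneg) hdist0
    exact tendsto_nhds_unique (hF v) htend
  have hFbc : ∀ x y : U,
      αi (dist x y) ≤ dist (F x) (F y) ∧ dist (F x) (F y) ≤ β (dist x y) := by
    intro x y
    have hd : Filter.Tendsto (fun k => dist (limG (s x k)) (limG (s y k))) Filter.atTop
        (nhds (dist (F x) (F y))) := (hF x).dist (hF y)
    constructor
    · have hle : ∀ k : ℕ, αi (dist x y) - β (2 / ((k:ℝ)+1)) ≤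
          dist (limG (s x k)) (limG (s y k)) := by
        intro k
        have t1 := hsd x k
        have t2 := hsd y k
        have h1 : dist x y ≤ dist (s x k) (s y k) + 2 / ((k:ℝ)+1) := by
          have htri := dist_triangle4 x (s x k) (s y k) y
          have e : dist (s y k) y = dist y (s y k) := dist_comm _ _
          have e2 : 1 / ((k:ℝ)+1) + 1 / ((k:ℝ)+1) = 2 / ((k:ℝ)+1) := by ring
          linarith
        have h2 : αi (dist x y) ≤ αi (dist (s x k) (s y k) + 2 / ((k:ℝ)+1)) :=
          hαimono (Set.mem_Ici.mpr dist_nonneg) (Set.mem_Ici.mpr (by positivity)) h1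
        have h3 := hcompat₁ (dist (s x k) (s y k)) (2 / ((k:ℝ)+1)) dist_nonneg (by positivity)
        have h4 := (hDbc _ (hsD x k) _ (hsD y k)).1
        linarith
      have hlim2 : Filter.Tendsto (fun k : ℕ => αi (dist x y) - β (2 / ((k:ℝ)+1)))
          Filter.atTop (nhds (αi (dist x y) - 0)) := tendsto_const_nhds.sub hβ2
      have := le_of_tendsto_of_tendsto' hlim2 hd hle
      simpa using this
    · have hle : ∀ k : ℕ, dist (limG (s x k)) (limG (s y k)) ≤
          β (dist x y) + β (2 / ((k:ℝ)+1)) := by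
        intro k
        have t1 := hsd x k
        have t2 := hsd y k
        have h1 : dist (s x k) (s y k) ≤ dist x y + 2 / ((k:ℝ)+1) := by
          have htri := dist_triangle4 (s x k) x y (s y k)
          have e : dist (s x k) x = dist x (s x k) := dist_comm _ _
          have e2 : 1 / ((k:ℝ)+1) + 1 / ((k:ℝ)+1) = 2 / ((k:ℝ)+1) := by ring
          linarith
        have h2 := (hDbc _ (hsD x k) _ (hsD y k)).2
        have h3 : β (dist (s x k) (s y k)) ≤ β (dist x y + 2 / ((k:ℝ)+1)) :=
          hβmono (Set.mem_Ici.mpr dist_nonneg) (Set.mem_Ici.mpr (by positivity)) h1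
        have h4 := hβsub (dist x y) (2 / ((k:ℝ)+1)) dist_nonneg (by positivity)
        linarith
      have hlim2 : Filter.Tendsto (fun k : ℕ => β (dist x y) + β (2 / ((k:ℝ)+1)))
          Filter.atTop (nhds (β (dist x y) + 0)) := tendsto_const_nhds.add hβ2
      have := le_of_tendsto_of_tendsto' hd hlim2 hle
      simpa using this
  have hFA : ∀ a ∈ A, F a = f a := by
    intro a ha
    have haE0 : a ∈ (E 0).A := ha
    have haD : a ∈ D := Set.mem_iUnion.mpr ⟨0, haE0⟩
    rw [hFD a haD, hlimG 0 a haE0]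
    rfl
  have hFinj : Function.Injective F := by
    intro x y hxy
    have h1 := (hFbc x y).1
    rw [hxy, dist_self] at h1
    by_contra hne
    have hd : 0 < dist x y := dist_pos.mpr hne
    linarith [hαipos _ hd]
  have hFsurj : Function.Surjective F := by
    intro y
    have happ' : ∀ k : ℕ, ∃ a, a ∈ D ∧ dist y (limG a) < 1 / ((k:ℝ)+1) := by
      intro k
      have hD' : Dense (⋃ n, (E n).g '' (E n).A) := by
        have hsubD : Set.range u ⊆ ⋃ n, (E n).g '' (E n).A := by
          rintro _ ⟨n, rfl⟩
          exact Set.mem_iUnion.mpr ⟨n + 1, by rw [hEs n]; exact hmemB (E n) (u n)⟩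
        exact Dense.mono hsubD (TopologicalSpace.denseRange_denseSeq U)
      have h1 : (0:ℝ) < 1 / ((k : ℝ) + 1) := by positivity
      obtain ⟨w, hwD, hwd⟩ := Metric.mem_closure_iff.mp (hD' y) _ h1
      obtain ⟨n, hn⟩ := Set.mem_iUnion.mp hwD
      obtain ⟨a, ha, hga⟩ := hn
      refine ⟨a, Set.mem_iUnion.mpr ⟨n, ha⟩, ?_⟩
      rw [hlimG n a ha, hga]
      exact hwd
    choose aSeq haD hadist using happ'
    have hc : CauchySeq aSeq := by
      apply cauchySeq_of_le_tendsto_0 (fun N : ℕ => α (2 / ((N : ℝ) + 1))) _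
        (tendsto_mod_zero hαmono hαi2 hαipos hαinn hαnn (fun k => by positivity) htinv)
      intro k l N hk hl
      have h4 := (hDbc _ (haD k) _ (haD l)).1
      have h5 : dist (limG (aSeq k)) (limG (aSeq l)) ≤ 2 / ((N:ℝ)+1) := by
        have t1 := hadist k
        have t2 := hadist l
        have i1 := honediv k N hk
        have i2 := honediv l N hl
        have htri := dist_triangle (limG (aSeq k)) y (limG (aSeq l))
        have e : dist (limG (aSeq k)) y = dist y (limG (aSeq k)) := dist_comm _ _
        have e2 : 1 / ((N:ℝ)+1) + 1 / ((N:ℝ)+1) = 2 / ((N:ℝ)+1) := by ring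
        linarith
      calc dist (aSeq k) (aSeq l)
          = α (αi (dist (aSeq k) (aSeq l))) := (hαi2 _ (Set.mem_Ici.mpr dist_nonneg)).symm
        _ ≤ α (2 / ((N:ℝ)+1)) := hαmono (Set.mem_Ici.mpr (hαinn _ dist_nonneg))
            (Set.mem_Ici.mpr (by positivity)) (le_trans h4 h5)
    obtain ⟨x, hx⟩ := cauchySeq_tendsto_of_complete hc
    refine ⟨x, ?_⟩
    have hkey : ∀ k : ℕ, dist (F x) y ≤ β (dist x (aSeq k)) + 1 / ((k:ℝ)+1) := by
      intro k
      have h1 : dist (F x) (F (aSeq k)) ≤ β (dist x (aSeq k)) := (hFbc x _).2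
      have h2 : F (aSeq k) = limG (aSeq k) := hFD _ (haD k)
      have h3 : dist (limG (aSeq k)) y < 1 / ((k:ℝ)+1) := by
        rw [dist_comm]; exact hadist k
      have htri := dist_triangle (F x) (F (aSeq k)) y
      rw [h2] at htri h1
      linarith
    have hβd : Filter.Tendsto (fun k : ℕ => β (dist x (aSeq k)) + 1 / ((k:ℝ)+1))
        Filter.atTop (nhds (0 + 0)) := by
      apply Filter.Tendsto.add
      · apply tendsto_mod_zero hβmono hβi2 hβipos hβinn hβnn (fun k => dist_nonneg)
        have hx' := hx
        rw [tendsto_iff_dist_tendsto_zero] at hx'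
        simpa [dist_comm] using hx'
      · exact tendsto_one_div_add_atTop_nhds_zero_nat
    have hle0 : dist (F x) y ≤ 0 :=
      le_of_tendsto_of_tendsto' tendsto_const_nhds (by simpa using hβd) hkey
    have : dist (F x) y = 0 := le_antisymm hle0 dist_nonneg
    exact dist_eq_zero.mp this
  exact ⟨F, ⟨hFinj, hFsurj⟩, hFA, hFbc⟩
end

section
/- Extension theorem for totally bounded sets: Let X, Y ⊆ 𝕌 be totally bounded subsets of the Urysohn space and let f : X → Y be a (β,α)-bicontinuous bijection, where α, β are compatible moduli of continuity. Then there is a (β,α)-bicontinuous bijection F : 𝕌 → 𝕌 which extends f. -/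
open Metric Set
open scoped Classical

namespace TBE

variable {α αi : ℝ → ℝ}

lemma mod_nonneg (hα : IsModulus α) {t : ℝ} (ht : 0 ≤ t) : 0 ≤ α t := hα.2.2.1 ht

lemma mod_mono (hα : IsModulus α) {s t : ℝ} (hs : 0 ≤ s) (hst : s ≤ t) : α s ≤ α t :=
  hα.2.1.monotoneOn hs (le_trans hs hst) hst

lemma mod_pos (hα : IsModulus α) {t : ℝ} (ht : 0 < t) : 0 < α t := by
  have := hα.2.1 (le_refl (0:ℝ)) (le_of_lt ht) ht
  rwa [hα.1] at this

lemma mod_subadd (hα : IsModulus α) {s t : ℝ} (hs : 0 ≤ s) (ht : 0 ≤ t) :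
    α (s + t) ≤ α s + α t := by
  rcases eq_or_lt_of_le (add_nonneg hs ht) with h | h
  · have hs0 : s = 0 := by linarith
    have ht0 : t = 0 := by linarith
    simp [hs0, ht0, hα.1]
  · have key : ∀ u : ℝ, 0 ≤ u → u ≤ s + t → (u / (s + t)) * α (s + t) ≤ α u := by
      intro u hu huv
      have hb : 0 ≤ u / (s + t) := div_nonneg hu (le_of_lt h)
      have hb1 : u / (s + t) ≤ 1 := (div_le_one h).2 huv
      have hcc := hα.2.2.2.2.2
      have := hcc (Set.self_mem_Ici) (Set.mem_Ici.2 (le_of_lt h))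
        (show (0:ℝ) ≤ 1 - u / (s + t) by linarith)
        (show (0:ℝ) ≤ u / (s + t) from hb)
        (show 1 - u / (s + t) + u / (s + t) = 1 by ring)
      simpa [hα.1, smul_eq_mul, div_mul_cancel₀, ne_of_gt h] using this
    have k1 := key s hs (by linarith)
    have k2 := key t ht (by linarith)
    have : (s / (s + t)) * α (s + t) + (t / (s + t)) * α (s + t) = α (s + t) := by
      field_simp
    linarith

lemma mod_small (hα : IsModulus α) {ε : ℝ} (hε : 0 < ε) :
    ∃ δ > 0, ∀ t, 0 ≤ t → t < δ → α t < ε := by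
  obtain ⟨t₀, ht₀, hαt₀⟩ := hα.2.2.2.1 (Set.mem_Ici.2 (le_of_lt hε))
  have ht₀pos : 0 < t₀ := by
    rcases eq_or_lt_of_le (Set.mem_Ici.1 ht₀) with h | h
    · exfalso; rw [← h, hα.1] at hαt₀; linarith
    · exact h
  exact ⟨t₀, ht₀pos, fun t ht htlt => by
    have := hα.2.1 (Set.mem_Ici.2 ht) ht₀ htlt
    linarith⟩

lemma inv_nonneg (hαi : IsMCInverse α αi) {t : ℝ} (ht : 0 ≤ t) : 0 ≤ αi t := hαi.2.2 ht

lemma inv_zero (hα : IsModulus α) (hαi : IsMCInverse α αi) : αi 0 = 0 := by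
  have := hαi.1 0 Set.self_mem_Ici
  rwa [hα.1] at this

lemma inv_mono (hα : IsModulus α) (hαi : IsMCInverse α αi) {s t : ℝ} (hs : 0 ≤ s)
    (hst : s ≤ t) : αi s ≤ αi t := by
  by_contra hlt
  push_neg at hlt
  have := hα.2.1 (hαi.2.2 (le_trans hs hst)) (hαi.2.2 hs) hlt
  rw [hαi.2.1 s hs, hαi.2.1 t (le_trans hs hst)] at this
  linarith

lemma inv_le_iff (hα : IsModulus α) (hαi : IsMCInverse α αi) {s t : ℝ} (hs : 0 ≤ s)
    (ht : 0 ≤ t) : αi s ≤ t ↔ s ≤ α t := by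
  constructor
  · intro hle
    have := mod_mono hα (hαi.2.2 hs) hle
    rwa [hαi.2.1 s hs] at this
  · intro hle
    have := inv_mono hα hαi hs hle
    rwa [hαi.1 t ht] at this

lemma inv_eq_zero (hα : IsModulus α) (hαi : IsMCInverse α αi) {d : ℝ} (hd : 0 ≤ d)
    (h : αi d ≤ 0) : d = 0 := by
  have h0 : αi d = 0 := le_antisymm h (hαi.2.2 hd)
  have := hαi.2.1 d hd
  rw [h0, hα.1] at this
  exact this.symm

lemma urysohn_nonempty {U : Type} [MetricSpace U] (hU : IsUrysohn U) : Nonempty U := by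
  obtain ⟨f, -⟩ := hU.2.2.1 ℝ
  exact ⟨f 0⟩

end TBE

namespace TBE

variable {U : Type} [MetricSpace U]

/-- Distance function for the one-point extension of a subset `B` of `U` by a
Katětov function `h`. -/
noncomputable def optD (B : Set U) (h : U → ℝ) : Option B → Option B → ℝ
  | some b, some c => dist b.1 c.1
  | some b, none => h b.1
  | none, some c => h c.1
  | none, none => 0

/-- Construct a metric space from a distance function. -/
noncomputable def md {X : Type} (d : X → X → ℝ) (h1 : ∀ x, d x x = 0)
    (h2 : ∀ x y, d x y = d y x) (h3 : ∀ x y z, d x z ≤ d x y + d y z)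
    (h4 : ∀ x y, d x y = 0 → x = y) : MetricSpace X where
  dist := d
  dist_self := h1
  dist_comm := h2
  dist_triangle := h3
  eq_of_dist_eq_zero := h4 _ _

/-- Any Katětov function over a finite subset of the Urysohn space is realized. -/
lemma katetov_finite (hU : IsUrysohn U) (B : Set U) (hB : B.Finite) (h : U → ℝ)
    (h0 : ∀ b ∈ B, 0 ≤ h b)
    (hk : ∀ b ∈ B, ∀ c ∈ B, |h b - h c| ≤ dist b c ∧ dist b c ≤ h b + h c) :
    ∃ y : U, ∀ b ∈ B, dist y b = h b := by
  by_cases hz : ∃ b₀ ∈ B, h b₀ = 0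
  · obtain ⟨b₀, hb₀, hb₀0⟩ := hz
    refine ⟨b₀, fun b hb => ?_⟩
    have h1 := hk b hb b₀ hb₀
    rw [hb₀0] at h1
    have h2 : |h b| ≤ dist b b₀ := by simpa using h1.1
    have h3 := le_abs_self (h b)
    have h4 := h1.2
    rw [dist_comm]
    linarith
  · push_neg at hz
    have hpos : ∀ b : B, 0 < h b.1 := fun b =>
      lt_of_le_of_ne (h0 b.1 b.2) (Ne.symm (hz b.1 b.2))
    haveI : Finite ↥B := hB.to_subtype
    letI M : MetricSpace (Option B) := md (optD B h)
      (by rintro (_ | b) <;> simp [optD])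
      (by rintro (_ | b) (_ | c) <;> simp [optD, dist_comm])
      (by
        rintro (_ | a) (_ | b) (_ | c)
        · simp [optD]
        · simp only [optD]; linarith [h0 c.1 c.2]
        · simp only [optD]; linarith [h0 b.1 b.2]
        · simp only [optD]
          have h1 := (abs_le.1 (hk c.1 c.2 b.1 b.2).1).2
          have h2 := dist_comm (c.1 : U) b.1
          linarith
        · simp only [optD]; linarith [h0 a.1 a.2]
        · simp only [optD]; exact (hk a.1 a.2 c.1 c.2).2
        · simp only [optD]
          have h1 := (abs_le.1 (hk a.1 a.2 b.1 b.2).1).2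
          linarith
        · simp only [optD]; exact dist_triangle (a.1 : U) b.1 c.1)
      (by
        rintro (_ | a) (_ | b)
        · intro _; rfl
        · simp only [optD]; intro hb; exact absurd hb (ne_of_gt (hpos b))
        · simp only [optD]; intro ha; exact absurd ha (ne_of_gt (hpos a))
        · simp only [optD]; intro hab
          exact congrArg some (Subtype.ext (eq_of_dist_eq_zero hab)))
    haveI : TopologicalSpace.SeparableSpace (Option B) :=
      ⟨⟨Set.univ, Set.countable_univ, dense_univ⟩⟩
    obtain ⟨ι, hι⟩ := hU.2.2.1 (Option B)
    set e : B → U := fun b => ι (some b) with he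
    have hinj : Function.Injective e := by
      intro a b hab
      have := hι.injective hab
      exact Option.some.inj this
    set f₀ : U → U := Function.extend e Subtype.val id with hf₀def
    have hf₀ : ∀ b : B, f₀ (e b) = b.1 := fun b => hinj.extend_apply _ _ _
    have hdp : ∀ u ∈ Set.range e, ∀ v ∈ Set.range e, dist (f₀ u) (f₀ v) = dist u v := by
      rintro _ ⟨a, rfl⟩ _ ⟨b, rfl⟩
      rw [hf₀, hf₀, hι.dist_eq]
      rfl
    obtain ⟨g, hg⟩ := hU.2.2.2 (Set.range e) f₀ (Set.finite_range e) hdp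
    refine ⟨g (ι none), fun b hb => ?_⟩
    have h1 : g (e ⟨b, hb⟩) = b := by
      rw [hg _ (Set.mem_range_self _), hf₀]
    calc dist (g (ι none)) b = dist (g (ι none)) (g (e ⟨b, hb⟩)) := by rw [h1]
      _ = dist (ι none) (ι (some ⟨b, hb⟩)) := g.isometry.dist_eq _ _
      _ = dist (none : Option B) (some ⟨b, hb⟩) := hι.dist_eq _ _
      _ = h b := rfl

end TBE

namespace TBE

lemma exists_seq_rec {X : Type} (P : ℕ → X → Prop) (Q : ℕ → X → X → Prop)
    (h0 : ∃ x, P 0 x) (hs : ∀ n x, P n x → ∃ y, P (n + 1) y ∧ Q n x y) :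
    ∃ u : ℕ → X, (∀ n, P n (u n)) ∧ ∀ n, Q n (u n) (u (n + 1)) := by
  obtain ⟨x0, hx0⟩ := h0
  choose f hP hQ using hs
  let g : ∀ n : ℕ, {x : X // P n x} := fun n =>
    Nat.rec (motive := fun n => {x : X // P n x}) ⟨x0, hx0⟩
      (fun n p => ⟨f n p.1 p.2, hP n p.1 p.2⟩) n
  exact ⟨fun n => (g n).1, fun n => (g n).2, fun n => hQ n (g n).1 (g n).2⟩

variable {U : Type} [MetricSpace U]

lemma katetov_step (hU : IsUrysohn U) (K : Set U) (h : U → ℝ)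
    (h0 : ∀ b ∈ K, 0 ≤ h b)
    (hk : ∀ b ∈ K, ∀ c ∈ K, |h b - h c| ≤ dist b c ∧ dist b c ≤ h b + h c)
    (F F' : Set U) (hF' : F'.Finite) (hFK : F ⊆ K) (hF'K : F' ⊆ K)
    (δ : ℝ) (hδ : 0 ≤ δ) (net : ∀ b ∈ F', ∃ c ∈ F, dist b c ≤ δ)
    (y : U) (hy : ∀ b ∈ F, dist y b = h b) :
    ∃ y', (∀ b ∈ F', dist y' b = h b) ∧ dist y' y ≤ 2 * δ := by
  rcases F'.eq_empty_or_nonempty with rfl | hne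
  · exact ⟨y, by simp, by simp; linarith⟩
  · obtain ⟨c₀, hc₀, hmax⟩ := Set.exists_max_image F' (fun b => |h b - dist y b|) hF' hne
    set γ := |h c₀ - dist y c₀| with hγdef
    have hγnn : 0 ≤ γ := abs_nonneg _
    have hγle : γ ≤ 2 * δ := by
      obtain ⟨c, hc, hdc⟩ := net c₀ hc₀
      have e1 : dist y c = h c := hy c hc
      have t1 : |h c₀ - h c| ≤ dist c₀ c := (hk c₀ (hF'K hc₀) c (hFK hc)).1
      have t3 : γ ≤ |h c₀ - h c| + |h c - dist y c₀| := abs_sub_le _ _ _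
      have t4 : |h c - dist y c₀| ≤ dist c c₀ := by
        rw [← e1]
        have := abs_dist_sub_le c c₀ y
        rw [dist_comm c y, dist_comm c₀ y] at this
        exact this
      have t5 : dist c c₀ = dist c₀ c := dist_comm _ _
      linarith
    have key : ∀ c ∈ F', γ - h c ≤ dist y c := by
      intro c hc
      have t1 := abs_le.1 ((hk c₀ (hF'K hc₀) c (hF'K hc)).1)
      have t2 := (hk c₀ (hF'K hc₀) c (hF'K hc)).2
      rcases le_or_gt (h c₀) (dist y c₀) with hcase | hcase
      · have hγeq : γ = dist y c₀ - h c₀ := by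
          rw [hγdef, abs_sub_comm, abs_of_nonneg (by linarith)]
        rw [hγeq]
        have htri := dist_triangle y c c₀
        have t5 : dist c c₀ = dist c₀ c := dist_comm _ _
        linarith
      · have hγeq : γ = h c₀ - dist y c₀ := by
          rw [hγdef, abs_of_nonneg (by linarith)]
        rw [hγeq]
        have htri := dist_triangle c₀ y c
        have t5 : dist c₀ y = dist y c₀ := dist_comm _ _
        linarith
    by_cases hyF : y ∈ F'
    · obtain ⟨y', hy'⟩ := katetov_finite hU F' hF' h (fun b hb => h0 b (hF'K hb))
        (fun b hb c hc => hk b (hF'K hb) c (hF'K hc))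
      refine ⟨y', hy', ?_⟩
      have e1 : dist y' y = h y := hy' y hyF
      have e2 : h y ≤ γ := by
        have := hmax y hyF
        simpa [dist_self, abs_of_nonneg (h0 y (hF'K hyF))] using this
      linarith
    · by_cases hγ0 : γ = 0
      · refine ⟨y, fun b hb => ?_, by simp; linarith⟩
        have hb' := hmax b hb
        rw [hγ0] at hb'
        have : |h b - dist y b| = 0 := le_antisymm hb' (abs_nonneg _)
        have := abs_eq_zero.1 this
        linarith [sub_eq_zero.1 this]
      · have hγpos : 0 < γ := lt_of_le_of_ne hγnn (Ne.symm hγ0)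
        set h' : U → ℝ := fun u => if u = y then γ else h u with hh'
        have hne' : ∀ b ∈ F', b ≠ y := fun b hb e => hyF (e ▸ hb)
        have hval : ∀ b ∈ F', h' b = h b := fun b hb => if_neg (hne' b hb)
        obtain ⟨y'', hy''⟩ := katetov_finite hU (insert y F') (hF'.insert y) h'
          (by
            intro b hb
            by_cases hby : b = y
            · rw [hby]
              have e1 : h' y = γ := if_pos rfl
              rw [e1]
              exact hγnn
            · have hbF : b ∈ F' := (Set.mem_insert_iff.1 hb).resolve_left hby
              rw [hval b hbF]
              exact h0 b (hF'K hbF))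
          (by
            intro b hb c hc
            by_cases hby : b = y
            · rw [hby]
              by_cases hcy : c = y
              · rw [hcy]
                simp only [dist_self, sub_self, abs_zero, le_refl, true_and]
                have : h' y = γ := if_pos rfl
                rw [this]
                linarith
              · have hcF : c ∈ F' := (Set.mem_insert_iff.1 hc).resolve_left hcy
                have e1 : h' y = γ := if_pos rfl
                rw [e1, hval c hcF]
                have h1 := abs_le.1 (hmax c hcF)
                have h3 := key c hcF
                constructor
                · rw [abs_le]
                  exact ⟨by linarith, by linarith⟩
                · linarith
            · have hbF : b ∈ F' := (Set.mem_insert_iff.1 hb).resolve_left hby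
              by_cases hcy : c = y
              · rw [hcy]
                have e1 : h' y = γ := if_pos rfl
                rw [e1, hval b hbF]
                have h1 := abs_le.1 (hmax b hbF)
                have h3 := key b hbF
                have t5 : dist b y = dist y b := dist_comm _ _
                constructor
                · rw [abs_le]
                  exact ⟨by linarith, by linarith⟩
                · linarith
              · have hcF : c ∈ F' := (Set.mem_insert_iff.1 hc).resolve_left hcy
                rw [hval b hbF, hval c hcF]
                exact hk b (hF'K hbF) c (hF'K hcF))
        refine ⟨y'', fun b hb => ?_, ?_⟩
        · rw [hy'' b (Set.mem_insert_of_mem _ hb), hval b hb]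
        · have e := hy'' y (Set.mem_insert _ _)
          have e2 : h' y = γ := if_pos rfl
          rw [e, e2]
          exact hγle

end TBE

namespace TBE

variable {U : Type} [MetricSpace U]

lemma katetov_compact (hU : IsUrysohn U) (K : Set U) (hKc : IsCompact K) (h : U → ℝ)
    (h0 : ∀ b ∈ K, 0 ≤ h b)
    (hk : ∀ b ∈ K, ∀ c ∈ K, |h b - h c| ≤ dist b c ∧ dist b c ≤ h b + h c) :
    ∃ y : U, ∀ b ∈ K, dist y b = h b := by
  haveI : Nonempty U := urysohn_nonempty hU
  haveI : CompleteSpace U := hU.1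
  rcases K.eq_empty_or_nonempty with rfl | hKne
  · exact ⟨Classical.arbitrary U, by simp⟩
  have nets : ∀ n : ℕ, ∃ t, t ⊆ K ∧ Set.Finite t ∧ K ⊆ ⋃ y ∈ t, ball y ((1/2 : ℝ) ^ n) :=
    fun n => finite_approx_of_totallyBounded hKc.totallyBounded _ (by positivity)
  choose t htK htfin htcov using nets
  set F : ℕ → Set U := fun n => ⋃ k ∈ Finset.range (n + 1), t k with hF
  have hFfin : ∀ n, (F n).Finite := fun n =>
    Set.Finite.biUnion (Finset.range (n + 1)).finite_toSet (fun k _ => htfin k)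
  have hFK : ∀ n, F n ⊆ K := fun n =>
    Set.iUnion₂_subset fun k _ => htK k
  have hFmono : ∀ n, F n ⊆ F (n + 1) := by
    intro n x hx
    rw [hF] at hx ⊢
    obtain ⟨k, hk1, hk2⟩ := Set.mem_iUnion₂.1 hx
    exact Set.mem_iUnion₂.2 ⟨k, Finset.mem_range.2 (lt_trans (Finset.mem_range.1 hk1)
      (Nat.lt_succ_self _)), hk2⟩
  have hFnet : ∀ n, ∀ b ∈ K, ∃ c ∈ F n, dist b c ≤ (1/2 : ℝ) ^ n := by
    intro n b hb
    obtain ⟨c, hc, hbc⟩ := Set.mem_iUnion₂.1 (htcov n hb)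
    exact ⟨c, Set.mem_iUnion₂.2 ⟨n, Finset.self_mem_range_succ n, hc⟩, le_of_lt hbc⟩
  obtain ⟨u, hu, hQ⟩ := exists_seq_rec (fun n y => ∀ b ∈ F n, dist y b = h b)
    (fun n x y => dist y x ≤ 2 * (1/2 : ℝ) ^ n)
    (katetov_finite hU (F 0) (hFfin 0) h (fun b hb => h0 b (hFK 0 hb))
      (fun b hb c hc => hk b (hFK 0 hb) c (hFK 0 hc)))
    (fun n y hy => katetov_step hU K h h0 hk (F n) (F (n+1)) (hFfin (n+1)) (hFK n)
      (hFK (n+1)) ((1/2 : ℝ) ^ n) (by positivity)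
      (fun b hb => hFnet n b (hFK (n+1) hb)) y hy)
  have hcauchy : CauchySeq u := by
    apply cauchySeq_of_le_geometric (1/2 : ℝ) 2 (by norm_num)
    intro n
    rw [dist_comm]
    exact hQ n
  obtain ⟨y, hy⟩ := cauchySeq_tendsto_of_complete hcauchy
  refine ⟨y, fun b hb => ?_⟩
  have hbound : ∀ n, |dist (u n) b - h b| ≤ 2 * (1/2 : ℝ) ^ n := by
    intro n
    obtain ⟨c, hc, hbc⟩ := hFnet n b hb
    have e1 : dist (u n) c = h c := hu n c hc
    have t1 : |dist (u n) b - dist (u n) c| ≤ dist b c := by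
      have := abs_dist_sub_le b c (u n)
      rw [dist_comm b (u n), dist_comm c (u n)] at this
      exact this
    have t2 : |h c - h b| ≤ dist c b := (hk c (hFK n hc) b hb).1
    have t3 := abs_sub_le (dist (u n) b) (dist (u n) c) (h b)
    rw [e1] at t3
    have t4 : dist c b = dist b c := dist_comm _ _
    have h1 := abs_le.1 t1
    have h2 := abs_le.1 t2
    rw [abs_le]
    constructor <;> [skip; skip] <;>
    · have := abs_le.1 t3
      linarith [this.1, this.2, h1.1, h1.2, h2.1, h2.2]
  have hlim : Filter.Tendsto (fun n => |dist (u n) b - h b|) Filter.atTop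
      (nhds |dist y b - h b|) :=
    (((hy.dist tendsto_const_nhds)).sub tendsto_const_nhds).abs
  have hlim2 : Filter.Tendsto (fun n : ℕ => 2 * (1/2 : ℝ) ^ n) Filter.atTop (nhds 0) := by
    have := tendsto_pow_atTop_nhds_zero_of_lt_one (by norm_num : (0:ℝ) ≤ 1/2) (by norm_num)
    simpa using this.const_mul 2
  have : |dist y b - h b| ≤ 0 :=
    le_of_tendsto_of_tendsto' hlim hlim2 hbound
  have := abs_eq_zero.1 (le_antisymm this (abs_nonneg _))
  linarith [sub_eq_zero.1 this]

end TBE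

namespace TBE

variable {U : Type} [MetricSpace U]

lemma window_step (hU : IsUrysohn U) (γi δ : ℝ → ℝ)
    (hδnn : ∀ t, 0 ≤ t → 0 ≤ δ t)
    (hδmono : ∀ s t, 0 ≤ s → s ≤ t → δ s ≤ δ t)
    (hδsub : ∀ s t, 0 ≤ s → 0 ≤ t → δ (s + t) ≤ δ s + δ t)
    (hγimono : ∀ s t, 0 ≤ s → s ≤ t → γi s ≤ γi t)
    (hcomp : ∀ s t, 0 ≤ s → 0 ≤ t → γi (s + t) ≤ γi s + δ t)
    (P : Set (U × U))
    (hW : ∀ p ∈ P, ∀ q ∈ P,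
      γi (dist p.1 q.1) ≤ dist p.2 q.2 ∧ dist p.2 q.2 ≤ δ (dist p.1 q.1))
    (hcpt : IsCompact (closure (Prod.snd '' P)))
    (x : U) :
    ∃ y : U, ∀ p ∈ P,
      γi (dist x p.1) ≤ dist y p.2 ∧ dist y p.2 ≤ δ (dist x p.1) := by
  haveI : Nonempty U := urysohn_nonempty hU
  rcases P.eq_empty_or_nonempty with rfl | hPne
  · exact ⟨Classical.arbitrary U, by simp⟩
  set S : U → Set ℝ := fun b => (fun p : U × U => δ (dist x p.1) + dist p.2 b) '' P with hS
  have hSne : ∀ b, (S b).Nonempty := fun b => hPne.image _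
  have hSbdd : ∀ b, BddBelow (S b) := by
    rintro b
    refine ⟨0, ?_⟩
    rintro s ⟨p, hp, rfl⟩
    exact add_nonneg (hδnn _ dist_nonneg) dist_nonneg
  set h : U → ℝ := fun b => sInf (S b) with hh
  have hle : ∀ b, ∀ p ∈ P, h b ≤ δ (dist x p.1) + dist p.2 b :=
    fun b p hp => csInf_le (hSbdd b) ⟨p, hp, rfl⟩
  have hge : ∀ b (c : ℝ), (∀ p ∈ P, c ≤ δ (dist x p.1) + dist p.2 b) → c ≤ h b := by
    intro b c hc
    apply le_csInf (hSne b)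
    rintro s ⟨p, hp, rfl⟩
    exact hc p hp
  have h0 : ∀ b, 0 ≤ h b := fun b =>
    hge b 0 (fun p hp => add_nonneg (hδnn _ dist_nonneg) dist_nonneg)
  have hLip : ∀ b c : U, h b ≤ h c + dist b c := by
    intro b c
    have : h b - dist b c ≤ h c := by
      apply hge
      intro p hp
      have := hle b p hp
      have htri := dist_triangle p.2 c b
      have hcb : dist c b = dist b c := dist_comm _ _
      linarith [dist_triangle p.2 b c]
    linarith
  have hKat : ∀ b c : U, dist b c ≤ h b + h c := by
    intro b c
    have : dist b c - h c ≤ h b := by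
      apply hge
      intro p hp
      have : dist b c - (δ (dist x p.1) + dist p.2 b) ≤ h c := by
        apply hge
        intro q hq
        have w := (hW p hp q hq).2
        have htri1 := dist_triangle p.1 x q.1
        have hsum : δ (dist p.1 q.1) ≤ δ (dist p.1 x) + δ (dist x q.1) :=
          le_trans (hδmono _ _ dist_nonneg htri1)
            (hδsub _ _ dist_nonneg dist_nonneg)
        have htri2 := dist_triangle b p.2 q.2
        have htri3 := dist_triangle (b : U) q.2 c
        have e1 : dist p.1 x = dist x p.1 := dist_comm _ _
        have e2 : dist b p.2 = dist p.2 b := dist_comm _ _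
        have e3 : dist q.2 c = dist c q.2 := dist_comm _ _
        have htri4 := dist_triangle b q.2 c
        have e1' : δ (dist p.1 x) = δ (dist x p.1) := by rw [e1]
        linarith
      linarith
    linarith
  obtain ⟨y, hy⟩ := katetov_compact hU (closure (Prod.snd '' P)) hcpt h
    (fun b _ => h0 b)
    (by
      intro b _ c _
      constructor
      · rw [abs_le]
        constructor
        · have e := dist_comm c b
          linarith [hLip c b]
        · linarith [hLip b c]
      · exact hKat b c)
  refine ⟨y, fun p hp => ?_⟩
  have hmem : p.2 ∈ closure (Prod.snd '' P) := subset_closure ⟨p, hp, rfl⟩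
  have heq : dist y p.2 = h p.2 := hy p.2 hmem
  constructor
  · rw [heq]
    apply hge
    intro q hq
    have w := (hW q hq p hp).1
    have htri : dist x p.1 ≤ dist q.1 p.1 + dist x q.1 := by
      have h1 := dist_triangle x q.1 p.1
      have h2 := dist_comm q.1 p.1
      linarith
    have := hcomp (dist q.1 p.1) (dist x q.1) dist_nonneg dist_nonneg
    have hmono := hγimono _ _ dist_nonneg htri
    have e : dist q.2 p.2 = dist p.2 q.2 := dist_comm _ _
    linarith
  · rw [heq]
    have := hle p.2 p hp
    simpa [dist_self] using this

end TBE

/-- Extension theorem for `(β,α)`-bicontinuous bijections between totally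
bounded subsets of the Urysohn space (Theorem 3.4 of the paper). -/
theorem totally_bounded_bicontinuous_extension (U : Type) [MetricSpace U]
    (hU : IsUrysohn U)
    (α β αi βi : ℝ → ℝ)
    (hα : IsModulus α) (hβ : IsModulus β)
    (hαi : IsMCInverse α αi) (hβi : IsMCInverse β βi)
    (hcompat₁ : ∀ s t : ℝ, 0 ≤ s → 0 ≤ t → αi (s + t) ≤ αi s + β t)
    (hcompat₂ : ∀ s t : ℝ, 0 ≤ s → 0 ≤ t → βi (s + t) ≤ βi s + α t)
    (X Y : Set U) (hX : TotallyBounded X) (hY : TotallyBounded Y)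
    (f : U → U) (hf : BijOn f X Y)
    (hbc : ∀ u ∈ X, ∀ v ∈ X,
      αi (dist u v) ≤ dist (f u) (f v) ∧ dist (f u) (f v) ≤ β (dist u v)) :
    ∃ F : U → U, Function.Bijective F ∧ (∀ a ∈ X, F a = f a) ∧
      ∀ u v : U, αi (dist u v) ≤ dist (F u) (F v) ∧ dist (F u) (F v) ≤ β (dist u v) := by
  classical
  haveI hcomplete : CompleteSpace U := hU.1
  haveI hsep : TopologicalSpace.SeparableSpace U := hU.2.1
  haveI hne : Nonempty U := TBE.urysohn_nonempty hU
  have hhalf0 : (0:ℝ) < 1/2 := by norm_num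
  have hhalf1 : (1:ℝ)/2 < 1 := by norm_num
  have hpowpos : ∀ n : ℕ, (0:ℝ) < (1/2) ^ n := fun n => by positivity
  -- dense sequence in U
  obtain ⟨e, he⟩ := TopologicalSpace.exists_dense_seq U
  -- countable dense subset of X
  have hDex : ∀ n : ℕ, ∃ t, t ⊆ X ∧ t.Finite ∧ X ⊆ ⋃ y ∈ t, Metric.ball y ((1/2 : ℝ) ^ n) :=
    fun n => finite_approx_of_totallyBounded hX _ (hpowpos n)
  choose tX htX1 htX2 htX3 using hDex
  set D : Set U := ⋃ n, tX n with hD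
  have hDX : D ⊆ X := Set.iUnion_subset htX1
  have hDdense : ∀ x ∈ X, ∀ ε : ℝ, 0 < ε → ∃ d ∈ D, dist x d < ε := by
    intro x hx ε hε
    obtain ⟨n, hn⟩ := exists_pow_lt_of_lt_one hε hhalf1
    obtain ⟨d, hd, hxd⟩ := Set.mem_iUnion₂.1 (htX3 n hx)
    exact ⟨d, Set.mem_iUnion.2 ⟨n, hd⟩, lt_trans (Metric.mem_ball.1 hxd) hn⟩
  set P0 : Set (U × U) := (fun a => (a, f a)) '' D with hP0
  -- compactness of closures
  have hcY : IsCompact (closure Y) :=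
    TotallyBounded.isCompact_of_isClosed hY.closure isClosed_closure
  have hcX : IsCompact (closure X) :=
    TotallyBounded.isCompact_of_isClosed hX.closure isClosed_closure
  have compact_side : ∀ (Z A E : Set U), IsCompact Z → E.Finite → A ⊆ Z ∪ E →
      IsCompact (closure A) := by
    intro Z A E hZ hE hsub
    have hclosed : IsClosed (Z ∪ E) := hZ.isClosed.union hE.isClosed
    exact (hZ.union hE.isCompact).of_isClosed_subset isClosed_closure
      (closure_minimal (hsub.trans (le_refl _)) hclosed)
  -- the invariant
  set Wp : U × U → U × U → Prop := fun p q =>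
    αi (dist p.1 q.1) ≤ dist p.2 q.2 ∧ dist p.2 q.2 ≤ β (dist p.1 q.1) with hWpdef
  set Inv : Set (U × U) → Prop := fun P =>
    (∀ p ∈ P, ∀ q ∈ P, Wp p q) ∧ ∃ E : Set (U × U), E.Finite ∧ P = P0 ∪ E with hInvdef
  have hWself : ∀ x y : U, Wp (x, y) (x, y) := by
    intro x y
    constructor
    · simp only [dist_self]
      rw [TBE.inv_zero hα hαi]
    · simp only [dist_self]
      rw [hβ.1]
  have hWsymm : ∀ p q : U × U, Wp p q → Wp q p := by
    intro p q hpq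
    obtain ⟨h1, h2⟩ := hpq
    constructor
    · rw [dist_comm q.1 p.1, dist_comm q.2 p.2]
      exact h1
    · rw [dist_comm q.1 p.1, dist_comm q.2 p.2]
      exact h2
  -- forward step
  have stepF : ∀ P : Set (U × U), Inv P → ∀ x : U, ∃ y : U, Inv (insert (x, y) P) := by
    intro P hP x
    obtain ⟨hPW, E, hE, hPE⟩ := hP
    have hsub : Prod.snd '' P ⊆ closure Y ∪ Prod.snd '' E := by
      rintro _ ⟨p, hp, rfl⟩
      rw [hPE] at hp
      rcases hp with hp | hp
      · obtain ⟨a, ha, rfl⟩ := hp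
        exact Or.inl (subset_closure (hf.mapsTo (hDX ha)))
      · exact Or.inr ⟨p, hp, rfl⟩
    have hcpt := compact_side (closure Y) (Prod.snd '' P) (Prod.snd '' E) hcY
      (hE.image _) hsub
    obtain ⟨y, hy⟩ := TBE.window_step hU αi β
      (fun t ht => TBE.mod_nonneg hβ ht)
      (fun s t hs hst => TBE.mod_mono hβ hs hst)
      (fun s t hs ht => TBE.mod_subadd hβ hs ht)
      (fun s t hs hst => TBE.inv_mono hα hαi hs hst)
      hcompat₁ P hPW hcpt x
    refine ⟨y, ?_, insert (x, y) E, hE.insert _, by rw [hPE, Set.union_insert]⟩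
    intro p hp q hq
    rcases Set.mem_insert_iff.1 hp with rfl | hp <;>
      rcases Set.mem_insert_iff.1 hq with rfl | hq
    · exact hWself x y
    · exact hy q hq
    · exact hWsymm _ _ (hy p hp)
    · exact hPW p hp q hq
  -- backward step
  have stepB : ∀ P : Set (U × U), Inv P → ∀ v : U, ∃ a : U, Inv (insert (a, v) P) := by
    intro P hP v
    obtain ⟨hPW, E, hE, hPE⟩ := hP
    set Ps : Set (U × U) := Prod.swap '' P with hPs
    have hsndPs : Prod.snd '' Ps = Prod.fst '' P := by
      rw [hPs, Set.image_image]
      rfl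
    have hsub : Prod.fst '' P ⊆ closure X ∪ Prod.fst '' E := by
      rintro _ ⟨p, hp, rfl⟩
      rw [hPE] at hp
      rcases hp with hp | hp
      · obtain ⟨a, ha, rfl⟩ := hp
        exact Or.inl (subset_closure (hDX ha))
      · exact Or.inr ⟨p, hp, rfl⟩
    have hcpt : IsCompact (closure (Prod.snd '' Ps)) := by
      rw [hsndPs]
      exact compact_side (closure X) (Prod.fst '' P) (Prod.fst '' E) hcX (hE.image _) hsub
    have hWs : ∀ p ∈ Ps, ∀ q ∈ Ps,
        βi (dist p.1 q.1) ≤ dist p.2 q.2 ∧ dist p.2 q.2 ≤ α (dist p.1 q.1) := by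
      rintro _ ⟨p, hp, rfl⟩ _ ⟨q, hq, rfl⟩
      have w := hPW p hp q hq
      exact ⟨(TBE.inv_le_iff hβ hβi dist_nonneg dist_nonneg).2 w.2,
        (TBE.inv_le_iff hα hαi dist_nonneg dist_nonneg).1 w.1⟩
    obtain ⟨a, ha⟩ := TBE.window_step hU βi α
      (fun t ht => TBE.mod_nonneg hα ht)
      (fun s t hs hst => TBE.mod_mono hα hs hst)
      (fun s t hs ht => TBE.mod_subadd hα hs ht)
      (fun s t hs hst => TBE.inv_mono hβ hβi hs hst)
      hcompat₂ Ps hWs hcpt v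
    have key : ∀ q ∈ P, Wp (a, v) q := by
      intro q hq
      have := ha q.swap ⟨q, hq, rfl⟩
      simp only [Prod.fst_swap, Prod.snd_swap] at this
      constructor
      · exact (TBE.inv_le_iff hα hαi dist_nonneg dist_nonneg).2 this.2
      · exact (TBE.inv_le_iff hβ hβi dist_nonneg dist_nonneg).1 this.1
    refine ⟨a, ?_, insert (a, v) E, hE.insert _, by rw [hPE, Set.union_insert]⟩
    intro p hp q hq
    rcases Set.mem_insert_iff.1 hp with rfl | hp <;>
      rcases Set.mem_insert_iff.1 hq with rfl | hq
    · exact hWself a v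
    · exact key q hq
    · exact hWsymm _ _ (key p hp)
    · exact hPW p hp q hq
  -- build the tower
  have hInvP0 : Inv P0 := by
    constructor
    · rintro _ ⟨a, ha, rfl⟩ _ ⟨a', ha', rfl⟩
      exact hbc a (hDX ha) a' (hDX ha')
    · exact ⟨∅, Set.finite_empty, (Set.union_empty _).symm⟩
  obtain ⟨u, hu, humono⟩ := TBE.exists_seq_rec
    (fun n P => Inv P ∧ ∀ j < n, (∃ b, (e j, b) ∈ P) ∧ ∃ a, (a, e j) ∈ P)
    (fun _ P P' => P ⊆ P')
    ⟨P0, hInvP0, fun j hj => absurd hj (Nat.not_lt_zero j)⟩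
    (by
      intro n P hP
      obtain ⟨y, hy⟩ := stepF P hP.1 (e n)
      obtain ⟨a, ha⟩ := stepB _ hy (e n)
      refine ⟨insert (a, e n) (insert (e n, y) P), ⟨ha, ?_⟩, ?_⟩
      · intro j hj
        rcases Nat.lt_succ_iff_lt_or_eq.1 hj with hj | rfl
        · obtain ⟨h1, h2⟩ := hP.2 j hj
          exact ⟨⟨h1.choose, Set.mem_insert_of_mem _ (Set.mem_insert_of_mem _ h1.choose_spec)⟩,
            ⟨h2.choose, Set.mem_insert_of_mem _ (Set.mem_insert_of_mem _ h2.choose_spec)⟩⟩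
        · exact ⟨⟨y, Set.mem_insert_of_mem _ (Set.mem_insert _ _)⟩, ⟨a, Set.mem_insert _ _⟩⟩
      · intro p hp
        exact Set.mem_insert_of_mem _ (Set.mem_insert_of_mem _ hp))
  have humono' : ∀ m n : ℕ, m ≤ n → u m ⊆ u n := by
    intro m n hmn
    induction n, hmn using Nat.le_induction with
    | base => exact le_refl _
    | succ n hmn ih => exact ih.trans (humono n)
  set Pinf : Set (U × U) := ⋃ n, u n with hPinf
  have hWinf : ∀ p ∈ Pinf, ∀ q ∈ Pinf, Wp p q := by
    intro p hp q hq
    obtain ⟨m, hm⟩ := Set.mem_iUnion.1 hp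
    obtain ⟨n, hn⟩ := Set.mem_iUnion.1 hq
    exact (hu (max m n)).1.1 p (humono' m _ (le_max_left _ _) hm) q
      (humono' n _ (le_max_right _ _) hn)
  have hP0inf : P0 ⊆ Pinf := by
    obtain ⟨E, hE, hPE⟩ := (hu 0).1.2
    intro p hp
    exact Set.mem_iUnion.2 ⟨0, hPE ▸ Or.inl hp⟩
  have hcov : ∀ j : ℕ, (∃ b, (e j, b) ∈ Pinf) ∧ ∃ a, (a, e j) ∈ Pinf := by
    intro j
    obtain ⟨h1, h2⟩ := (hu (j + 1)).2 j (Nat.lt_succ_self j)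
    exact ⟨⟨h1.choose, Set.mem_iUnion.2 ⟨j + 1, h1.choose_spec⟩⟩,
      ⟨h2.choose, Set.mem_iUnion.2 ⟨j + 1, h2.choose_spec⟩⟩⟩
  have fstapprox : ∀ (w : U) (ε : ℝ), 0 < ε → ∃ p ∈ Pinf, dist p.1 w < ε := by
    intro w ε hε
    obtain ⟨j, hj⟩ := he.exists_dist_lt w hε
    obtain ⟨b, hb⟩ := (hcov j).1
    exact ⟨(e j, b), hb, by rw [dist_comm]; exact hj⟩
  have sndapprox : ∀ (w : U) (ε : ℝ), 0 < ε → ∃ p ∈ Pinf, dist p.2 w < ε := by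
    intro w ε hε
    obtain ⟨j, hj⟩ := he.exists_dist_lt w hε
    obtain ⟨a, haj⟩ := (hcov j).2
    exact ⟨(a, e j), haj, by rw [dist_comm]; exact hj⟩
  -- the limit map
  have keyF : ∀ w : U, ∃ y : U, ∀ p ∈ Pinf,
      αi (dist w p.1) ≤ dist y p.2 ∧ dist y p.2 ≤ β (dist w p.1) := by
    intro w
    have hseq : ∀ n : ℕ, ∃ p ∈ Pinf, dist p.1 w < (1/2 : ℝ) ^ n :=
      fun n => fstapprox w _ (hpowpos n)
    choose p hpmem hpd using hseq
    have hcauchy : CauchySeq (fun n => (p n).2) := by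
      rw [Metric.cauchySeq_iff]
      intro ε hε
      obtain ⟨δ, hδpos, hδsm⟩ := TBE.mod_small hβ hε
      obtain ⟨N, hN⟩ := exists_pow_lt_of_lt_one (half_pos hδpos) hhalf1
      refine ⟨N, fun m hm n hn => ?_⟩
      have hd : dist (p m).1 (p n).1 < δ := by
        have t1 := dist_triangle (p m).1 w (p n).1
        have t2 : dist w (p n).1 = dist (p n).1 w := dist_comm _ _
        have t3 : (1/2 : ℝ) ^ m ≤ (1/2) ^ N := pow_le_pow_of_le_one (le_of_lt hhalf0)
          (le_of_lt hhalf1) hm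
        have t4 : (1/2 : ℝ) ^ n ≤ (1/2) ^ N := pow_le_pow_of_le_one (le_of_lt hhalf0)
          (le_of_lt hhalf1) hn
        have := hpd m
        have := hpd n
        linarith [hpd m, hpd n]
      exact lt_of_le_of_lt (hWinf (p m) (hpmem m) (p n) (hpmem n)).2
        (hδsm _ dist_nonneg hd)
    obtain ⟨y, hy⟩ := cauchySeq_tendsto_of_complete hcauchy
    rw [Metric.tendsto_atTop] at hy
    refine ⟨y, fun q hq => ⟨?_, ?_⟩⟩
    · -- lower bound
      apply le_of_forall_pos_le_add
      intro ε hε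
      obtain ⟨δ, hδpos, hδsm⟩ := TBE.mod_small hβ (half_pos hε)
      obtain ⟨N1, hN1⟩ := exists_pow_lt_of_lt_one hδpos hhalf1
      obtain ⟨N2, hN2⟩ := hy (ε/2) (half_pos hε)
      set n := max N1 N2
      have hn1 : (1/2 : ℝ) ^ n < δ :=
        lt_of_le_of_lt (pow_le_pow_of_le_one (le_of_lt hhalf0) (le_of_lt hhalf1)
          (le_max_left _ _)) hN1
      have hn2 : dist ((p n).2) y < ε/2 := hN2 n (le_max_right _ _)
      have hβsmall : β ((1/2 : ℝ) ^ n) < ε/2 := hδsm _ (le_of_lt (hpowpos n)) hn1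
      have hmono : αi (dist w q.1) ≤ αi (dist (p n).1 q.1 + (1/2) ^ n) := by
        apply TBE.inv_mono hα hαi dist_nonneg
        have t1 := dist_triangle w (p n).1 q.1
        have t2 : dist w (p n).1 = dist (p n).1 w := dist_comm _ _
        linarith [hpd n]
      have hcomp := hcompat₁ (dist (p n).1 q.1) ((1/2) ^ n) dist_nonneg
        (le_of_lt (hpowpos n))
      have hlow := (hWinf (p n) (hpmem n) q hq).1
      have htri := dist_triangle ((p n).2) y q.2
      have t5 : dist ((p n).2) y = dist ((p n).2) y := rfl
      linarith
    · -- upper bound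
      apply le_of_forall_pos_le_add
      intro ε hε
      obtain ⟨δ, hδpos, hδsm⟩ := TBE.mod_small hβ (half_pos hε)
      obtain ⟨N1, hN1⟩ := exists_pow_lt_of_lt_one hδpos hhalf1
      obtain ⟨N2, hN2⟩ := hy (ε/2) (half_pos hε)
      set n := max N1 N2
      have hn1 : (1/2 : ℝ) ^ n < δ :=
        lt_of_le_of_lt (pow_le_pow_of_le_one (le_of_lt hhalf0) (le_of_lt hhalf1)
          (le_max_left _ _)) hN1
      have hn2 : dist ((p n).2) y < ε/2 := hN2 n (le_max_right _ _)
      have hβsmall : β ((1/2 : ℝ) ^ n) < ε/2 := hδsm _ (le_of_lt (hpowpos n)) hn1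
      have hup := (hWinf (p n) (hpmem n) q hq).2
      have hmono : β (dist (p n).1 q.1) ≤ β (dist w q.1 + (1/2) ^ n) := by
        apply TBE.mod_mono hβ dist_nonneg
        have t1 := dist_triangle (p n).1 w q.1
        have t2 : dist (p n).1 w < (1/2) ^ n := hpd n
        have t3 := dist_triangle (p n).1 w q.1
        linarith [dist_triangle (p n).1 w q.1]
      have hsub := TBE.mod_subadd hβ (dist_nonneg (x := w) (y := q.1))
        (le_of_lt (hpowpos n))
      have htri := dist_triangle y ((p n).2) q.2
      have t5 : dist y ((p n).2) = dist ((p n).2) y := dist_comm _ _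
      linarith
  set F : U → U := fun w => Classical.choose (keyF w) with hF
  have hFspec : ∀ w : U, ∀ p ∈ Pinf,
      αi (dist w p.1) ≤ dist (F w) p.2 ∧ dist (F w) p.2 ≤ β (dist w p.1) :=
    fun w => Classical.choose_spec (keyF w)
  -- windows for F
  have hwin : ∀ u' v : U, αi (dist u' v) ≤ dist (F u') (F v) ∧
      dist (F u') (F v) ≤ β (dist u' v) := by
    intro u' v
    have hseq : ∀ n : ℕ, ∃ p ∈ Pinf, dist p.1 u' < (1/2 : ℝ) ^ n :=
      fun n => fstapprox u' _ (hpowpos n)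
    choose p hpmem hpd using hseq
    constructor
    · apply le_of_forall_pos_le_add
      intro ε hε
      obtain ⟨δ, hδpos, hδsm⟩ := TBE.mod_small hβ (half_pos hε)
      obtain ⟨N, hN⟩ := exists_pow_lt_of_lt_one hδpos hhalf1
      have harg : dist u' (p N).1 < δ := by
        rw [dist_comm]
        exact lt_trans (hpd N) hN
      have h1 : dist (F u') ((p N).2) ≤ β (dist u' (p N).1) :=
        (hFspec u' (p N) (hpmem N)).2
      have h1' : β (dist u' (p N).1) < ε/2 := hδsm _ dist_nonneg harg
      have h2 : αi (dist v (p N).1) ≤ dist (F v) ((p N).2) :=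
        (hFspec v (p N) (hpmem N)).1
      have hβsmall : β ((1/2 : ℝ) ^ N) < ε/2 := hδsm _ (le_of_lt (hpowpos N))
        (lt_of_le_of_lt (le_refl _) hN)
      have hmono : αi (dist u' v) ≤ αi (dist v (p N).1 + (1/2) ^ N) := by
        apply TBE.inv_mono hα hαi dist_nonneg
        have t1 := dist_triangle u' (p N).1 v
        have t2 : dist u' (p N).1 = dist (p N).1 u' := dist_comm _ _
        have t3 : dist (p N).1 v = dist v (p N).1 := dist_comm _ _
        have t4 : dist u' v = dist u' v := rfl
        linarith [hpd N]
      have hcomp := hcompat₁ (dist v (p N).1) ((1/2) ^ N) dist_nonneg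
        (le_of_lt (hpowpos N))
      have htri := dist_triangle (F v) (F u') ((p N).2)
      have t5 : dist (F v) (F u') = dist (F u') (F v) := dist_comm _ _
      linarith
    · apply le_of_forall_pos_le_add
      intro ε hε
      obtain ⟨δ, hδpos, hδsm⟩ := TBE.mod_small hβ (half_pos hε)
      obtain ⟨N, hN⟩ := exists_pow_lt_of_lt_one hδpos hhalf1
      have harg : dist u' (p N).1 < δ := by
        rw [dist_comm]
        exact lt_trans (hpd N) hN
      have h1 : dist (F u') ((p N).2) ≤ β (dist u' (p N).1) :=
        (hFspec u' (p N) (hpmem N)).2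
      have h1' : β (dist u' (p N).1) < ε/2 := hδsm _ dist_nonneg harg
      have h2 : dist (F v) ((p N).2) ≤ β (dist v (p N).1) :=
        (hFspec v (p N) (hpmem N)).2
      have hβsmall : β ((1/2 : ℝ) ^ N) < ε/2 := hδsm _ (le_of_lt (hpowpos N)) hN
      have hmono : β (dist v (p N).1) ≤ β (dist u' v + (1/2) ^ N) := by
        apply TBE.mod_mono hβ dist_nonneg
        have t1 := dist_triangle v u' (p N).1
        have t2 : dist v u' = dist u' v := dist_comm _ _
        have t6 : dist u' (p N).1 = dist (p N).1 u' := dist_comm _ _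
        linarith [hpd N]
      have hsub := TBE.mod_subadd hβ (dist_nonneg (x := u') (y := v))
        (le_of_lt (hpowpos N))
      have htri := dist_triangle (F u') ((p N).2) (F v)
      have t5 : dist ((p N).2) (F v) = dist (F v) ((p N).2) := dist_comm _ _
      linarith
  -- F agrees with f on X
  have hagree : ∀ a ∈ X, F a = f a := by
    intro a ha
    have hle : ∀ ε : ℝ, 0 < ε → dist (F a) (f a) ≤ 0 + ε := by
      intro ε hε
      obtain ⟨δ, hδpos, hδsm⟩ := TBE.mod_small hβ (half_pos hε)
      obtain ⟨d, hd, had⟩ := hDdense a ha δ hδpos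
      have hpair : ((d : U), f d) ∈ Pinf := hP0inf ⟨d, hd, rfl⟩
      have h1 : dist (F a) (f d) ≤ β (dist a d) := (hFspec a _ hpair).2
      have h1' : β (dist a d) < ε/2 := hδsm _ dist_nonneg had
      have h2 : dist (f d) (f a) ≤ β (dist d a) := (hbc d (hDX hd) a ha).2
      have h2' : β (dist d a) < ε/2 := by
        rw [dist_comm]
        exact hδsm _ dist_nonneg had
      have htri := dist_triangle (F a) (f d) (f a)
      linarith
    have : dist (F a) (f a) ≤ 0 := le_of_forall_pos_le_add hle
    exact dist_le_zero.1 this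
  -- injectivity
  have hinj : Function.Injective F := by
    intro u' v huv
    have := (hwin u' v).1
    rw [huv, dist_self] at this
    exact dist_eq_zero.1 (TBE.inv_eq_zero hα hαi dist_nonneg this)
  -- surjectivity
  have hsurj : Function.Surjective F := by
    intro w
    have hseq : ∀ n : ℕ, ∃ p ∈ Pinf, dist p.2 w < (1/2 : ℝ) ^ n :=
      fun n => sndapprox w _ (hpowpos n)
    choose q hqmem hqd using hseq
    have hcauchy : CauchySeq (fun n => (q n).1) := by
      rw [Metric.cauchySeq_iff]
      intro ε hε
      obtain ⟨δ, hδpos, hδsm⟩ := TBE.mod_small hα hε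
      obtain ⟨N, hN⟩ := exists_pow_lt_of_lt_one (half_pos hδpos) hhalf1
      refine ⟨N, fun m hm n hn => ?_⟩
      have hd : dist (q m).2 (q n).2 < δ := by
        have t1 := dist_triangle (q m).2 w (q n).2
        have t2 : dist w (q n).2 = dist (q n).2 w := dist_comm _ _
        have t3 : (1/2 : ℝ) ^ m ≤ (1/2) ^ N := pow_le_pow_of_le_one (le_of_lt hhalf0)
          (le_of_lt hhalf1) hm
        have t4 : (1/2 : ℝ) ^ n ≤ (1/2) ^ N := pow_le_pow_of_le_one (le_of_lt hhalf0)
          (le_of_lt hhalf1) hn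
        linarith [hqd m, hqd n]
      have hlow := (hWinf (q m) (hqmem m) (q n) (hqmem n)).1
      have : dist (q m).1 (q n).1 ≤ α (dist (q m).2 (q n).2) :=
        (TBE.inv_le_iff hα hαi dist_nonneg dist_nonneg).1 hlow
      exact lt_of_le_of_lt this (hδsm _ dist_nonneg hd)
    obtain ⟨x, hx⟩ := cauchySeq_tendsto_of_complete hcauchy
    rw [Metric.tendsto_atTop] at hx
    refine ⟨x, ?_⟩
    have hle : ∀ ε : ℝ, 0 < ε → dist (F x) w ≤ 0 + ε := by
      intro ε hε
      obtain ⟨δ, hδpos, hδsm⟩ := TBE.mod_small hβ (half_pos hε)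
      obtain ⟨N1, hN1⟩ := hx δ hδpos
      obtain ⟨N2, hN2⟩ := exists_pow_lt_of_lt_one (half_pos hε) hhalf1
      set n := max N1 N2
      have h1 : dist (F x) ((q n).2) ≤ β (dist x (q n).1) := (hFspec x _ (hqmem n)).2
      have h2 : dist x (q n).1 < δ := by
        rw [dist_comm]
        exact hN1 n (le_max_left _ _)
      have h3 : β (dist x (q n).1) < ε/2 := hδsm _ dist_nonneg h2
      have h4 : dist ((q n).2) w < ε/2 := by
        have t : (1/2 : ℝ) ^ n ≤ (1/2) ^ N2 := pow_le_pow_of_le_one (le_of_lt hhalf0)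
          (le_of_lt hhalf1) (le_max_right _ _)
        linarith [hqd n]
      have htri := dist_triangle (F x) ((q n).2) w
      linarith
    have : dist (F x) w ≤ 0 := le_of_forall_pos_le_add hle
    exact dist_eq_zero.1 (le_antisymm this dist_nonneg)
  exact ⟨F, ⟨hinj, hsurj⟩, hagree, hwin⟩
end
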